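/- arXiv:2011.12944 — 10 statements merged into one kernel-verified Lean document; each statement's English description precedes it below -/
import Mathlib

section
/- For every $n$ and every $k$ with $2 \le k \le \sqrt{n/2}$, there exists a linear $k$-uniform hypergraph on at most $n$ vertices with at least $n^2/(4k^2)$ edges. -/
/-- For `2 ≤ k ≤ √(n/2)` there is a linear `k`-uniform hypergraph on at most `n`
vertices with at least `n^2 / (4 k^2)` edges. -/
theorem stmt_2 (n k : ℕ) (hk : 2 ≤ k) (hkn : 2 * k ^ 2 ≤ n) :
    ∃ m : ℕ, m ≤ n ∧ ∃ H : Finset (Finset (Fin m)),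
      (∀ e ∈ H, e.card = k) ∧
      (∀ e ∈ H, ∀ f ∈ H, e ≠ f → (e ∩ f).card ≤ 1) ∧
      n ^ 2 ≤ 4 * k ^ 2 * H.card := by
  have hk0 : 0 < k := by omega
  set q := n / (2 * k) with hqdef
  have hq : k ≤ q := by
    rw [hqdef, Nat.le_div_iff_mul_le (by omega)]
    nlinarith
  obtain ⟨p, hp, hqp, hp2q⟩ := Nat.exists_prime_lt_and_le_two_mul q (by omega)
  haveI : Fact p.Prime := ⟨hp⟩
  haveI : NeZero p := ⟨hp.pos.ne'⟩
  have hkp : k < p := lt_of_le_of_lt hq hqp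
  -- m = k * p ≤ n
  have hm : k * p ≤ n := by
    calc k * p ≤ k * (2 * q) := Nat.mul_le_mul_left _ hp2q
    _ = q * (2 * k) := by ring
    _ ≤ n := Nat.div_mul_le_self n (2 * k)
  have hn2kp : n < 2 * k * p := by
    calc n < p * (2 * k) := (Nat.div_lt_iff_lt_mul (by omega : 0 < 2 * k)).mp hqp
    _ = 2 * k * p := by ring
  -- cast Fin k → ZMod p injective
  have hcast : ∀ a b : Fin k, ((a : ℕ) : ZMod p) = ((b : ℕ) : ZMod p) → a = b := by
    intro a b hab
    have h := congrArg ZMod.val hab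
    rw [ZMod.val_cast_of_lt (lt_trans a.isLt hkp),
      ZMod.val_cast_of_lt (lt_trans b.isLt hkp)] at h
    exact Fin.ext h
  -- the lines
  set L : ZMod p × ZMod p → Finset (Fin k × ZMod p) :=
    fun v => Finset.image (fun t : Fin k => (t, v.1 + (t : ℕ) * v.2)) Finset.univ with hL
  have hLinj : ∀ v : ZMod p × ZMod p, Function.Injective (fun t : Fin k => ((t : Fin k), v.1 + ((t : ℕ) : ZMod p) * v.2)) := by
    intro v a b hab
    exact (Prod.ext_iff.mp hab).1
  have hLcard : ∀ v : ZMod p × ZMod p, (L v).card = k := by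
    intro v
    rw [hL, Finset.card_image_of_injective _ (hLinj v), Finset.card_univ, Fintype.card_fin]
  have hLmem : ∀ (v : ZMod p × ZMod p) (x : Fin k × ZMod p), x ∈ L v ↔ x.2 = v.1 + (x.1 : ℕ) * v.2 := by
    intro v x
    simp only [hL, Finset.mem_image, Finset.mem_univ, true_and]
    constructor
    · rintro ⟨t, rfl⟩; rfl
    · intro h; exact ⟨x.1, by rw [← h]⟩
  -- injectivity of L
  have hLinj2 : Function.Injective L := by
    intro v w hvw
    set t0 : Fin k := ⟨0, by omega⟩ with ht0
    set t1 : Fin k := ⟨1, by omega⟩ with ht1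
    have h0 : (t0, v.1 + ((t0 : ℕ) : ZMod p) * v.2) ∈ L w := by
      rw [← hvw, hLmem]
    have h1 : (t1, v.1 + ((t1 : ℕ) : ZMod p) * v.2) ∈ L w := by
      rw [← hvw, hLmem]
    rw [hLmem] at h0 h1
    simp only [ht0, ht1] at h0 h1
    push_cast at h0 h1
    simp only [zero_mul, add_zero, one_mul] at h0 h1
    have hsnd : v.2 = w.2 := by
      have h2 := h1
      rw [h0] at h2
      exact add_left_cancel h2
    exact Prod.ext h0 hsnd
  -- linearity
  have hLlin : ∀ v w : ZMod p × ZMod p, v ≠ w → (L v ∩ L w).card ≤ 1 := by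
    intro v w hvw
    rw [Finset.card_le_one]
    intro a ha b hb
    simp only [Finset.mem_inter, hLmem] at ha hb
    have hab : (a.1 : ZMod p) * (v.2 - w.2) = (b.1 : ZMod p) * (v.2 - w.2) := by
      have e1 : v.1 + (a.1 : ℕ) * v.2 = w.1 + (a.1 : ℕ) * w.2 := by rw [← ha.1, ← ha.2]
      have e2 : v.1 + (b.1 : ℕ) * v.2 = w.1 + (b.1 : ℕ) * w.2 := by rw [← hb.1, ← hb.2]
      have : v.1 - w.1 = (a.1 : ℕ) * (w.2 - v.2) := by ring_nf; linear_combination e1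
      have h2 : v.1 - w.1 = (b.1 : ℕ) * (w.2 - v.2) := by ring_nf; linear_combination e2
      linear_combination this - h2
    by_cases hyy : v.2 = w.2
    · -- then v.1 ≠ w.1, no common point; contradiction from ha
      exfalso
      have : v.1 = w.1 := by
        have := ha.1.symm.trans ha.2
        rw [hyy] at this
        exact add_right_cancel this
      exact hvw (Prod.ext this hyy)
    · have hsub : v.2 - w.2 ≠ 0 := sub_ne_zero.mpr hyy
      have : ((a.1 : ℕ) : ZMod p) = ((b.1 : ℕ) : ZMod p) := mul_right_cancel₀ hsub hab
      have := hcast _ _ this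
      have hsnd : a.2 = b.2 := by rw [ha.1, hb.1, this]
      exact Prod.ext this hsnd
  -- transfer to Fin (k * p)
  have hcardV : Fintype.card (Fin k × ZMod p) = k * p := by
    rw [Fintype.card_prod, Fintype.card_fin, ZMod.card]
  let e : Fin k × ZMod p ≃ Fin (k * p) := Fintype.equivFinOfCardEq hcardV
  refine ⟨k * p, hm, Finset.image (fun v => (L v).map e.toEmbedding) Finset.univ, ?_, ?_, ?_⟩
  · intro s hs
    simp only [Finset.mem_image] at hs
    obtain ⟨v, _, rfl⟩ := hs
    rw [Finset.card_map, hLcard]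
  · intro s hs t ht hst
    simp only [Finset.mem_image] at hs ht
    obtain ⟨v, _, rfl⟩ := hs
    obtain ⟨w, _, rfl⟩ := ht
    rw [← Finset.map_inter, Finset.card_map]
    apply hLlin
    rintro rfl
    exact hst rfl
  · have hHcard : (Finset.image (fun v => (L v).map e.toEmbedding) (Finset.univ : Finset (ZMod p × ZMod p))).card = p ^ 2 := by
      rw [Finset.card_image_of_injective _ (fun v w h => hLinj2 (Finset.map_injective e.toEmbedding h)),
        Finset.card_univ, Fintype.card_prod, ZMod.card]
      ring
    rw [hHcard]
    nlinarith
end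

section
/- Any graph on $n$ vertices with at least $6sn$ edges, where $s \ge k \ge 1$, contains at least $\min\{s, \sqrt{sn}/k\}$ pairwise vertex-disjoint copies of the star $S_k$ with $k$ leaves. -/
open Finset

lemma sum_inter_comm {V : Type*} [Fintype V] [DecidableEq V] (G : SimpleGraph V)
    [DecidableRel G.Adj] (P Q : Finset V) :
    ∑ u ∈ P, (G.neighborFinset u ∩ Q).card = ∑ w ∈ Q, (G.neighborFinset w ∩ P).card := by
  have h : ∀ (u : V) (X : Finset V),
      (G.neighborFinset u ∩ X).card = ∑ w ∈ X, if G.Adj u w then 1 else 0 := by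
    intro u X
    rw [Finset.inter_comm, ← Finset.filter_mem_eq_inter, Finset.card_filter]
    exact Finset.sum_congr rfl fun w _ => by simp [SimpleGraph.mem_neighborFinset]
  simp_rw [h]
  rw [Finset.sum_comm]
  exact Finset.sum_congr rfl fun w _ => Finset.sum_congr rfl fun u _ => by
    simp only [G.adj_comm u w]

open Finset

lemma starA {V : Type*} [Fintype V] [DecidableEq V] (G : SimpleGraph V)
    [DecidableRel G.Adj] (k : ℕ) (hk : 1 ≤ k) :
    ∀ (t : ℕ) (F S : Finset V), S.card = t → Disjoint F S →
    (∀ v ∈ S, F.card + t * (k + 1) ≤ G.degree v + 1) →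
    ∃ (c : Fin t → V) (L : Fin t → Finset V),
      (∀ i, (L i).card = k ∧ c i ∉ L i ∧ ∀ v ∈ L i, G.Adj (c i) v) ∧
      (∀ i, Disjoint (insert (c i) (L i)) F) ∧
      (∀ i j, i ≠ j → Disjoint (insert (c i) (L i)) (insert (c j) (L j))) := by
  intro t
  induction t with
  | zero =>
    intro F S _ _ _
    exact ⟨Fin.elim0, Fin.elim0, fun i => i.elim0, fun i => i.elim0, fun i => i.elim0⟩
  | succ t ih =>
    intro F S hScard hFS hdeg
    obtain ⟨c₀, hc₀⟩ : S.Nonempty := Finset.card_pos.mp (by omega)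
    -- choose leaves
    have hdeg₀ := hdeg c₀ hc₀
    have hexp : (t + 1) * (k + 1) = t * (k + 1) + k + 1 := by ring
    have hcardFS : (F ∪ S.erase c₀).card ≤ F.card + t := by
      have := Finset.card_union_le F (S.erase c₀)
      have := Finset.card_erase_of_mem hc₀
      omega
    have hTcard : k ≤ (G.neighborFinset c₀ \ (F ∪ S.erase c₀)).card := by
      have h2 : G.degree c₀ ≤ (G.neighborFinset c₀ \ (F ∪ S.erase c₀)).card
          + (F ∪ S.erase c₀).card := Finset.card_le_card_sdiff_add_card
      have hkt : t + k + 1 ≤ (t + 1) * (k + 1) := by nlinarith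
      omega
    obtain ⟨L₀, hL₀T, hL₀card⟩ := Finset.exists_subset_card_eq hTcard
    have hL₀N : ∀ v ∈ L₀, v ∈ G.neighborFinset c₀ := fun v hv => (Finset.mem_sdiff.mp (hL₀T hv)).1
    have hL₀avoid : ∀ v ∈ L₀, v ∉ F ∪ S.erase c₀ := fun v hv => (Finset.mem_sdiff.mp (hL₀T hv)).2
    have hc₀L₀ : c₀ ∉ L₀ := fun h => G.notMem_neighborFinset_self c₀ (hL₀N c₀ h)
    set U₀ : Finset V := insert c₀ L₀ with hU₀
    have hc₀F : c₀ ∉ F := Finset.disjoint_right.mp hFS hc₀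
    have hU₀F : Disjoint U₀ F := by
      rw [Finset.disjoint_left]
      intro a ha haF
      rcases Finset.mem_insert.mp ha with rfl | ha
      · exact hc₀F haF
      · exact hL₀avoid a ha (Finset.mem_union_left _ haF)
    have hU₀card : U₀.card = k + 1 := by
      rw [hU₀, Finset.card_insert_of_notMem hc₀L₀, hL₀card]
    have hU₀S' : Disjoint U₀ (S.erase c₀) := by
      rw [Finset.disjoint_left]
      intro a ha haS
      rcases Finset.mem_insert.mp ha with rfl | ha
      · exact Finset.notMem_erase a S haS
      · exact hL₀avoid a ha (Finset.mem_union_right _ haS)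
    have hF'S' : Disjoint (F ∪ U₀) (S.erase c₀) :=
      Finset.disjoint_union_left.mpr ⟨hFS.mono_right (Finset.erase_subset _ _), hU₀S'⟩
    have hF'card : (F ∪ U₀).card = F.card + (k + 1) := by
      rw [Finset.card_union_of_disjoint hU₀F.symm, hU₀card]
    obtain ⟨c', L', hprop', hdisjF', hpair'⟩ := ih (F ∪ U₀) (S.erase c₀)
      (by rw [Finset.card_erase_of_mem hc₀, hScard]; omega) hF'S'
      (fun v hv => by
        have := hdeg v (Finset.mem_of_mem_erase hv)
        rw [hF'card]; omega)
    refine ⟨Fin.cons c₀ c', Fin.cons L₀ L', ?_, ?_, ?_⟩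
    · intro i
      refine Fin.cases ?_ ?_ i
      · simp only [Fin.cons_zero]
        exact ⟨hL₀card, hc₀L₀, fun v hv => (SimpleGraph.mem_neighborFinset G c₀ v).mp (hL₀N v hv)⟩
      · intro j
        simp only [Fin.cons_succ]
        exact hprop' j
    · intro i
      refine Fin.cases ?_ ?_ i
      · simpa only [Fin.cons_zero] using hU₀F
      · intro j
        simp only [Fin.cons_succ]
        exact (hdisjF' j).mono_right Finset.subset_union_left
    · intro i j hij
      have key : ∀ j' : Fin t, Disjoint U₀ (insert (c' j') (L' j')) :=
        fun j' => ((hdisjF' j').mono_right Finset.subset_union_right).symm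
      induction i using Fin.cases with
      | zero =>
        induction j using Fin.cases with
        | zero => exact absurd rfl hij
        | succ j' =>
          simp only [Fin.cons_zero, Fin.cons_succ]
          exact key j'
      | succ i' =>
        induction j using Fin.cases with
        | zero =>
          simp only [Fin.cons_zero, Fin.cons_succ]
          exact (key i').symm
        | succ j' =>
          simp only [Fin.cons_succ]
          exact hpair' i' j' (fun h => hij (by rw [h]))

lemma starB {V : Type*} [Fintype V] [DecidableEq V] (G : SimpleGraph V)
    [DecidableRel G.Adj] (k D : ℕ) (hk : 1 ≤ k) (hV : 1 ≤ Fintype.card V) :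
    ∀ (t : ℕ) (A : Finset V),
    (∀ v ∈ A, (G.neighborFinset v ∩ A).card ≤ D) →
    k * Fintype.card V + t * (2 * D * (k + 1)) ≤
      (∑ v ∈ A, (G.neighborFinset v ∩ A).card) + 2 * D * (k + 1) →
    ∃ (c : Fin t → V) (L : Fin t → Finset V),
      (∀ i, (L i).card = k ∧ c i ∉ L i ∧ ∀ v ∈ L i, G.Adj (c i) v) ∧
      (∀ i, insert (c i) (L i) ⊆ A) ∧
      (∀ i j, i ≠ j → Disjoint (insert (c i) (L i)) (insert (c j) (L j))) := by
  intro t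
  induction t with
  | zero =>
    intro A _ _
    exact ⟨Fin.elim0, Fin.elim0, fun i => i.elim0, fun i => i.elim0, fun i => i.elim0⟩
  | succ t ih =>
    intro A hA hW
    set n := Fintype.card V with hn
    set c : ℕ := 2 * D * (k + 1) with hc
    set W : ℕ := ∑ v ∈ A, (G.neighborFinset v ∩ A).card with hWdef
    have hknW : k * n ≤ W := by
      have h1 : c ≤ (t + 1) * c := Nat.le_mul_of_pos_left c (t.succ_pos)
      omega
    -- find a center of large local degree
    have hex : ∃ v ∈ A, k ≤ (G.neighborFinset v ∩ A).card := by
      by_contra hcon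
      push_neg at hcon
      have h1 : W ≤ A.card * (k - 1) := by
        calc W ≤ ∑ _v ∈ A, (k - 1) := Finset.sum_le_sum (fun v hv => by have := hcon v hv; omega)
          _ = A.card * (k - 1) := by rw [Finset.sum_const, smul_eq_mul]
      have h2 : A.card ≤ n := by rw [hn]; exact Finset.card_le_univ A
      have h3 : A.card * (k - 1) ≤ n * (k - 1) := Nat.mul_le_mul_right _ h2
      have h4 : n * (k - 1) + n = n * k := by
        have : k - 1 + 1 = k := by omega
        calc n * (k - 1) + n = n * (k - 1 + 1) := by ring
          _ = n * k := by rw [this]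
      have h5 : k * n = n * k := by ring
      omega
    obtain ⟨v₀, hv₀A, hv₀⟩ := hex
    obtain ⟨L₀, hL₀sub, hL₀card⟩ := Finset.exists_subset_card_eq hv₀
    have hL₀N : ∀ v ∈ L₀, v ∈ G.neighborFinset v₀ :=
      fun v hv => (Finset.mem_inter.mp (hL₀sub hv)).1
    have hv₀L₀ : v₀ ∉ L₀ := fun h => G.notMem_neighborFinset_self v₀ (hL₀N v₀ h)
    set U₀ : Finset V := insert v₀ L₀ with hU₀
    have hU₀A : U₀ ⊆ A := Finset.insert_subset hv₀A
      (hL₀sub.trans Finset.inter_subset_right)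
    have hU₀card : U₀.card = k + 1 := by
      rw [hU₀, Finset.card_insert_of_notMem hv₀L₀, hL₀card]
    set A' : Finset V := A \ U₀ with hA'
    have hA'A : A' ⊆ A := Finset.sdiff_subset
    have hA'deg : ∀ v ∈ A', (G.neighborFinset v ∩ A').card ≤ D := fun v hv =>
      le_trans (Finset.card_le_card (Finset.inter_subset_inter_left hA'A)) (hA v (hA'A hv))
    -- key: W ≤ W' + c
    have hkey : W ≤ (∑ v ∈ A', (G.neighborFinset v ∩ A').card) + c := by
      set W' : ℕ := ∑ v ∈ A', (G.neighborFinset v ∩ A').card with hW'def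
      have hsplit : ∑ v ∈ A', (G.neighborFinset v ∩ A).card
          + ∑ v ∈ U₀, (G.neighborFinset v ∩ A).card = W := Finset.sum_sdiff hU₀A
      have hUbound : ∑ v ∈ U₀, (G.neighborFinset v ∩ A).card ≤ (k + 1) * D := by
        calc ∑ v ∈ U₀, (G.neighborFinset v ∩ A).card ≤ ∑ _v ∈ U₀, D :=
              Finset.sum_le_sum (fun v hv => hA v (hU₀A hv))
          _ = (k + 1) * D := by rw [Finset.sum_const, smul_eq_mul, hU₀card]
      have hsplit2 : ∑ v ∈ A', (G.neighborFinset v ∩ A).card ≤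
          W' + ∑ v ∈ A', (G.neighborFinset v ∩ U₀).card := by
        rw [hW'def, ← Finset.sum_add_distrib]
        refine Finset.sum_le_sum (fun v _ => ?_)
        calc (G.neighborFinset v ∩ A).card
            ≤ ((G.neighborFinset v ∩ A') ∪ (G.neighborFinset v ∩ U₀)).card := by
              refine Finset.card_le_card (fun x hx => ?_)
              rcases Finset.mem_inter.mp hx with ⟨hx1, hx2⟩
              by_cases hxU : x ∈ U₀
              · exact Finset.mem_union_right _ (Finset.mem_inter.mpr ⟨hx1, hxU⟩)
              · exact Finset.mem_union_left _
                  (Finset.mem_inter.mpr ⟨hx1, Finset.mem_sdiff.mpr ⟨hx2, hxU⟩⟩)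
          _ ≤ _ := Finset.card_union_le _ _
      have hcross : ∑ v ∈ A', (G.neighborFinset v ∩ U₀).card ≤ (k + 1) * D := by
        rw [sum_inter_comm]
        calc ∑ w ∈ U₀, (G.neighborFinset w ∩ A').card
            ≤ ∑ w ∈ U₀, (G.neighborFinset w ∩ A).card :=
              Finset.sum_le_sum (fun w _ =>
                Finset.card_le_card (Finset.inter_subset_inter_left hA'A))
          _ ≤ (k + 1) * D := hUbound
      have hcc : (k + 1) * D + (k + 1) * D = c := by rw [hc]; ring
      omega
    obtain ⟨c', L', hprop', hsub', hpair'⟩ := ih A' hA'deg (by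
      have hcb : 2 * D * (k + 1) = c := rfl
      have hstep : (t + 1) * c = t * c + c := by ring
      omega)
    refine ⟨Fin.cons v₀ c', Fin.cons L₀ L', ?_, ?_, ?_⟩
    · intro i
      induction i using Fin.cases with
      | zero =>
        simp only [Fin.cons_zero]
        exact ⟨hL₀card, hv₀L₀, fun v hv => (SimpleGraph.mem_neighborFinset G v₀ v).mp (hL₀N v hv)⟩
      | succ j =>
        simp only [Fin.cons_succ]
        exact hprop' j
    · intro i
      induction i using Fin.cases with
      | zero => simpa only [Fin.cons_zero] using hU₀A
      | succ j =>
        simp only [Fin.cons_succ]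
        exact (hsub' j).trans hA'A
    · intro i j hij
      have key : ∀ j' : Fin t, Disjoint U₀ (insert (c' j') (L' j')) := fun j' =>
        (Finset.disjoint_of_subset_left (hsub' j') Finset.sdiff_disjoint).symm
      induction i using Fin.cases with
      | zero =>
        induction j using Fin.cases with
        | zero => exact absurd rfl hij
        | succ j' =>
          simp only [Fin.cons_zero, Fin.cons_succ]
          exact key j'
      | succ i' =>
        induction j using Fin.cases with
        | zero =>
          simp only [Fin.cons_zero, Fin.cons_succ]
          exact (key i').symm
        | succ j' =>
          simp only [Fin.cons_succ]
          exact hpair' i' j' (fun h => hij (by rw [h]))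



/-- Any graph on `n` vertices with at least `6*s*n` edges, where `s ≥ k ≥ 1`,
contains at least `min s (√(s*n)/k)` pairwise vertex-disjoint copies of the star
with `k` leaves. -/
theorem stmt_3 {V : Type*} [Fintype V] [DecidableEq V] (G : SimpleGraph V)
    [DecidableRel G.Adj] (n s k : ℕ) (hn : Fintype.card V = n)
    (hk : 1 ≤ k) (hsk : k ≤ s) (he : 6 * s * n ≤ G.edgeFinset.card) :
    ∃ (c : Fin (min s (Nat.sqrt (s * n) / k)) → V)
      (L : Fin (min s (Nat.sqrt (s * n) / k)) → Finset V),
      (∀ i, (L i).card = k ∧ c i ∉ L i ∧ ∀ v ∈ L i, G.Adj (c i) v) ∧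
      ∀ i j, i ≠ j → Disjoint (insert (c i) (L i)) (insert (c j) (L j)) := by
  set t := min s (Nat.sqrt (s * n) / k) with ht
  rcases Nat.eq_zero_or_pos t with h0 | hpos
  · exact ⟨fun i => absurd i.2 (by omega), fun i => absurd i.2 (by omega),
      fun i => absurd i.2 (by omega), fun i _ _ => absurd i.2 (by omega)⟩
  have hts : t ≤ s := min_le_left _ _
  have htk : t * k ≤ Nat.sqrt (s * n) :=
    (Nat.le_div_iff_mul_le (by omega)).mp (ht ▸ min_le_right s _)
  have hsq : (t * k) * (t * k) ≤ s * n :=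
    le_trans (Nat.mul_le_mul htk htk) (by nlinarith [Nat.sqrt_le' (s * n)])
  have hn1 : 1 ≤ n := by
    by_contra hcon
    have hn0 : n = 0 := by omega
    have h2 := hsq
    rw [hn0, Nat.mul_zero] at h2
    have h3 : t * k = 0 := by nlinarith
    rcases Nat.mul_eq_zero.mp h3 with h4 | h4 <;> omega
  have hs1 : 1 ≤ s := le_trans hk hsk
  set D := 2 * t * k with hD
  set p : V → Prop := fun v => G.degree v < D with hp
  set A : Finset V := Finset.univ.filter p with hA
  set H : Finset V := Finset.univ.filter (fun v => ¬ p v) with hHdef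
  by_cases hHc : t ≤ H.card
  · -- many high-degree vertices: use starA
    obtain ⟨S, hSsub, hScard⟩ := Finset.exists_subset_card_eq hHc
    obtain ⟨c, L, h1, _, h3⟩ := starA G k hk t ∅ S hScard (Finset.disjoint_left.mpr
      (fun a ha => absurd ha (Finset.notMem_empty a)))
      (fun v hv => by
        have hvH := hSsub hv
        rw [hHdef, Finset.mem_filter] at hvH
        have h2 : D ≤ G.degree v := by omega
        rw [hD] at h2
        have h4 : t ≤ t * k := Nat.le_mul_of_pos_right t (by omega)
        have h5 : t * (k + 1) = t * k + t := by ring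
        have h6 : 2 * t * k = t * k + t * k := by ring
        simp only [Finset.card_empty]
        omega)
    exact ⟨c, L, h1, h3⟩
  · -- few high-degree vertices: use starB
    push_neg at hHc
    have hAdeg : ∀ v ∈ A, (G.neighborFinset v ∩ A).card ≤ D := by
      intro v hv
      rw [hA, Finset.mem_filter] at hv
      have h2 : (G.neighborFinset v ∩ A).card ≤ G.degree v :=
        Finset.card_le_card Finset.inter_subset_left
      have := hv.2
      rw [hp] at this
      omega
    set W : ℕ := ∑ v ∈ A, (G.neighborFinset v ∩ A).card with hW
    have hsum : ∑ v ∈ A, G.degree v + ∑ v ∈ H, G.degree v = 2 * G.edgeFinset.card := by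
      have h0 := Finset.sum_filter_add_sum_filter_not Finset.univ p (fun v => G.degree v)
      rw [G.sum_degrees_eq_twice_card_edges] at h0
      exact h0
    have hdegn : ∀ v : V, G.degree v ≤ n := fun v => by
      rw [← hn]; exact Finset.card_le_univ _
    have hHsum : ∑ v ∈ H, G.degree v ≤ H.card * n := by
      calc ∑ v ∈ H, G.degree v ≤ ∑ _v ∈ H, n := Finset.sum_le_sum (fun v _ => hdegn v)
        _ = H.card * n := by rw [Finset.sum_const, smul_eq_mul]
    have hApt : ∀ v ∈ A, G.degree v ≤ (G.neighborFinset v ∩ A).card + H.card := by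
      intro v _
      have hsplitv : ((G.neighborFinset v).filter p).card
          + ((G.neighborFinset v).filter (fun x => ¬ p x)).card
          = (G.neighborFinset v).card :=
        Finset.card_filter_add_card_filter_not p
      have heq : G.neighborFinset v ∩ A = (G.neighborFinset v).filter p := by
        rw [hA]; ext x
        simp [Finset.mem_filter, Finset.mem_inter]
      have hsubH : (G.neighborFinset v).filter (fun x => ¬ p x) ⊆ H := by
        rw [hHdef]
        exact Finset.filter_subset_filter _ (Finset.subset_univ _)
      have h3 := Finset.card_le_card hsubH
      have h4 : G.degree v = (G.neighborFinset v).card := rfl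
      rw [heq]
      omega
    have hAsum : ∑ v ∈ A, G.degree v ≤ W + A.card * H.card := by
      calc ∑ v ∈ A, G.degree v
          ≤ ∑ v ∈ A, ((G.neighborFinset v ∩ A).card + H.card) := Finset.sum_le_sum hApt
        _ = W + A.card * H.card := by
            rw [Finset.sum_add_distrib, Finset.sum_const, smul_eq_mul, hW]
    have hAcard : A.card ≤ n := by rw [← hn]; exact Finset.card_le_univ _
    have hmain : k * n + t * (2 * D * (k + 1)) + 2 * D * (k + 1) ≤ W + 2 * D * (k + 1) + 2 * D * (k + 1) := by
      have e1 : t * (2 * (2 * t * k) * (k + 1)) = 4 * ((t * k) * (t * k)) + 4 * (t * (t * k)) := by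
        ring
      have e2 : t * (t * k) ≤ (t * k) * (t * k) :=
        Nat.mul_le_mul_right (t * k) (Nat.le_mul_of_pos_right t (by omega))
      have e3 : t * (2 * D * (k + 1)) ≤ 8 * (s * n) := by
        rw [hD]; omega
      have e4 : k * n ≤ s * n := Nat.mul_le_mul_right n hsk
      have e5 : n * (H.card + 1) ≤ n * s := Nat.mul_le_mul_left n (by omega)
      have e6 : n * (H.card + 1) = n * H.card + n := by ring
      have e7 : A.card * H.card ≤ n * H.card := Nat.mul_le_mul_right _ hAcard
      have e8 : 2 * (6 * s * n) ≤ 2 * G.edgeFinset.card := by omega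
      have e9 : 2 * (6 * s * n) = 12 * (s * n) := by ring
      have e10 : H.card * n = n * H.card := by ring
      have e11 : n * s = s * n := by ring
      omega
    obtain ⟨c, L, h1, _, h3⟩ := starB G k D hk (by omega) t A hAdeg (by rw [hn]; omega)
    exact ⟨c, L, h1, h3⟩
end

section
/- For $2 \le k \le n$, the complete bipartite-type $3$-graph consisting of all triples with exactly one vertex in a set $A$ of size $n-k$ and two vertices in a set $B$ of size $k$ contains no sunflower $\mathit{Sf}_3(1,k)$, and has $(n-k)\binom{k}{2}$ edges. -/
/-- For `2 ≤ k ≤ n`, the 3-graph of all triples with exactly one vertex in a set `A`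
of size `n-k` and two in a set `B` of size `k` has `(n-k) * C(k,2)` edges and
contains no sunflower `Sf₃(1,k)`. -/
theorem stmt_5 (n k : ℕ) (hk : 2 ≤ k) (hkn : k ≤ n)
    (A B : Finset (Fin n)) (hAB : Disjoint A B) (hA : A.card = n - k) (hB : B.card = k) :
    ((Finset.univ : Finset (Finset (Fin n))).filter
        (fun e => e.card = 3 ∧ (e ∩ A).card = 1 ∧ (e ∩ B).card = 2)).card
      = (n - k) * k.choose 2 ∧
    ¬ ∃ (v : Fin n) (P : Finset (Finset (Fin n))),
        P ⊆ (Finset.univ : Finset (Finset (Fin n))).filter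
          (fun e => e.card = 3 ∧ (e ∩ A).card = 1 ∧ (e ∩ B).card = 2) ∧
        P.card = k ∧ (∀ e ∈ P, v ∈ e) ∧
        (P : Set (Finset (Fin n))).Pairwise
          fun e f => Disjoint (e.erase v) (f.erase v) := by
  have hABu : A ∪ B = Finset.univ := by
    apply Finset.eq_univ_of_card
    rw [Finset.card_union_of_disjoint hAB, hA, hB, Nat.sub_add_cancel hkn]
    simp
  have hsplit : ∀ e : Finset (Fin n), (e ∩ A) ∪ (e ∩ B) = e := by
    intro e
    rw [← Finset.inter_union_distrib_left, hABu, Finset.inter_univ]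
  constructor
  · rw [Finset.card_bij' (fun e _ => ((e ∩ A), (e ∩ B)))
      (fun p _ => p.1 ∪ p.2)
      (t := (A.image fun a => ({a} : Finset (Fin n))) ×ˢ B.powersetCard 2)]
    · rw [Finset.card_product, Finset.card_image_of_injective _
        (fun a b h => Finset.singleton_injective h), hA, Finset.card_powersetCard, hB]
    · intro e he
      simp only [Finset.mem_filter] at he
      obtain ⟨-, -, h1, h2⟩ := he
      simp only [Finset.mem_product, Finset.mem_image, Finset.mem_powersetCard]
      refine ⟨?_, Finset.inter_subset_right, h2⟩
      obtain ⟨a, ha⟩ := Finset.card_eq_one.mp h1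
      have hae : a ∈ e ∩ A := ha ▸ Finset.mem_singleton_self a
      exact ⟨a, (Finset.mem_inter.mp hae).2, ha.symm⟩
    · rintro ⟨p1, p2⟩ hp
      simp only [Finset.mem_product, Finset.mem_image, Finset.mem_powersetCard] at hp
      obtain ⟨⟨a, haA, rfl⟩, hp2, hp2c⟩ := hp
      have haB : a ∉ B := fun h => Finset.disjoint_left.mp hAB haA h
      have hd : Disjoint ({a} : Finset (Fin n)) p2 := by
        simp only [Finset.disjoint_singleton_left]
        exact fun h => haB (hp2 h)
      have h1 : ({a} ∪ p2) ∩ A = {a} := by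
        rw [Finset.union_inter_distrib_right]
        have : p2 ∩ A = ∅ := Finset.eq_empty_of_forall_notMem fun x hx => by
          simp only [Finset.mem_inter] at hx
          exact Finset.disjoint_right.mp hAB (hp2 hx.1) hx.2
        rw [this, Finset.union_empty, Finset.inter_eq_left.mpr (by simpa using haA)]
      have h2 : ({a} ∪ p2) ∩ B = p2 := by
        rw [Finset.union_inter_distrib_right]
        have : ({a} : Finset (Fin n)) ∩ B = ∅ := by
          simp [Finset.singleton_inter_of_notMem haB]
        rw [this, Finset.empty_union, Finset.inter_eq_left.mpr hp2]
      simp only [Finset.mem_filter, Finset.mem_univ, true_and]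
      refine ⟨?_, by rw [h1]; simp, by rw [h2, hp2c]⟩
      rw [Finset.card_union_of_disjoint hd, Finset.card_singleton, hp2c]
    · intro e he
      exact hsplit e
    · rintro ⟨p1, p2⟩ hp
      simp only [Finset.mem_product, Finset.mem_image, Finset.mem_powersetCard] at hp
      obtain ⟨⟨a, haA, rfl⟩, hp2, hp2c⟩ := hp
      have haB : a ∉ B := fun h => Finset.disjoint_left.mp hAB haA h
      have h1 : ({a} ∪ p2) ∩ A = {a} := by
        rw [Finset.union_inter_distrib_right]
        have : p2 ∩ A = ∅ := Finset.eq_empty_of_forall_notMem fun x hx => by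
          simp only [Finset.mem_inter] at hx
          exact Finset.disjoint_right.mp hAB (hp2 hx.1) hx.2
        rw [this, Finset.union_empty, Finset.inter_eq_left.mpr (by simpa using haA)]
      have h2 : ({a} ∪ p2) ∩ B = p2 := by
        rw [Finset.union_inter_distrib_right]
        have : ({a} : Finset (Fin n)) ∩ B = ∅ := by
          simp [Finset.singleton_inter_of_notMem haB]
        rw [this, Finset.empty_union, Finset.inter_eq_left.mpr hp2]
      simp only [h1, h2]
  · rintro ⟨v, P, hPsub, hPcard, hv, hpair⟩
    have hEB : ∀ e ∈ P, (e ∩ B).card = 2 := fun e he =>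
      ((Finset.mem_filter.mp (hPsub he)).2).2.2
    have hdisj : ∀ x ∈ P, ∀ y ∈ P, x ≠ y →
        Disjoint (x.erase v ∩ B) (y.erase v ∩ B) := by
      intro x hx y hy hxy
      exact (hpair (by simpa using hx) (by simpa using hy) hxy).mono
        Finset.inter_subset_left Finset.inter_subset_left
    have hcard := Finset.card_biUnion hdisj
    have herase : ∀ e : Finset (Fin n), e.erase v ∩ B = (e ∩ B).erase v := by
      intro e; ext x; simp only [Finset.mem_inter, Finset.mem_erase]; tauto
    by_cases hvB : v ∈ B
    · have hterm : ∀ e ∈ P, (e.erase v ∩ B).card = 1 := by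
        intro e he
        rw [herase]
        have : v ∈ e ∩ B := Finset.mem_inter.mpr ⟨hv e he, hvB⟩
        rw [Finset.card_erase_of_mem this, hEB e he]
      have hsum : (P.biUnion fun e => e.erase v ∩ B).card = k := by
        rw [hcard, Finset.sum_congr rfl hterm]
        simp [hPcard]
      have hsub : (P.biUnion fun e => e.erase v ∩ B) ⊆ B.erase v := by
        intro x hx
        simp only [Finset.mem_biUnion] at hx
        obtain ⟨e, he, hxe⟩ := hx
        rw [herase] at hxe
        exact Finset.mem_erase.mpr ⟨(Finset.mem_erase.mp hxe).1,
          (Finset.mem_inter.mp (Finset.mem_erase.mp hxe).2).2⟩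
      have := Finset.card_le_card hsub
      rw [hsum, Finset.card_erase_of_mem hvB, hB] at this
      omega
    · have hterm : ∀ e ∈ P, (e.erase v ∩ B).card = 2 := by
        intro e he
        rw [herase]
        have : v ∉ e ∩ B := fun h => hvB (Finset.mem_inter.mp h).2
        rw [Finset.erase_eq_of_notMem this, hEB e he]
      have hsum : (P.biUnion fun e => e.erase v ∩ B).card = 2 * k := by
        rw [hcard, Finset.sum_congr rfl hterm]
        simp [hPcard, Nat.mul_comm]
      have hsub : (P.biUnion fun e => e.erase v ∩ B) ⊆ B := by
        intro x hx
        simp only [Finset.mem_biUnion] at hx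
        obtain ⟨e, he, hxe⟩ := hx
        exact (Finset.mem_inter.mp hxe).2
      have := Finset.card_le_card hsub
      rw [hsum, hB] at this
      omega
end

section
/- For $2 \le k \le n$, the $4$-uniform hypergraph $G$ on vertex set $A \cup B$ with $|A| = n-k$, $|B| = k$, whose edges are all $4$-sets with exactly two vertices in $A$ and two in $B$, contains no sunflower $\mathit{Sf}_4(1,k)$, and $G$ has $\binom{n-k}{2}\binom{k}{2}$ edges. -/
lemma aux_inter (n : ℕ) (A B a b : Finset (Fin n)) (hAB : Disjoint A B)
    (haA : a ⊆ A) (hbB : b ⊆ B) : (a ∪ b) ∩ A = a ∧ (a ∪ b) ∩ B = b := by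
  constructor
  · rw [Finset.union_inter_distrib_right, Finset.inter_eq_left.2 haA,
      Finset.disjoint_iff_inter_eq_empty.1
        (Finset.disjoint_of_subset_left hbB hAB.symm), Finset.union_empty]
  · rw [Finset.union_inter_distrib_right, Finset.inter_eq_left.2 hbB,
      Finset.disjoint_iff_inter_eq_empty.1
        (Finset.disjoint_of_subset_left haA hAB), Finset.empty_union]

/-- For `2 ≤ k ≤ n`, the 4-graph of all 4-sets with exactly two vertices in a set `A`
of size `n-k` and two in a set `B` of size `k` has `C(n-k,2) * C(k,2)` edges and
contains no sunflower `Sf₄(1,k)`. -/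
theorem stmt_8 (n k : ℕ) (hk : 2 ≤ k) (hkn : k ≤ n)
    (A B : Finset (Fin n)) (hAB : Disjoint A B) (hA : A.card = n - k) (hB : B.card = k) :
    ((Finset.univ : Finset (Finset (Fin n))).filter
        (fun e => e.card = 4 ∧ (e ∩ A).card = 2 ∧ (e ∩ B).card = 2)).card
      = (n - k).choose 2 * k.choose 2 ∧
    ¬ ∃ (v : Fin n) (P : Finset (Finset (Fin n))),
        P ⊆ (Finset.univ : Finset (Finset (Fin n))).filter
          (fun e => e.card = 4 ∧ (e ∩ A).card = 2 ∧ (e ∩ B).card = 2) ∧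
        P.card = k ∧ (∀ e ∈ P, v ∈ e) ∧
        (P : Set (Finset (Fin n))).Pairwise
          fun e f => Disjoint (e.erase v) (f.erase v) := by
  classical
  constructor
  · have heq : (Finset.univ : Finset (Finset (Fin n))).filter
        (fun e => e.card = 4 ∧ (e ∩ A).card = 2 ∧ (e ∩ B).card = 2)
        = (A.powersetCard 2 ×ˢ B.powersetCard 2).image (fun p => p.1 ∪ p.2) := by
      ext e
      simp only [Finset.mem_filter, Finset.mem_univ, true_and, Finset.mem_image,
        Finset.mem_product, Finset.mem_powersetCard, Prod.exists]
      constructor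
      · rintro ⟨h4, hA2, hB2⟩
        refine ⟨e ∩ A, e ∩ B, ⟨⟨Finset.inter_subset_right, hA2⟩,
          ⟨Finset.inter_subset_right, hB2⟩⟩, ?_⟩
        have hd : Disjoint (e ∩ A) (e ∩ B) :=
          Finset.disjoint_of_subset_left Finset.inter_subset_right
            (Finset.disjoint_of_subset_right Finset.inter_subset_right hAB)
        have hsub : (e ∩ A) ∪ (e ∩ B) ⊆ e :=
          Finset.union_subset Finset.inter_subset_left Finset.inter_subset_left
        have hcard : ((e ∩ A) ∪ (e ∩ B)).card = 4 := by
          rw [Finset.card_union_of_disjoint hd, hA2, hB2]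
        exact Finset.eq_of_subset_of_card_le hsub (by rw [h4, hcard])
      · rintro ⟨a, b, ⟨⟨haA, ha2⟩, hbB, hb2⟩, rfl⟩
        obtain ⟨h1, h2⟩ := aux_inter n A B a b hAB haA hbB
        refine ⟨?_, by rw [h1, ha2], by rw [h2, hb2]⟩
        rw [Finset.card_union_of_disjoint
          (Finset.disjoint_of_subset_left haA (Finset.disjoint_of_subset_right hbB hAB)),
          ha2, hb2]
    rw [heq, Finset.card_image_of_injOn, Finset.card_product,
      Finset.card_powersetCard, Finset.card_powersetCard, hA, hB]
    rintro ⟨a, b⟩ hp ⟨c, d⟩ hq h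
    simp only [Finset.mem_coe, Finset.mem_product, Finset.mem_powersetCard] at hp hq
    obtain ⟨h1, h2⟩ := aux_inter n A B a b hAB hp.1.1 hp.2.1
    obtain ⟨h3, h4⟩ := aux_inter n A B c d hAB hq.1.1 hq.2.1
    simp only at h
    have ha : a = c := by rw [← h1, ← h3, h]
    have hb : b = d := by rw [← h2, ← h4, h]
    simp [ha, hb]
  · rintro ⟨v, P, hP, hPcard, hv, hpair⟩
    have hmem : ∀ e ∈ P, e.card = 4 ∧ (e ∩ A).card = 2 ∧ (e ∩ B).card = 2 := by
      intro e he
      have := hP he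
      simpa using this
    -- pairwise disjoint family of (e.erase v ∩ B)
    have hdisj : ∀ e ∈ P, ∀ f ∈ P, e ≠ f →
        Disjoint (e.erase v ∩ B) (f.erase v ∩ B) := by
      intro e he f hf hef
      exact Finset.disjoint_of_subset_left Finset.inter_subset_left
        (Finset.disjoint_of_subset_right Finset.inter_subset_left (hpair he hf hef))
    have hsum : ∑ e ∈ P, (e.erase v ∩ B).card = (P.biUnion fun e => e.erase v ∩ B).card :=
      (Finset.card_biUnion hdisj).symm
    have hsub : (P.biUnion fun e => e.erase v ∩ B) ⊆ B.erase v := by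
      intro x hx
      simp only [Finset.mem_biUnion] at hx
      obtain ⟨e, he, hx⟩ := hx
      rw [Finset.mem_inter, Finset.mem_erase] at hx
      exact Finset.mem_erase.2 ⟨hx.1.1, hx.2⟩
    have hle : ∑ e ∈ P, (e.erase v ∩ B).card ≤ (B.erase v).card := by
      rw [hsum]; exact Finset.card_le_card hsub
    by_cases hvB : v ∈ B
    · -- each term ≥ 1
      have hone : ∀ e ∈ P, 1 ≤ (e.erase v ∩ B).card := by
        intro e he
        have h2 : (e ∩ B).card = 2 := (hmem e he).2.2
        have : (e ∩ B).erase v ⊆ e.erase v ∩ B := by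
          intro x hx
          rw [Finset.mem_erase, Finset.mem_inter] at hx
          exact Finset.mem_inter.2 ⟨Finset.mem_erase.2 ⟨hx.1, hx.2.1⟩, hx.2.2⟩
        calc 1 ≤ ((e ∩ B).erase v).card := by
              have := Finset.pred_card_le_card_erase (a := v) (s := e ∩ B)
              omega
          _ ≤ _ := Finset.card_le_card this
      have : k ≤ (B.erase v).card := by
        calc k = ∑ e ∈ P, 1 := by simp [hPcard]
          _ ≤ ∑ e ∈ P, (e.erase v ∩ B).card := Finset.sum_le_sum hone
          _ ≤ _ := hle
      rw [Finset.card_erase_of_mem hvB, hB] at this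
      omega
    · have htwo : ∀ e ∈ P, (e.erase v ∩ B).card = 2 := by
        intro e he
        have h2 : (e ∩ B).card = 2 := (hmem e he).2.2
        have : e.erase v ∩ B = e ∩ B := by
          ext x
          simp only [Finset.mem_inter, Finset.mem_erase]
          constructor
          · rintro ⟨⟨_, hx⟩, hxB⟩; exact ⟨hx, hxB⟩
          · rintro ⟨hx, hxB⟩
            exact ⟨⟨fun h => hvB (h ▸ hxB), hx⟩, hxB⟩
        rw [this, h2]
      have : 2 * k ≤ (B.erase v).card := by
        calc 2 * k = ∑ e ∈ P, 2 := by simp [hPcard]; ring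
          _ = ∑ e ∈ P, (e.erase v ∩ B).card := (Finset.sum_congr rfl htwo).symm
          _ ≤ _ := hle
      have hBe : (B.erase v).card ≤ k := by
        rw [Finset.erase_eq_of_notMem hvB, hB]
      omega
end

section
/- Let $G$ be a $3$-uniform hypergraph on $n$ vertices with $e$ edges where $e \ge C\max\{kn^2, h^2k^2n\}$ for $C$ a sufficiently large absolute constant. Then $G$ contains a copy of the generalised star $\mathit{St}_3(h,k)$: a vertex $v$ whose link graph contains $h$ vertex-disjoint stars $S_k$. -/
open Finset

variable {V : Type} [Fintype V] [DecidableEq V]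

/-- `h` vertex-disjoint stars with `k` leaves in the "graph" given by
neighborhood function `A`. -/
def Stars (A : V → Finset V) (h k : ℕ) : Prop :=
  ∃ (c : Fin h → V) (L : Fin h → Finset V),
    (∀ i, (L i).card = k ∧ c i ∉ L i ∧ L i ⊆ A (c i)) ∧
    ∀ i j, i ≠ j → Disjoint (insert (c i) (L i)) (insert (c j) (L j))

lemma stars_mono {A B : V → Finset V} (hAB : ∀ w, A w ⊆ B w) {h k : ℕ}
    (hs : Stars A h k) : Stars B h k := by
  obtain ⟨c, L, h1, h2⟩ := hs
  exact ⟨c, L, fun i => ⟨(h1 i).1, (h1 i).2.1, (h1 i).2.2.trans (hAB _)⟩, h2⟩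

lemma greedy_aux (A : V → Finset V) (k : ℕ) :
    ∀ (l : List V) (F : Finset V), l.Nodup →
    (∀ w ∈ l, F.card + k * l.length ≤ (A w).card) →
    ∃ ass : V → Finset V,
      (∀ w ∈ l, (ass w).card = k ∧ ass w ⊆ A w ∧ Disjoint (ass w) F) ∧
      (∀ a ∈ l, ∀ b ∈ l, a ≠ b → Disjoint (ass a) (ass b)) := by
  intro l
  induction l with
  | nil => exact fun F _ _ => ⟨fun _ => ∅, by simp, by simp⟩
  | cons w t ih =>
    intro F hnd hdeg
    obtain ⟨hwt, hndt⟩ := List.nodup_cons.mp hnd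
    have hw : F.card + k * (t.length + 1) ≤ (A w).card := by
      simpa using hdeg w (by simp)
    have hK : k ≤ ((A w) \ F).card := by
      have h1 := Finset.le_card_sdiff F (A w)
      have h2 : k * (t.length + 1) = k * t.length + k := by ring
      omega
    obtain ⟨K, hKsub, hKcard⟩ := Finset.exists_subset_card_eq hK
    obtain ⟨ass', h1, h2⟩ := ih (F ∪ K) hndt (fun w' hw' => by
      have h := hdeg w' (by simp [hw'])
      have hu := Finset.card_union_le F K
      simp only [List.length_cons] at h
      have he : k * (t.length + 1) = k * t.length + k := by ring
      omega)
    refine ⟨fun x => if x = w then K else ass' x, ?_, ?_⟩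
    · intro w' hw'
      rcases List.mem_cons.mp hw' with rfl | hw't
      · simp only [if_pos rfl]
        exact ⟨hKcard, hKsub.trans sdiff_subset,
          (Finset.sdiff_disjoint : Disjoint ((A w') \ F) F).mono_left hKsub⟩
      · have hne : w' ≠ w := by rintro rfl; exact hwt hw't
        simp only [if_neg hne]
        obtain ⟨c1, c2, c3⟩ := h1 w' hw't
        exact ⟨c1, c2, c3.mono_right Finset.subset_union_left⟩
    · intro a ha b hb hab
      rcases List.mem_cons.mp ha with rfl | hat
      · rcases List.mem_cons.mp hb with rfl | hbt
        · exact absurd rfl hab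
        · have hbw : b ≠ a := by rintro rfl; exact hwt hbt
          simp only [if_pos rfl, if_neg hbw]
          exact ((h1 b hbt).2.2.mono_right Finset.subset_union_right).symm
      · rcases List.mem_cons.mp hb with rfl | hbt
        · have haw : a ≠ b := by rintro rfl; exact hwt hat
          simp only [if_pos rfl, if_neg haw]
          exact (h1 a hat).2.2.mono_right Finset.subset_union_right
        · have haw : a ≠ w := by rintro rfl; exact hwt hat
          have hbw : b ≠ w := by rintro rfl; exact hwt hbt
          simp only [if_neg haw, if_neg hbw]
          exact h2 a hat b hbt hab

lemma greedy (A : V → Finset V) (h k : ℕ) (W : Finset V)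
    (hcard : h ≤ W.card) (hdeg : ∀ w ∈ W, h * (k + 1) ≤ (A w).card) :
    Stars A h k := by
  obtain ⟨W', hW'sub, hW'card⟩ := Finset.exists_subset_card_eq hcard
  set l := W'.toList with hl
  have hnd : l.Nodup := W'.nodup_toList
  have hlen : l.length = h := by simp [hl, hW'card]
  have hmem : ∀ x, x ∈ l ↔ x ∈ W' := fun x => Finset.mem_toList
  obtain ⟨ass, h1, h2⟩ := greedy_aux A k l W' hnd (fun w hw => by
    have hA : h * (k + 1) ≤ (A w).card := hdeg w (hW'sub ((hmem w).mp hw))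
    have : W'.card + k * l.length = h * (k + 1) := by rw [hW'card, hlen]; ring
    omega)
  refine ⟨fun i => l.get (Fin.cast hlen.symm i), fun i => ass (l.get (Fin.cast hlen.symm i)),
    ?_, ?_⟩
  · intro i
    have hgm : l.get (Fin.cast hlen.symm i) ∈ l := l.get_mem _
    obtain ⟨c1, c2, c3⟩ := h1 _ hgm
    refine ⟨c1, ?_, c2⟩
    exact Finset.disjoint_right.mp c3 ((hmem _).mp hgm)
  · intro i j hij
    have hgi : l.get (Fin.cast hlen.symm i) ∈ l := l.get_mem _
    have hgj : l.get (Fin.cast hlen.symm j) ∈ l := l.get_mem _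
    have hne : l.get (Fin.cast hlen.symm i) ≠ l.get (Fin.cast hlen.symm j) := by
      intro hc
      have := hnd.get_inj_iff.mp hc
      apply hij
      have hv : (Fin.cast hlen.symm i : ℕ) = (Fin.cast hlen.symm j : ℕ) := by rw [this]
      simpa [Fin.ext_iff] using hv
    rw [Finset.disjoint_left]
    intro x hx hx'
    rcases Finset.mem_insert.mp hx with rfl | hxL
    · rcases Finset.mem_insert.mp hx' with h' | h'
      · exact hne h'
      · exact Finset.disjoint_right.mp (h1 _ hgj).2.2 ((hmem _).mp hgi) h'
    · rcases Finset.mem_insert.mp hx' with rfl | h'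
      · exact Finset.disjoint_right.mp (h1 _ hgi).2.2 ((hmem _).mp hgj) hxL
      · exact Finset.disjoint_left.mp (h2 _ hgi _ hgj hne) hxL h'
lemma packing (A : V → Finset V) (k : ℕ) (hirr : ∀ w, w ∉ A w) :
    ∀ h : ℕ, Stars A h k ∨
      ∃ T : Finset V, T.card ≤ h * (k + 1) ∧ ∀ w ∉ T, ((A w) \ T).card < k := by
  intro h
  induction h with
  | zero => exact Or.inl ⟨Fin.elim0, Fin.elim0, fun i => i.elim0, fun i => i.elim0⟩
  | succ m ih =>
    rcases ih with hs | ⟨T, hT1, hT2⟩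
    · obtain ⟨c, L, h1, h2⟩ := hs
      set T' := Finset.univ.biUnion (fun i : Fin m => insert (c i) (L i)) with hT'
      have hT'card : T'.card ≤ m * (k + 1) := by
        rw [hT']
        calc (Finset.univ.biUnion (fun i : Fin m => insert (c i) (L i))).card
            ≤ ∑ i : Fin m, (insert (c i) (L i)).card := Finset.card_biUnion_le
          _ ≤ ∑ _i : Fin m, (k + 1) := Finset.sum_le_sum (fun i _ =>
              (Finset.card_insert_le _ _).trans (by rw [(h1 i).1]))
          _ = m * (k + 1) := by simp [mul_comm]
      by_cases hex : ∃ w, w ∉ T' ∧ k ≤ ((A w) \ T').card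
      · obtain ⟨w, hwT, hwk⟩ := hex
        obtain ⟨K, hKsub, hKcard⟩ := Finset.exists_subset_card_eq hwk
        left
        have hsubT' : ∀ j : Fin m, insert (c j) (L j) ⊆ T' := by
          intro j
          rw [hT']
          exact Finset.subset_biUnion_of_mem (fun i : Fin m => insert (c i) (L i)) (Finset.mem_univ j)
        have hdisjnew : ∀ j : Fin m,
            Disjoint (insert w K) (insert (c j) (L j)) := by
          intro j
          rw [Finset.disjoint_left]
          intro x hx hx'
          have hxT' : x ∈ T' := hsubT' j hx'
          rcases Finset.mem_insert.mp hx with rfl | hxK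
          · exact hwT hxT'
          · exact (Finset.mem_sdiff.mp (hKsub hxK)).2 hxT'
        refine ⟨Fin.snoc c w, Fin.snoc L K, ?_, ?_⟩
        · intro i
          induction i using Fin.lastCases with
          | last =>
            simp only [Fin.snoc_last]
            exact ⟨hKcard, fun hwK => hirr w ((Finset.mem_sdiff.mp (hKsub hwK)).1),
              hKsub.trans Finset.sdiff_subset⟩
          | cast i =>
            simp only [Fin.snoc_castSucc]
            exact h1 i
        · intro i j hij
          induction i using Fin.lastCases with
          | last =>
            induction j using Fin.lastCases with
            | last => exact absurd rfl hij
            | cast j =>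
              simp only [Fin.snoc_last, Fin.snoc_castSucc]
              exact hdisjnew j
          | cast i =>
            induction j using Fin.lastCases with
            | last =>
              simp only [Fin.snoc_last, Fin.snoc_castSucc]
              exact (hdisjnew i).symm
            | cast j =>
              simp only [Fin.snoc_castSucc]
              exact h2 i j (fun hc => hij (by rw [hc]))
      · right
        push_neg at hex
        exact ⟨T', hT'card.trans (Nat.mul_le_mul_right _ (Nat.le_succ m)),
          fun w hw => hex w hw⟩
    · exact Or.inr ⟨T, hT1.trans (Nat.mul_le_mul_right _ (Nat.le_succ m)), hT2⟩

lemma split (A : V → Finset V) (k : ℕ)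
    (hsym : ∀ u w, u ∈ A w ↔ w ∈ A u)
    (T : Finset V) (hT : ∀ w ∉ T, ((A w) \ T).card ≤ k) :
    ∑ u, (A u).card ≤ 2 * ∑ t ∈ T, (A t).card + k * Fintype.card V := by
  have key : ∀ u ∈ Tᶜ, (A u).card ≤ (A u ∩ T).card + k := by
    intro u hu
    have h1 := Finset.card_inter_add_card_sdiff (A u) T
    have h2 := hT u (Finset.mem_compl.mp hu)
    omega
  have swap : ∑ u ∈ Tᶜ, (A u ∩ T).card ≤ ∑ t ∈ T, (A t).card := by
    calc ∑ u ∈ Tᶜ, (A u ∩ T).card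
        = ∑ u ∈ Tᶜ, ∑ t ∈ T, (if t ∈ A u then 1 else 0) := by
          refine Finset.sum_congr rfl (fun u _ => ?_)
          rw [← Finset.card_filter]
          congr 1
          ext t
          simp [Finset.mem_inter, and_comm]
      _ = ∑ t ∈ T, ∑ u ∈ Tᶜ, (if t ∈ A u then 1 else 0) := Finset.sum_comm
      _ ≤ ∑ t ∈ T, (A t).card := by
          refine Finset.sum_le_sum (fun t _ => ?_)
          rw [← Finset.card_filter]
          refine Finset.card_le_card ?_
          intro u hu
          exact (hsym t u).mp (Finset.mem_filter.mp hu).2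
  have hsplit : ∑ u, (A u).card = ∑ u ∈ T, (A u).card + ∑ u ∈ Tᶜ, (A u).card :=
    (Finset.sum_add_sum_compl T _).symm
  have hcompl : ∑ u ∈ Tᶜ, (A u).card ≤ ∑ u ∈ Tᶜ, (A u ∩ T).card + k * Fintype.card V := by
    calc ∑ u ∈ Tᶜ, (A u).card ≤ ∑ u ∈ Tᶜ, ((A u ∩ T).card + k) := Finset.sum_le_sum key
      _ = ∑ u ∈ Tᶜ, (A u ∩ T).card + Tᶜ.card * k := by rw [Finset.sum_add_distrib,
          Finset.sum_const, smul_eq_mul]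
      _ ≤ ∑ u ∈ Tᶜ, (A u ∩ T).card + k * Fintype.card V := by
          have := Finset.card_le_univ (Tᶜ)
          have : Tᶜ.card * k ≤ k * Fintype.card V := by
            rw [mul_comm]
            exact Nat.mul_le_mul_left _ (by simpa using Finset.card_le_univ (Tᶜ))
          omega
  omega
/-- The common neighborhood of `u` and `w` in the 3-graph `G`. -/
def NN (G : Finset (Finset V)) (u w : V) : Finset V :=
  Finset.univ.filter (fun y => ({u, w, y} : Finset V) ∈ G)

lemma mem_NN {G : Finset (Finset V)} {u w y : V} :
    y ∈ NN G u w ↔ ({u, w, y} : Finset V) ∈ G := by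
  simp [NN]

lemma tri3 {G : Finset (Finset V)} (hG3 : ∀ e ∈ G, e.card = 3) {u w y : V}
    (hm : ({u, w, y} : Finset V) ∈ G) : u ≠ w ∧ u ≠ y ∧ w ≠ y := by
  have h3 := hG3 _ hm
  refine ⟨?_, ?_, ?_⟩ <;> rintro rfl
  · rw [Finset.insert_idem] at h3
    have : ({u, y} : Finset V).card ≤ 2 :=
      le_trans (Finset.card_insert_le _ _) (by simp)
    omega
  · have he : ({u, w, u} : Finset V) = {u, w} := by ext z; simp; try tauto
    rw [he] at h3
    have : ({u, w} : Finset V).card ≤ 2 :=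
      le_trans (Finset.card_insert_le _ _) (by simp)
    omega
  · have he : ({u, w, w} : Finset V) = {u, w} := by ext z; simp; try tauto
    rw [he] at h3
    have : ({u, w} : Finset V).card ≤ 2 :=
      le_trans (Finset.card_insert_le _ _) (by simp)
    omega

lemma NN_irrefl {G : Finset (Finset V)} (hG3 : ∀ e ∈ G, e.card = 3) (u w : V) :
    w ∉ NN G u w := fun hm => (tri3 hG3 (mem_NN.mp hm)).2.2 rfl

lemma NN_comm {G : Finset (Finset V)} (u w : V) : NN G u w = NN G w u := by
  ext y
  simp only [mem_NN]
  rw [show ({u, w, y} : Finset V) = {w, u, y} from by ext z; simp; try tauto]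

lemma NN_swap {G : Finset (Finset V)} {u w y : V} : y ∈ NN G u w ↔ w ∈ NN G u y := by
  simp only [mem_NN]
  rw [show ({u, w, y} : Finset V) = {u, y, w} from by ext z; simp; try tauto]
/-- There is an absolute constant `C` such that every 3-uniform hypergraph on `n`
vertices with at least `C * max (k*n^2) (h^2*k^2*n)` edges contains a copy of the
generalised star `St₃(h,k)`: a vertex `v` whose link graph contains `h`
vertex-disjoint stars `S_k`. -/
theorem stmt_9 : ∃ C : ℕ, 0 < C ∧
    ∀ (n h k : ℕ), 1 ≤ n → 1 ≤ h → 1 ≤ k →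
    ∀ (V : Type) [Fintype V] [DecidableEq V] (G : Finset (Finset V)),
      Fintype.card V = n → (∀ e ∈ G, e.card = 3) →
      C * max (k * n ^ 2) (h ^ 2 * k ^ 2 * n) ≤ G.card →
      ∃ (v : V) (c : Fin h → V) (L : Fin h → Finset V),
        (∀ i, (L i).card = k ∧ v ∉ insert (c i) (L i) ∧ c i ∉ L i ∧
          ∀ x ∈ L i, ({v, c i, x} : Finset V) ∈ G) ∧
        ∀ i j, i ≠ j → Disjoint (insert (c i) (L i)) (insert (c j) (L j)) := by
  refine ⟨100, by norm_num, ?_⟩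
  intro n h k hn hh hk V _ _ G hcard hG3 hbig
  by_contra hcon
  have hstars : ∀ v : V, ¬ Stars (NN G v) h k := by
    intro v hs
    obtain ⟨c, L, h1, h2⟩ := hs
    apply hcon
    refine ⟨v, c, L, fun i => ?_, h2⟩
    obtain ⟨hc1, hc2, hc3⟩ := h1 i
    have hne : (L i).Nonempty := Finset.card_pos.mp (by omega)
    obtain ⟨y, hy⟩ := hne
    have hd := tri3 hG3 (mem_NN.mp (hc3 hy))
    refine ⟨hc1, ?_, hc2, fun x hx => mem_NN.mp (hc3 hx)⟩
    simp only [Finset.mem_insert]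
    push_neg
    exact ⟨hd.1, fun hvL => (tri3 hG3 (mem_NN.mp (hc3 hvL))).2.1 rfl⟩
  set d1 := h * (k + 1) with hd1
  have NC1 : ∀ u : V, (Finset.univ.filter (fun w => d1 ≤ (NN G u w).card)).card < h := by
    intro u
    by_contra hge
    push_neg at hge
    exact hstars u (greedy (NN G u) h k _ hge
      (fun w hw => by simpa [hd1] using (Finset.mem_filter.mp hw).2))
  -- Step A : every edge is counted by some triple
  have stepA : G.card ≤ ∑ x : V, ∑ u : V, (NN G x u).card := by
    have hsurj : Set.SurjOn (fun p : V × V × V => ({p.1, p.2.1, p.2.2} : Finset V))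
        ↑((Finset.univ ×ˢ Finset.univ ×ˢ Finset.univ).filter
          (fun p : V × V × V => ({p.1, p.2.1, p.2.2} : Finset V) ∈ G)) ↑G := by
      intro e he
      obtain ⟨a, b, c, _, _, _, rfl⟩ := Finset.card_eq_three.mp (hG3 e he)
      exact ⟨(a, b, c), by simpa using he, rfl⟩
    refine le_trans (Finset.card_le_card_of_surjOn _ hsurj) (le_of_eq ?_)
    rw [Finset.card_filter, Finset.sum_product]
    refine Finset.sum_congr rfl (fun x _ => ?_)
    rw [Finset.sum_product]
    refine Finset.sum_congr rfl (fun u _ => ?_)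
    rw [NN, Finset.card_filter]
  -- Step B : per-vertex link decomposition via a maximal star packing
  have stepB : ∀ x : V, ∑ u : V, (NN G x u).card ≤
      2 * (d1 * d1) + 2 * (∑ t ∈ Finset.univ.filter (fun w => d1 ≤ (NN G x w).card),
        (NN G x t).card) + k * n := by
    intro x
    rcases packing (NN G x) k (NN_irrefl hG3 x) h with hs | ⟨T, hT1, hT2⟩
    · exact absurd hs (hstars x)
    have hsym : ∀ u w : V, u ∈ NN G x w ↔ w ∈ NN G x u := fun u w => NN_swap
    have hsplit := split (NN G x) k hsym T (fun w hw => (hT2 w hw).le)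
    rw [hcard] at hsplit
    have hTbound : ∑ t ∈ T, (NN G x t).card ≤ d1 * d1 +
        ∑ t ∈ Finset.univ.filter (fun w => d1 ≤ (NN G x w).card), (NN G x t).card := by
      rw [← Finset.sum_filter_add_sum_filter_not T (fun t => d1 ≤ (NN G x t).card)]
      have hle1 : ∑ t ∈ T.filter (fun t => d1 ≤ (NN G x t).card), (NN G x t).card ≤
          ∑ t ∈ Finset.univ.filter (fun w => d1 ≤ (NN G x w).card), (NN G x t).card := by
        refine Finset.sum_le_sum_of_subset ?_
        intro t ht
        simp only [Finset.mem_filter] at ht ⊢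
        exact ⟨Finset.mem_univ t, ht.2⟩
      have hle2 : ∑ t ∈ T.filter (fun t => ¬ d1 ≤ (NN G x t).card), (NN G x t).card ≤
          T.card * d1 := by
        refine le_trans (Finset.sum_le_card_nsmul _ _ d1 (fun t ht => ?_)) ?_
        · exact (lt_of_not_ge (Finset.mem_filter.mp ht).2).le
        · rw [smul_eq_mul]
          exact Nat.mul_le_mul_right _ (Finset.card_le_card (Finset.filter_subset _ _))
      have hle3 : T.card * d1 ≤ d1 * d1 := Nat.mul_le_mul_right _ hT1
      omega
    omega
  -- Step C : re-route the heavy codegree sum through the third vertex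
  have stepC : ∑ x : V, ∑ t ∈ Finset.univ.filter (fun w => d1 ≤ (NN G x w).card),
        (NN G x t).card
      = ∑ y : V, ∑ x : V, ((NN G y x).filter (fun w => d1 ≤ (NN G x w).card)).card := by
    calc ∑ x : V, ∑ t ∈ Finset.univ.filter (fun w => d1 ≤ (NN G x w).card), (NN G x t).card
        = ∑ x : V, ∑ y : V, ∑ t ∈ Finset.univ.filter (fun w => d1 ≤ (NN G x w).card),
            (if ({x, t, y} : Finset V) ∈ G then 1 else 0) := by
          refine Finset.sum_congr rfl (fun x _ => ?_)
          rw [Finset.sum_comm]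
          refine Finset.sum_congr rfl (fun t _ => ?_)
          rw [NN, Finset.card_filter]
      _ = ∑ y : V, ∑ x : V, ∑ t ∈ Finset.univ.filter (fun w => d1 ≤ (NN G x w).card),
            (if ({x, t, y} : Finset V) ∈ G then 1 else 0) := Finset.sum_comm
      _ = ∑ y : V, ∑ x : V, ((NN G y x).filter (fun w => d1 ≤ (NN G x w).card)).card := by
          refine Finset.sum_congr rfl (fun y _ => Finset.sum_congr rfl (fun x _ => ?_))
          rw [← Finset.card_filter]
          congr 1
          ext w
          simp only [Finset.mem_filter, Finset.mem_univ, true_and, mem_NN]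
          rw [show ({y, x, w} : Finset V) = {x, w, y} from by ext z; simp; try tauto]
          tauto
  -- Step D : the per-vertex heavy graph has small degrees
  have stepD : ∀ y : V, ∑ x : V, ((NN G y x).filter (fun w => d1 ≤ (NN G x w).card)).card
      ≤ 2 * (d1 * h) + k * n := by
    intro y
    set A : V → Finset V := fun x => (NN G y x).filter (fun w => d1 ≤ (NN G x w).card)
      with hA
    have hirrA : ∀ w, w ∉ A w := by
      intro w hw
      exact NN_irrefl hG3 y w (Finset.filter_subset _ _ hw)
    rcases packing A k hirrA h with hs | ⟨T, hT1, hT2⟩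
    · exact absurd (stars_mono (fun w => Finset.filter_subset _ _) hs) (hstars y)
    have hsym : ∀ u w : V, u ∈ A w ↔ w ∈ A u := by
      intro u w
      simp only [hA, Finset.mem_filter]
      constructor
      · rintro ⟨h1, h2⟩
        exact ⟨NN_swap.mp h1, by rwa [NN_comm]⟩
      · rintro ⟨h1, h2⟩
        exact ⟨NN_swap.mp h1, by rwa [NN_comm]⟩
    have hsplit := split A k hsym T (fun w hw => (hT2 w hw).le)
    rw [hcard] at hsplit
    have hdeg : ∀ t : V, (A t).card ≤ h := by
      intro t
      refine le_of_lt (lt_of_le_of_lt (Finset.card_le_card ?_) (NC1 t))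
      intro w hw
      simp only [hA, Finset.mem_filter] at hw
      simp only [Finset.mem_filter]
      exact ⟨Finset.mem_univ w, hw.2⟩
    have hTsum : ∑ t ∈ T, (A t).card ≤ d1 * h := by
      refine le_trans (Finset.sum_le_card_nsmul _ _ h (fun t _ => hdeg t)) ?_
      rw [smul_eq_mul]
      exact Nat.mul_le_mul_right _ hT1
    have hfin : ∑ x : V, (A x).card ≤ 2 * (d1 * h) + k * n := by omega
    exact hfin
  -- Combine everything
  have hsum1 : ∑ x : V, ∑ u : V, (NN G x u).card ≤
      n * (2 * (d1 * d1)) + 2 * (∑ y : V, ∑ x : V,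
        ((NN G y x).filter (fun w => d1 ≤ (NN G x w).card)).card) + n * (k * n) := by
    calc ∑ x : V, ∑ u : V, (NN G x u).card
        ≤ ∑ x : V, (2 * (d1 * d1) + 2 * (∑ t ∈ Finset.univ.filter
            (fun w => d1 ≤ (NN G x w).card), (NN G x t).card) + k * n) :=
          Finset.sum_le_sum (fun x _ => stepB x)
      _ = n * (2 * (d1 * d1)) + 2 * (∑ x : V, ∑ t ∈ Finset.univ.filter
            (fun w => d1 ≤ (NN G x w).card), (NN G x t).card) + n * (k * n) := by
          rw [Finset.sum_add_distrib, Finset.sum_add_distrib, Finset.sum_const,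
            Finset.sum_const, ← Finset.mul_sum, Finset.card_univ, hcard, smul_eq_mul,
            smul_eq_mul]
      _ = n * (2 * (d1 * d1)) + 2 * (∑ y : V, ∑ x : V,
            ((NN G y x).filter (fun w => d1 ≤ (NN G x w).card)).card) + n * (k * n) := by
          rw [stepC]
  have hsum2 : ∑ y : V, ∑ x : V, ((NN G y x).filter (fun w => d1 ≤ (NN G x w).card)).card
      ≤ n * (2 * (d1 * h) + k * n) := by
    refine le_trans (Finset.sum_le_card_nsmul _ _ _ (fun y _ => stepD y)) ?_
    rw [smul_eq_mul, Finset.card_univ, hcard]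
  have htot : G.card ≤ n * (2 * (d1 * d1)) + 2 * (n * (2 * (d1 * h) + k * n)) + n * (k * n) := by
    have := le_trans stepA hsum1
    omega
  -- Numerics
  have hd1b : d1 ≤ 2 * (h * k) := by
    rw [hd1]
    calc h * (k + 1) ≤ h * (2 * k) := Nat.mul_le_mul_left h (by omega)
      _ = 2 * (h * k) := by ring
  have hM1 : k * n ^ 2 ≤ max (k * n ^ 2) (h ^ 2 * k ^ 2 * n) := le_max_left _ _
  have hM2 : h ^ 2 * k ^ 2 * n ≤ max (k * n ^ 2) (h ^ 2 * k ^ 2 * n) := le_max_right _ _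
  have hMpos : 1 ≤ k * n ^ 2 := by nlinarith
  have hbound : G.card ≤ 19 * max (k * n ^ 2) (h ^ 2 * k ^ 2 * n) := by
    have h1 : n * (2 * (d1 * d1)) ≤ 8 * (h ^ 2 * k ^ 2 * n) := by
      calc n * (2 * (d1 * d1)) ≤ n * (2 * ((2 * (h * k)) * (2 * (h * k)))) := by
            exact Nat.mul_le_mul_left n (Nat.mul_le_mul_left 2 (Nat.mul_le_mul hd1b hd1b))
        _ = 8 * (h ^ 2 * k ^ 2 * n) := by ring
    have h2 : 2 * (n * (2 * (d1 * h) + k * n)) ≤ 8 * (h ^ 2 * k ^ 2 * n) + 2 * (k * n ^ 2) := by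
      have h2a : d1 * h ≤ 2 * (h ^ 2 * k) := by
        calc d1 * h ≤ (2 * (h * k)) * h := Nat.mul_le_mul_right h hd1b
          _ = 2 * (h ^ 2 * k) := by ring
      have h2b : h ^ 2 * k ≤ h ^ 2 * k ^ 2 := by
        have : k ≤ k ^ 2 := by nlinarith
        exact Nat.mul_le_mul_left _ this
      calc 2 * (n * (2 * (d1 * h) + k * n))
          ≤ 2 * (n * (2 * (2 * (h ^ 2 * k ^ 2)) + k * n)) := by
            refine Nat.mul_le_mul_left 2 (Nat.mul_le_mul_left n (Nat.add_le_add_right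
              (Nat.mul_le_mul_left 2 (le_trans h2a (Nat.mul_le_mul_left 2 h2b))) _))
        _ = 8 * (h ^ 2 * k ^ 2 * n) + 2 * (k * n ^ 2) := by ring
    have h3 : n * (k * n) = k * n ^ 2 := by ring
    calc G.card ≤ n * (2 * (d1 * d1)) + 2 * (n * (2 * (d1 * h) + k * n)) + n * (k * n) := htot
      _ ≤ 8 * (h ^ 2 * k ^ 2 * n) + (8 * (h ^ 2 * k ^ 2 * n) + 2 * (k * n ^ 2)) +
          k * n ^ 2 := by omega
      _ ≤ 19 * max (k * n ^ 2) (h ^ 2 * k ^ 2 * n) := by omega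
  omega
end

section
/- Let $H$ be a $3$-uniform hypergraph on $n$ vertices in which every pair of vertices has codegree less than $3kd^2$, where $d = (n/k)^{1/3}$ (so $n = kd^3$). If every vertex $w$ of $H$ has degree at least $7kn$, then $H$ contains a copy of $\mathit{St}_3(d,k)$ centred at $w$: the link graph of $w$ contains $d$ vertex-disjoint stars $S_k$. -/
lemma step_lemma {V : Type*} [Fintype V] [DecidableEq V] (n k d : ℕ)
    (hn : Fintype.card V = n) (hnkd : n = k * d ^ 3) (hk : 1 ≤ k) (hd : 1 ≤ d)
    (H : Finset (Finset V)) (hunif : ∀ e ∈ H, e.card = 3)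
    (hcodeg : ∀ u v : V, u ≠ v → (H.filter fun e => u ∈ e ∧ v ∈ e).card < 3 * k * d ^ 2)
    (w : V) (hw : 7 * k * n ≤ (H.filter fun e => w ∈ e).card)
    (U : Finset V) (hU : U.card ≤ 2 * k * d) (hwU : w ∉ U) :
    ∃ (c : V) (L : Finset V), L.card = k ∧ w ∉ insert c L ∧ c ∉ L ∧
      (∀ x ∈ L, ({w, c, x} : Finset V) ∈ H) ∧ Disjoint (insert c L) U := by
  classical
  set A := H.filter (fun e => w ∈ e) with hA
  set C := A.filter (fun e => ∀ u ∈ U, u ∉ e) with hC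
  -- edges of A meeting U
  have hBsub : A.filter (fun e => ¬ ∀ u ∈ U, u ∉ e) ⊆
      U.biUnion (fun u => H.filter (fun e => w ∈ e ∧ u ∈ e)) := by
    intro e he
    simp only [Finset.mem_filter, hA] at he
    obtain ⟨⟨heH, hwe⟩, hne⟩ := he
    push_neg at hne
    obtain ⟨u, huU, hue⟩ := hne
    exact Finset.mem_biUnion.2 ⟨u, huU, Finset.mem_filter.2 ⟨heH, hwe, hue⟩⟩
  have hBcard : (A.filter (fun e => ¬ ∀ u ∈ U, u ∉ e)).card ≤ U.card * (3 * k * d ^ 2) := by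
    calc (A.filter (fun e => ¬ ∀ u ∈ U, u ∉ e)).card
        ≤ (U.biUnion (fun u => H.filter (fun e => w ∈ e ∧ u ∈ e))).card :=
          Finset.card_le_card hBsub
      _ ≤ ∑ u ∈ U, (H.filter (fun e => w ∈ e ∧ u ∈ e)).card := Finset.card_biUnion_le
      _ ≤ ∑ _u ∈ U, (3 * k * d ^ 2) := by
          apply Finset.sum_le_sum
          intro u huU
          have hne : w ≠ u := fun h => hwU (h ▸ huU)
          exact (hcodeg w u hne).le
      _ = U.card * (3 * k * d ^ 2) := by rw [Finset.sum_const, smul_eq_mul]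
  have hsplit : (A.filter (fun e => ∀ u ∈ U, u ∉ e)).card
      + (A.filter (fun e => ¬ ∀ u ∈ U, u ∉ e)).card = A.card :=
    Finset.card_filter_add_card_filter_not _
  have hCcard : k * n ≤ C.card := by
    have h6 : U.card * (3 * k * d ^ 2) ≤ 6 * (k * n) := by
      have : U.card * (3 * k * d ^ 2) ≤ (2 * k * d) * (3 * k * d ^ 2) :=
        Nat.mul_le_mul_right _ hU
      calc U.card * (3 * k * d ^ 2) ≤ (2 * k * d) * (3 * k * d ^ 2) := this
        _ = 6 * (k * (k * d ^ 3)) := by ring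
        _ = 6 * (k * n) := by rw [hnkd]
    have hw' : 7 * (k * n) ≤ A.card := by
      calc 7 * (k * n) = 7 * k * n := by ring
        _ ≤ A.card := hw
    have hB6 : (A.filter (fun e => ¬ ∀ u ∈ U, u ∉ e)).card ≤ 6 * (k * n) := hBcard.trans h6
    rw [hC]
    omega
  -- every edge of C has card 3, contains w, avoids U, is in H
  have hCe : ∀ e ∈ C, e ∈ H ∧ w ∈ e ∧ e.card = 3 ∧ ∀ u ∈ U, u ∉ e := by
    intro e he
    simp only [hC, hA, Finset.mem_filter] at he
    exact ⟨he.1.1, he.1.2, hunif e he.1.1, he.2⟩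
  -- double counting
  have hsum : ∑ v ∈ Finset.univ.erase w, (C.filter (fun e => v ∈ e)).card = 2 * C.card := by
    have h1 : ∑ v ∈ (Finset.univ : Finset V), (C.filter (fun e => v ∈ e)).card
        = ∑ e ∈ C, e.card := by
      simp only [Finset.card_filter]
      rw [Finset.sum_comm]
      congr 1
      ext e
      simp [Finset.card_filter]
    have h2 : ∑ e ∈ C, e.card = 3 * C.card := by
      rw [Finset.sum_congr rfl (fun e he => (hCe e he).2.2.1), Finset.sum_const,
        smul_eq_mul, mul_comm]
    have h3 : (C.filter (fun e => w ∈ e)) = C := by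
      apply Finset.filter_true_of_mem
      intro e he; exact (hCe e he).2.1
    have h4 : ∑ v ∈ (Finset.univ : Finset V), (C.filter (fun e => v ∈ e)).card
        = (C.filter (fun e => w ∈ e)).card
          + ∑ v ∈ Finset.univ.erase w, (C.filter (fun e => v ∈ e)).card := by
      rw [← Finset.add_sum_erase _ _ (Finset.mem_univ w)]
    rw [h1, h2] at h4
    rw [h3] at h4
    omega
  -- pigeonhole: some vertex c ≠ w has degree ≥ k in C
  have hex : ∃ c ∈ Finset.univ.erase w, k ≤ (C.filter (fun e => c ∈ e)).card := by
    by_contra hcon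
    push_neg at hcon
    have hle : ∑ v ∈ Finset.univ.erase w, (C.filter (fun e => v ∈ e)).card
        ≤ (Finset.univ.erase w).card * (k - 1) := by
      apply Finset.sum_le_card_nsmul
      intro v hv
      have := hcon v hv
      omega
    have hcardE : (Finset.univ.erase w).card = n - 1 := by
      rw [Finset.card_erase_of_mem (Finset.mem_univ w), Finset.card_univ, hn]
    rw [hsum, hcardE] at hle
    have hn1 : 1 ≤ n := by
      rw [hnkd]
      calc (1:ℕ) = 1 * 1 := by ring
        _ ≤ k * d ^ 3 := Nat.mul_le_mul hk (Nat.one_le_pow _ _ hd)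
    obtain ⟨n', rfl⟩ : ∃ n', n = n' + 1 := ⟨n - 1, by omega⟩
    obtain ⟨k', rfl⟩ : ∃ k', k = k' + 1 := ⟨k - 1, by omega⟩
    simp only [Nat.add_sub_cancel] at hle
    nlinarith [hCcard, hle]
  obtain ⟨c, hcw', hck⟩ := hex
  have hcw : c ≠ w := (Finset.mem_erase.1 hcw').1
  set Cc := C.filter (fun e => c ∈ e) with hCc
  -- each e ∈ Cc equals {w, c, x} for its unique third vertex
  have hCce : ∀ e ∈ Cc, ∃ x, e \ {w, c} = {x} ∧ e = {w, c, x} ∧ x ≠ w ∧ x ≠ c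
      ∧ ∀ u ∈ U, u ≠ x := by
    intro e he
    simp only [hCc, Finset.mem_filter] at he
    obtain ⟨heC, hce⟩ := he
    obtain ⟨heH, hwe, hcard, hUe⟩ := hCe e heC
    have hsub : ({w, c} : Finset V) ⊆ e := by
      intro y hy
      simp only [Finset.mem_insert, Finset.mem_singleton] at hy
      rcases hy with rfl | rfl
      · exact hwe
      · exact hce
    have hwc2 : ({w, c} : Finset V).card = 2 := by
      rw [Finset.card_insert_of_notMem (by simp [Ne.symm hcw]), Finset.card_singleton]
    have hsd : (e \ {w, c}).card = 1 := by
      rw [Finset.card_sdiff_of_subset hsub, hwc2, hcard]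
    obtain ⟨x, hx⟩ := Finset.card_eq_one.1 hsd
    have hxe : x ∈ e \ ({w, c} : Finset V) := hx ▸ Finset.mem_singleton_self x
    have hxmem := Finset.mem_sdiff.1 hxe
    have hxw : x ≠ w := fun h => hxmem.2 (by simp [h])
    have hxc : x ≠ c := fun h => hxmem.2 (by simp [h])
    refine ⟨x, hx, ?_, hxw, hxc, fun u hu h => hUe u hu (h ▸ hxmem.1)⟩
    have hsub2 : ({w, c, x} : Finset V) ⊆ e := by
      intro y hy
      simp only [Finset.mem_insert, Finset.mem_singleton] at hy
      rcases hy with rfl | rfl | rfl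
      · exact hwe
      · exact hce
      · exact hxmem.1
    have hc3 : ({w, c, x} : Finset V).card = 3 := by
      rw [Finset.card_insert_of_notMem (by simp [Ne.symm hcw, Ne.symm hxw]),
        Finset.card_insert_of_notMem (by simp [Ne.symm hxc]), Finset.card_singleton]
    exact (Finset.eq_of_subset_of_card_le hsub2 (by omega)).symm
  -- leaf set
  set T := Cc.biUnion (fun e => e \ {w, c}) with hT
  have hTcard : k ≤ T.card := by
    rw [hT, Finset.card_biUnion]
    · calc k ≤ Cc.card := hck
        _ = ∑ e ∈ Cc, 1 := by rw [Finset.sum_const, smul_eq_mul, mul_one]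
        _ ≤ ∑ e ∈ Cc, (e \ {w, c}).card := by
            apply Finset.sum_le_sum
            intro e he
            obtain ⟨x, hx, _⟩ := hCce e he
            rw [hx, Finset.card_singleton]
    · intro e he f hf hef
      obtain ⟨x, hx, hex, _⟩ := hCce e he
      obtain ⟨y, hy, hfy, _⟩ := hCce f hf
      show Disjoint (e \ {w, c}) (f \ {w, c})
      rw [hx, hy, Finset.disjoint_singleton]
      intro hxy
      exact hef (by rw [hex, hfy, hxy])
  obtain ⟨L, hLT, hLcard⟩ := Finset.exists_subset_card_eq hTcard
  have hLprop : ∀ x ∈ L, x ≠ w ∧ x ≠ c ∧ ({w, c, x} : Finset V) ∈ H ∧ ∀ u ∈ U, u ≠ x := by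
    intro x hxL
    obtain ⟨e, heCc, hxe⟩ := Finset.mem_biUnion.1 (hLT hxL)
    obtain ⟨y, hy, hey, hyw, hyc, hyU⟩ := hCce e heCc
    have hxy : x = y := by
      rw [hy] at hxe; exact Finset.mem_singleton.1 hxe
    subst hxy
    refine ⟨hyw, hyc, ?_, hyU⟩
    rw [← hey]
    exact ((hCe e (Finset.mem_filter.1 heCc).1)).1
  have hcU : c ∉ U := by
    have h1 : 1 ≤ Cc.card := le_trans hk hck
    obtain ⟨e, he⟩ := Finset.card_pos.1 h1
    obtain ⟨heC, hce⟩ := Finset.mem_filter.1 he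
    intro hcUmem
    exact (hCe e heC).2.2.2 c hcUmem hce
  refine ⟨c, L, hLcard, ?_, ?_, ?_, ?_⟩
  · simp only [Finset.mem_insert]
    push_neg
    exact ⟨Ne.symm hcw, fun h => (hLprop w h).1 rfl⟩
  · intro h; exact (hLprop c h).2.1 rfl
  · intro x hx; exact (hLprop x hx).2.2.1
  · rw [Finset.disjoint_left]
    intro a ha haU
    rcases Finset.mem_insert.1 ha with rfl | haL
    · exact hcU haU
    · exact (hLprop a haL).2.2.2 a haU rfl
lemma build_lemma {V : Type*} [Fintype V] [DecidableEq V] (n k d : ℕ)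
    (hn : Fintype.card V = n) (hnkd : n = k * d ^ 3) (hk : 1 ≤ k) (hd : 1 ≤ d)
    (H : Finset (Finset V)) (hunif : ∀ e ∈ H, e.card = 3)
    (hcodeg : ∀ u v : V, u ≠ v → (H.filter fun e => u ∈ e ∧ v ∈ e).card < 3 * k * d ^ 2)
    (w : V) (hw : 7 * k * n ≤ (H.filter fun e => w ∈ e).card)
    (m : ℕ) (hm : m ≤ d) :
    ∃ (c : Fin m → V) (L : Fin m → Finset V),
      (∀ i, (L i).card = k ∧ w ∉ insert (c i) (L i) ∧ c i ∉ L i ∧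
        ∀ x ∈ L i, ({w, c i, x} : Finset V) ∈ H) ∧
      ∀ i j, i ≠ j → Disjoint (insert (c i) (L i)) (insert (c j) (L j)) := by
  induction m with
  | zero => exact ⟨Fin.elim0, Fin.elim0, fun i => i.elim0, fun i => i.elim0⟩
  | succ m ih =>
    obtain ⟨c, L, h1, h2⟩ := ih (le_trans (Nat.le_succ m) hm)
    set U : Finset V := Finset.univ.biUnion (fun i : Fin m => insert (c i) (L i)) with hUdef
    have hUcard : U.card ≤ 2 * k * d := by
      calc U.card ≤ ∑ i : Fin m, (insert (c i) (L i)).card := Finset.card_biUnion_le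
        _ ≤ ∑ _i : Fin m, (k + 1) := by
            apply Finset.sum_le_sum
            intro i _
            calc (insert (c i) (L i)).card ≤ (L i).card + 1 := Finset.card_insert_le _ _
              _ = k + 1 := by rw [(h1 i).1]
        _ = m * (k + 1) := by simp [Finset.sum_const, mul_comm]
        _ ≤ 2 * k * d := by nlinarith [hm, hk, hd]
    have hwU : w ∉ U := by
      rw [hUdef]
      simp only [Finset.mem_biUnion, Finset.mem_univ, true_and, not_exists]
      exact fun i => (h1 i).2.1
    obtain ⟨c', L', hL'card, hwL', hc'L', hL'H, hdisjU⟩ :=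
      step_lemma n k d hn hnkd hk hd H hunif hcodeg w hw U hUcard hwU
    refine ⟨Fin.snoc c c', Fin.snoc L L', ?_, ?_⟩
    · intro i
      refine Fin.lastCases ?_ ?_ i
      · simp only [Fin.snoc_last]
        exact ⟨hL'card, hwL', hc'L', hL'H⟩
      · intro j
        simp only [Fin.snoc_castSucc]
        exact h1 j
    · have hsubU : ∀ j : Fin m, insert (c j) (L j) ⊆ U := by
        intro j
        rw [hUdef]
        exact Finset.subset_biUnion_of_mem (fun i : Fin m => insert (c i) (L i)) (Finset.mem_univ j)
      intro i j
      refine Fin.lastCases ?_ ?_ i <;> [skip; intro i']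
      · refine Fin.lastCases ?_ ?_ j <;> [skip; intro j']
        · intro h; exact absurd rfl h
        · intro hne
          simp only [Fin.snoc_last, Fin.snoc_castSucc]
          exact Finset.disjoint_of_subset_right (hsubU j') hdisjU
      · refine Fin.lastCases ?_ ?_ j <;> [skip; intro j']
        · intro hne
          simp only [Fin.snoc_last, Fin.snoc_castSucc]
          exact (Finset.disjoint_of_subset_right (hsubU i') hdisjU).symm
        · intro hne
          simp only [Fin.snoc_castSucc]
          exact h2 i' j' (fun h => hne (by rw [h]))

/-- Let `H` be a 3-uniform hypergraph on `n = k*d^3` vertices in which every pair of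
vertices has codegree less than `3*k*d^2`. Then every vertex `w` of degree at least
`7*k*n` is the centre of a copy of `St₃(d,k)`: the link graph of `w` contains `d`
vertex-disjoint stars `S_k`. -/
theorem stmt_11 {V : Type*} [Fintype V] [DecidableEq V] (n k d : ℕ)
    (hn : Fintype.card V = n) (hnkd : n = k * d ^ 3) (hk : 1 ≤ k) (hd : 1 ≤ d)
    (H : Finset (Finset V)) (hunif : ∀ e ∈ H, e.card = 3)
    (hcodeg : ∀ u v : V, u ≠ v → (H.filter fun e => u ∈ e ∧ v ∈ e).card < 3 * k * d ^ 2)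
    (w : V) (hw : 7 * k * n ≤ (H.filter fun e => w ∈ e).card) :
    ∃ (c : Fin d → V) (L : Fin d → Finset V),
      (∀ i, (L i).card = k ∧ w ∉ insert (c i) (L i) ∧ c i ∉ L i ∧
        ∀ x ∈ L i, ({w, c i, x} : Finset V) ∈ H) ∧
      ∀ i j, i ≠ j → Disjoint (insert (c i) (L i)) (insert (c j) (L j)) :=
  build_lemma n k d hn hnkd hk hd H hunif hcodeg w hw d le_rfl
end

section
/- Let $n, r, s$ be positive integers with $r \ge 2$ and $n \ge 2^{(4s)^{r-1}}$. Let $V_1, \ldots, V_r$ be sets of size $n$ and let $M \subseteq V_1 \times \cdots \times V_r$ with $|M| \ge n^{r - 1/(4s)^{r-1}}$. Then there exist sets $A_i \subseteq V_i$ with $A_1 \times \cdots \times A_r \subseteq M$, $|A_i| = s$ for $1 \le i < r$, and $|A_r| = \lceil\sqrt{n}\rceil$. -/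
open Finset

private lemma kst_count {n s t : ℕ} {β : Type} [Fintype β] [DecidableEq β]
    (M : Finset (Fin n × β))
    (h : t * Nat.choose n s <
      ∑ b : β, Nat.choose (univ.filter (fun a => (a, b) ∈ M)).card s) :
    ∃ S : Finset (Fin n), ∃ T : Finset β, S.card = s ∧ T.card = t ∧
      ∀ a ∈ S, ∀ b ∈ T, (a, b) ∈ M := by
  set N : β → Finset (Fin n) := fun b => univ.filter (fun a => (a, b) ∈ M) with hN
  set P : Finset (Finset (Fin n)) := (univ : Finset (Fin n)).powersetCard s with hP
  have hPcard : P.card = Nat.choose n s := by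
    simp [hP, Finset.card_powersetCard]
  have key : ∑ b : β, Nat.choose (N b).card s
      = ∑ S ∈ P, (univ.filter (fun b => S ⊆ N b)).card := by
    have h1 : ∀ b : β, Nat.choose (N b).card s
        = (P.filter (fun S => S ⊆ N b)).card := by
      intro b
      rw [← Finset.card_powersetCard]
      congr 1
      ext S
      simp only [Finset.mem_powersetCard, Finset.mem_filter, hP]
      exact ⟨fun ⟨h1, h2⟩ => ⟨⟨Finset.subset_univ _, h2⟩, h1⟩, fun ⟨⟨_, h2⟩, h1⟩ => ⟨h1, h2⟩⟩
    simp_rw [h1, Finset.card_filter]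
    exact Finset.sum_comm
  rw [key] at h
  have h2 : ∑ S ∈ P, t < ∑ S ∈ P, (univ.filter (fun b => S ⊆ N b)).card := by
    calc ∑ S ∈ P, t = t * Nat.choose n s := by rw [Finset.sum_const, hPcard, smul_eq_mul, mul_comm]
    _ < _ := h
  obtain ⟨S, hSP, hSt⟩ := Finset.exists_lt_of_sum_lt h2
  obtain ⟨T, hT, hTcard⟩ := Finset.exists_subset_card_eq hSt.le
  refine ⟨S, T, (Finset.mem_powersetCard.mp hSP).2, hTcard, ?_⟩
  intro a ha b hb
  have := hT hb
  simp only [Finset.mem_filter] at this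
  have := this.2 ha
  simp only [hN, Finset.mem_filter] at this
  exact this.2

private lemma cast_sub_ge (a b : ℕ) : (a:ℝ) - b ≤ ((a - b : ℕ) : ℝ) := by
  rcases le_total b a with h | h
  · rw [Nat.cast_sub h]
  · have : a - b = 0 := Nat.sub_eq_zero_of_le h
    rw [this]
    have : (a:ℝ) ≤ b := by exact_mod_cast h
    simpa using by linarith

private lemma box_step {n s t : ℕ} {β : Type} [Fintype β] [DecidableEq β]
    (hs : 1 ≤ s) (M : Finset (Fin n × β))
    (h1 : (s : ℝ) * (Fintype.card β : ℝ) ≤ (M.card : ℝ))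
    (hm : 1 ≤ (Fintype.card β : ℝ))
    (h2 : (t : ℝ) * (n : ℝ) ^ s * (Fintype.card β : ℝ) ^ (s - 1) <
      ((M.card : ℝ) - (s : ℝ) * (Fintype.card β : ℝ)) ^ s) :
    ∃ S : Finset (Fin n), ∃ T : Finset β, S.card = s ∧ T.card = t ∧
      ∀ a ∈ S, ∀ b ∈ T, (a, b) ∈ M := by
  set d : β → ℕ := fun b => (univ.filter (fun a => (a, b) ∈ M)).card with hd
  set m : ℝ := (Fintype.card β : ℝ) with hmdef
  set e : ℝ := (M.card : ℝ) with hedef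
  -- M.card = ∑ d b
  have hsum : M.card = ∑ b : β, d b := by
    rw [Finset.card_eq_sum_card_fiberwise (f := Prod.snd) (t := univ) (fun x _ => mem_univ _)]
    refine Finset.sum_congr rfl fun b _ => ?_
    have hset : M.filter (fun p => p.2 = b)
        = (univ.filter fun a => (a, b) ∈ M).map
          ⟨fun a => (a, b), fun x y h => by simpa using congrArg Prod.fst h⟩ := by
      ext p
      simp only [Finset.mem_filter, Finset.mem_map, Function.Embedding.coeFn_mk, mem_univ,
        true_and]
      constructor
      · rintro ⟨hpM, hpb⟩
        exact ⟨p.1, by rwa [show (p.1, b) = p from Prod.ext rfl hpb.symm],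
          Prod.ext rfl hpb.symm⟩
      · rintro ⟨a, haM, rfl⟩
        exact ⟨haM, rfl⟩
    rw [hset, Finset.card_map]
  -- the counting inequality over ℝ
  apply kst_count M
  have hfact : (0:ℝ) < (Nat.factorial s : ℝ) := by positivity
  have hg : ∀ b : β, ((d b + 1 - s : ℕ) : ℝ) ^ s ≤ (Nat.factorial s : ℝ) * (Nat.choose (d b) s : ℝ) := by
    intro b
    have := Nat.pow_sub_le_descFactorial (d b) s
    rw [Nat.descFactorial_eq_factorial_mul_choose] at this
    exact_mod_cast this
  -- sum of g ≥ e - s*m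
  have hgsum : e - s * m ≤ ∑ b : β, ((d b + 1 - s : ℕ) : ℝ) := by
    have : ∀ b : β, (d b : ℝ) + 1 - s ≤ ((d b + 1 - s : ℕ) : ℝ) := by
      intro b
      have := cast_sub_ge (d b + 1) s
      push_cast at this ⊢
      linarith
    have hA : ∑ b : β, ((d b : ℝ) + 1 - s) = e + m - m * s := by
      rw [Finset.sum_sub_distrib, Finset.sum_add_distrib, Finset.sum_const, Finset.sum_const,
        Finset.card_univ]
      push_cast [hsum, hedef, hmdef]
      ring
    have hB : ∑ b : β, ((d b : ℝ) + 1 - s) ≤ ∑ b : β, ((d b + 1 - s : ℕ) : ℝ) :=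
      Finset.sum_le_sum fun b _ => this b
    have hm0 : (0:ℝ) ≤ m := by linarith
    have hs1 : (1:ℝ) ≤ (s:ℝ) := by exact_mod_cast hs
    nlinarith [hB, hA]
  have hgnonneg : (0:ℝ) ≤ e - s * m := by linarith
  -- Jensen
  have hJ : (∑ b : β, ((d b + 1 - s : ℕ) : ℝ)) ^ s / m ^ (s - 1) ≤
      ∑ b : β, ((d b + 1 - s : ℕ) : ℝ) ^ s := by
    have := pow_sum_div_card_le_sum_pow (s := (univ : Finset β))
      (f := fun b => ((d b + 1 - s : ℕ) : ℝ)) (fun i _ => by positivity) (s - 1)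
    rwa [Finset.card_univ, Nat.sub_add_cancel hs, ← hmdef] at this
  have hmpow : (0:ℝ) < m ^ (s - 1) := by positivity
  have key : (e - s * m) ^ s ≤ (Nat.factorial s : ℝ) * m ^ (s-1) * ∑ b : β, (Nat.choose (d b) s : ℝ) := by
    calc (e - s * m) ^ s ≤ (∑ b : β, ((d b + 1 - s : ℕ) : ℝ)) ^ s :=
          pow_le_pow_left₀ hgnonneg hgsum s
      _ ≤ m ^ (s-1) * ∑ b : β, ((d b + 1 - s : ℕ) : ℝ) ^ s := by
          rw [← div_le_iff₀' hmpow]; exact hJ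
      _ ≤ m ^ (s-1) * ∑ b : β, (Nat.factorial s : ℝ) * (Nat.choose (d b) s : ℝ) := by
          apply mul_le_mul_of_nonneg_left _ hmpow.le
          exact Finset.sum_le_sum fun b _ => hg b
      _ = (Nat.factorial s : ℝ) * m ^ (s-1) * ∑ b : β, (Nat.choose (d b) s : ℝ) := by
          rw [← Finset.mul_sum]; ring
  -- left side
  have hleft : (t : ℝ) * (Nat.choose n s : ℝ) * (Nat.factorial s : ℝ) ≤ (t:ℝ) * (n:ℝ) ^ s := by
    have := Nat.choose_le_pow_div (α := ℝ) s n
    rw [le_div_iff₀ hfact] at this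
    calc (t : ℝ) * (Nat.choose n s : ℝ) * (Nat.factorial s : ℝ)
        = (t:ℝ) * ((Nat.choose n s : ℝ) * (Nat.factorial s : ℝ)) := by ring
      _ ≤ (t:ℝ) * (n:ℝ)^s := by
          apply mul_le_mul_of_nonneg_left _ (by positivity)
          exact_mod_cast this
  have final : (t : ℝ) * (Nat.choose n s : ℝ) < ∑ b : β, (Nat.choose (d b) s : ℝ) := by
    rw [← mul_lt_mul_iff_of_pos_right (by positivity : (0:ℝ) < (Nat.factorial s : ℝ) * m ^ (s-1))]
    calc (t : ℝ) * (Nat.choose n s : ℝ) * ((Nat.factorial s : ℝ) * m ^ (s-1))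
        = ((t : ℝ) * (Nat.choose n s : ℝ) * (Nat.factorial s : ℝ)) * m ^ (s-1) := by ring
      _ ≤ (t:ℝ) * (n:ℝ)^s * m ^ (s-1) := by
          apply mul_le_mul_of_nonneg_right hleft hmpow.le
      _ < (e - s * m) ^ s := h2
      _ ≤ (Nat.factorial s : ℝ) * m ^ (s-1) * ∑ b : β, (Nat.choose (d b) s : ℝ) := key
      _ = (∑ b : β, (Nat.choose (d b) s : ℝ)) * ((Nat.factorial s : ℝ) * m ^ (s-1)) := by ring
  exact_mod_cast final

private lemma two_le_rpow_inv {x : ℝ} {c : ℕ} (hc : 0 < c) (hx : (2:ℝ) ^ c ≤ x) :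
    (2:ℝ) ≤ x ^ (((c:ℕ):ℝ))⁻¹ := by
  have h2 : ((2:ℝ) ^ c) ^ (((c:ℕ):ℝ))⁻¹ = 2 := by
    rw [← Real.rpow_natCast 2 c, ← Real.rpow_mul (by norm_num),
      mul_inv_cancel₀ (by exact_mod_cast hc.ne'), Real.rpow_one]
  calc (2:ℝ) = ((2:ℝ) ^ c) ^ (((c:ℕ):ℝ))⁻¹ := h2.symm
    _ ≤ x ^ (((c:ℕ):ℝ))⁻¹ := Real.rpow_le_rpow (by positivity) hx (by positivity)

private lemma pow_two_le_rpow {x : ℝ} {a : ℝ} (hx : 0 < x) (h : (2:ℝ) ≤ x ^ a) (j : ℕ) :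
    (2:ℝ) ^ j ≤ x ^ ((j:ℝ) * a) := by
  calc (2:ℝ) ^ j ≤ (x ^ a) ^ j := pow_le_pow_left₀ (by norm_num) h j
    _ = x ^ (a * (j:ℝ)) := by rw [Real.rpow_mul hx.le, Real.rpow_natCast]
    _ = x ^ ((j:ℝ) * a) := by rw [mul_comm]

private lemma four_s_le_eight_pow (s : ℕ) : (4 * s : ℕ) ≤ 8 ^ s := by
  induction s with
  | zero => norm_num
  | succ s ih =>
    have : 8 ^ s ≥ 1 := Nat.one_le_pow _ _ (by norm_num)
    calc 4 * (s + 1) = 4 * s + 4 := by ring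
      _ ≤ 8 ^ s + 4 := by omega
      _ ≤ 8 ^ s + 7 * 8 ^ s := by omega
      _ = 8 ^ (s + 1) := by ring

/-- The main analytic reduction for applying `box_step`. -/
private lemma h2_reduce {x : ℝ} (hx : 1 < x) {s t : ℕ} {k : ℝ} (hs : 1 ≤ s) {e ε : ℝ} (hε : 0 ≤ ε)
    (he : x ^ (k + 2 - ε) ≤ e)
    (hsm : (s:ℝ) * x ^ (k + 1) ≤ (1/4) * x ^ (k + 2 - ε))
    (ht : (t:ℝ) < (3/4) ^ s * x ^ (k + 1 - (s:ℝ) * ε)) :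
    (t:ℝ) * x ^ s * (x ^ (k + 1)) ^ (s - 1) < (e - (s:ℝ) * x ^ (k + 1)) ^ s := by
  have hx0 : (0:ℝ) < x := lt_trans one_pos hx
  set E : ℝ := x ^ (k + 2 - ε) with hE
  have hE0 : 0 < E := Real.rpow_pos_of_pos hx0 _
  have hA : (3/4) * E ≤ e - (s:ℝ) * x ^ (k + 1) := by linarith
  have hL : (t:ℝ) * x ^ s * (x ^ (k + 1)) ^ (s - 1)
      = (t:ℝ) * x ^ ((s:ℝ) + (k + 1) * ((s:ℝ) - 1)) := by
    rw [← Real.rpow_natCast x s, ← Real.rpow_natCast (x ^ (k+1)) (s-1),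
      ← Real.rpow_mul hx0.le, Nat.cast_sub hs, Nat.cast_one, mul_assoc, ← Real.rpow_add hx0]
  have hR : ((3/4) * E) ^ s = (3/4) ^ s * x ^ ((k + 2 - ε) * (s:ℝ)) := by
    rw [mul_pow, hE, ← Real.rpow_natCast (x ^ (k + 2 - ε)) s, ← Real.rpow_mul hx0.le]
  have hmain : (t:ℝ) * x ^ ((s:ℝ) + (k + 1) * ((s:ℝ) - 1))
      < (3/4) ^ s * x ^ ((k + 2 - ε) * (s:ℝ)) := by
    have hP : (0:ℝ) < x ^ ((s:ℝ) + (k + 1) * ((s:ℝ) - 1)) := Real.rpow_pos_of_pos hx0 _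
    have := mul_lt_mul_of_pos_right ht hP
    calc (t:ℝ) * x ^ ((s:ℝ) + (k + 1) * ((s:ℝ) - 1)) <
        (3/4) ^ s * x ^ (k + 1 - (s:ℝ) * ε) * x ^ ((s:ℝ) + (k + 1) * ((s:ℝ) - 1)) := this
      _ = (3/4) ^ s * x ^ ((k + 2 - ε) * (s:ℝ)) := by
          rw [mul_assoc, ← Real.rpow_add hx0]
          ring_nf
  calc (t:ℝ) * x ^ s * (x ^ (k + 1)) ^ (s - 1)
      = (t:ℝ) * x ^ ((s:ℝ) + (k + 1) * ((s:ℝ) - 1)) := hL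
    _ < (3/4) ^ s * x ^ ((k + 2 - ε) * (s:ℝ)) := hmain
    _ = ((3/4) * E) ^ s := hR.symm
    _ ≤ (e - (s:ℝ) * x ^ (k + 1)) ^ s := pow_le_pow_left₀ (by positivity) hA s

private lemma rpow_quarter {x : ℝ} {s : ℕ} (hx : (2:ℝ) ^ (4 * s) ≤ x) :
    (2:ℝ) ^ s ≤ x ^ ((1:ℝ)/4) := by
  have hx0 : (0:ℝ) ≤ x := le_trans (by positivity) hx
  have key : ((2:ℝ) ^ (4 * s)) ^ ((1:ℝ)/4) = 2 ^ s := by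
    rw [← Real.rpow_natCast 2 (4 * s), ← Real.rpow_mul (by norm_num),
      ← Real.rpow_natCast 2 s]
    congr 1
    push_cast
    ring
  rw [← key]
  exact Real.rpow_le_rpow (by positivity) hx (by norm_num)

private lemma hsm_of {x : ℝ} {s : ℕ} {k : ℝ} (hs : 1 ≤ s) (hx1 : 1 < x)
    (hx4 : (2:ℝ) ^ (4 * s) ≤ x) {ε : ℝ} (hε4 : ε ≤ 1/4) :
    (s:ℝ) * x ^ (k + 1) ≤ (1/4) * x ^ (k + 2 - ε) := by
  have hx0 : (0:ℝ) < x := lt_trans one_pos hx1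
  have hsplit : x ^ (k + 2 - ε) = x ^ (k + 1) * x ^ ((1:ℝ) - ε) := by
    rw [← Real.rpow_add hx0]; ring_nf
  have h8 : ((8:ℝ)) ^ s ≤ x ^ ((3:ℝ)/4) := by
    have h14 := rpow_quarter hx4
    calc ((8:ℝ)) ^ s = ((2:ℝ) ^ s) ^ 3 := by
          rw [← pow_mul, mul_comm s 3, pow_mul]; norm_num
      _ ≤ (x ^ ((1:ℝ)/4)) ^ 3 := pow_le_pow_left₀ (by positivity) h14 3
      _ = x ^ ((3:ℝ)/4) := by
          rw [← Real.rpow_natCast (x ^ ((1:ℝ)/4)) 3, ← Real.rpow_mul hx0.le]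
          norm_num
  have h4s : (4:ℝ) * s ≤ x ^ ((1:ℝ) - ε) := by
    have h1 : ((4 * s : ℕ) : ℝ) ≤ ((8 ^ s : ℕ) : ℝ) := by
      exact_mod_cast four_s_le_eight_pow s
    have h2 : x ^ ((3:ℝ)/4) ≤ x ^ ((1:ℝ) - ε) :=
      Real.rpow_le_rpow_of_exponent_le hx1.le (by linarith)
    push_cast at h1
    linarith
  have hxk : (0:ℝ) < x ^ (k + 1) := Real.rpow_pos_of_pos hx0 _
  rw [hsplit]
  calc (s:ℝ) * x ^ (k + 1) = (1/4) * (x ^ (k + 1) * ((4:ℝ) * s)) := by ring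
    _ ≤ (1/4) * (x ^ (k + 1) * x ^ ((1:ℝ) - ε)) := by
        have := mul_le_mul_of_nonneg_left h4s hxk.le
        linarith

set_option maxHeartbeats 1000000 in
private lemma aux (s : ℕ) (hs : 1 ≤ s) :
    ∀ (k n : ℕ), 2 ^ ((4 * s) ^ (k + 1)) ≤ n →
    ∀ M : Finset (Fin (k + 2) → Fin n),
    (n:ℝ) ^ ((k:ℝ) + 2 - (((4 * s : ℕ) : ℝ) ^ (k + 1))⁻¹) ≤ (M.card : ℝ) →
    ∃ A : Fin (k + 2) → Finset (Fin n),
      (∀ f : Fin (k + 2) → Fin n, (∀ i, f i ∈ A i) → f ∈ M) ∧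
      (∀ i : Fin (k + 2), (i : ℕ) < k + 1 → (A i).card = s) ∧
      (A (Fin.last (k + 1))).card = ⌈Real.sqrt n⌉₊ := by
  have hc0 : (0:ℝ) < ((4 * s : ℕ) : ℝ) := by
    have : 0 < 4 * s := by omega
    exact_mod_cast this
  intro k
  induction k with
  | zero =>
    intro n hn M hM
    set x : ℝ := (n:ℝ) with hxdef
    have hnn : (2:ℕ) ^ (4 * s) ≤ n := by simpa using hn
    have hx4 : (2:ℝ) ^ (4 * s) ≤ x := by rw [hxdef]; exact_mod_cast hnn
    have hx1 : (1:ℝ) < x := by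
      have h1 : (2:ℝ) = 2 ^ 1 := (pow_one 2).symm
      have h2 : (2:ℝ) ^ 1 ≤ 2 ^ (4 * s) := pow_le_pow_right₀ (by norm_num) (by omega)
      linarith
    have hx0 : (0:ℝ) < x := lt_trans one_pos hx1
    set ε : ℝ := (((4 * s : ℕ) : ℝ) ^ (0 + 1))⁻¹ with hεdef
    have hε0 : 0 ≤ ε := by rw [hεdef]; positivity
    have hε4 : ε ≤ 1/4 := by
      rw [hεdef, pow_one]
      rw [show (1:ℝ)/4 = ((4:ℝ))⁻¹ by norm_num]
      apply inv_anti₀ (by norm_num)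
      exact_mod_cast (by omega : 4 ≤ 4 * s)
    -- transfer to the product
    set E : (Fin (0 + 2) → Fin n) ≃ Fin n × (Fin 1 → Fin n) :=
      (Fin.consEquiv (fun _ : Fin (0 + 2) => Fin n)).symm with hEdef
    set M' : Finset (Fin n × (Fin 1 → Fin n)) := M.map E.toEmbedding with hM'def
    have hmem : ∀ (a : Fin n) (g : Fin 1 → Fin n), (a, g) ∈ M' ↔ Fin.cons a g ∈ M := by
      intro a g
      rw [hM'def, Finset.mem_map_equiv, hEdef, Equiv.symm_symm]
      exact Iff.rfl
    have hcardM' : (M'.card : ℝ) = (M.card : ℝ) := by rw [hM'def, Finset.card_map]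
    have hcast : ((Fintype.card (Fin 1 → Fin n)) : ℝ) = x ^ ((0:ℝ) + 1) := by
      have h1 : Fintype.card (Fin 1 → Fin n) = n ^ 1 := by simp
      rw [h1, show ((0:ℝ) + 1) = ((1:ℕ):ℝ) by norm_num, Real.rpow_natCast]
      push_cast
      ring
    have hsm : (s:ℝ) * x ^ ((0:ℝ) + 1) ≤ (1/4) * x ^ ((0:ℝ) + 2 - ε) :=
      hsm_of (k := (0:ℝ)) hs hx1 hx4 hε4
    have he : x ^ ((0:ℝ) + 2 - ε) ≤ (M'.card : ℝ) := by
      rw [hcardM']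
      convert hM using 3
      norm_num
    have hEpos : (0:ℝ) < x ^ ((0:ℝ) + 2 - ε) := Real.rpow_pos_of_pos hx0 _
    -- the target size
    set t : ℕ := ⌈Real.sqrt n⌉₊ with htdef
    have ht : (t:ℝ) < (3/4) ^ s * x ^ ((0:ℝ) + 1 - (s:ℝ) * ε) := by
      have hsε : (s:ℝ) * ε = 1/4 := by
        rw [hεdef, pow_one]
        have hs0 : (s:ℝ) ≠ 0 := by positivity
        push_cast
        field_simp
      rw [show (0:ℝ) + 1 - (s:ℝ) * ε = 3/4 by rw [hsε]; norm_num]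
      have h14 : (2:ℝ) ^ s ≤ x ^ ((1:ℝ)/4) := rpow_quarter hx4
      have h2s : (2:ℝ) ≤ (2:ℝ) ^ s := by
        calc (2:ℝ) = 2 ^ 1 := (pow_one 2).symm
          _ ≤ 2 ^ s := pow_le_pow_right₀ (by norm_num) hs
      have h12 : (2:ℝ) ≤ x ^ ((1:ℝ)/2) := by
        have := Real.rpow_le_rpow_of_exponent_le hx1.le (by norm_num : (1:ℝ)/4 ≤ 1/2)
        linarith
      have hsq : Real.sqrt (n:ℝ) = x ^ ((1:ℝ)/2) := by rw [hxdef, Real.sqrt_eq_rpow]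
      have hceil : (t:ℝ) < x ^ ((1:ℝ)/2) + 1 := by
        rw [htdef, ← hsq]
        exact Nat.ceil_lt_add_one (Real.sqrt_nonneg _)
      have hsplit : x ^ ((3:ℝ)/4) = x ^ ((1:ℝ)/4) * x ^ ((1:ℝ)/2) := by
        rw [← Real.rpow_add hx0]; norm_num
      have h32 : (3/2:ℝ) ≤ (3/4) ^ s * 2 ^ s := by
        have : ((3:ℝ)/4) ^ s * 2 ^ s = (3/2) ^ s := by
          rw [← mul_pow]; norm_num
        rw [this]
        calc (3/2:ℝ) = (3/2) ^ 1 := (pow_one _).symm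
          _ ≤ (3/2) ^ s := pow_le_pow_right₀ (by norm_num) hs
      have hxp : (0:ℝ) ≤ x ^ ((1:ℝ)/2) := (Real.rpow_pos_of_pos hx0 _).le
      calc (t:ℝ) < x ^ ((1:ℝ)/2) + 1 := hceil
        _ ≤ (3/2) * x ^ ((1:ℝ)/2) := by linarith
        _ ≤ ((3/4) ^ s * 2 ^ s) * x ^ ((1:ℝ)/2) := mul_le_mul_of_nonneg_right h32 hxp
        _ ≤ ((3/4) ^ s * x ^ ((1:ℝ)/4)) * x ^ ((1:ℝ)/2) := by
            have h34 : (0:ℝ) ≤ (3/4:ℝ) ^ s := by positivity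
            have := mul_le_mul_of_nonneg_left h14 h34
            exact mul_le_mul_of_nonneg_right this hxp
        _ = (3/4) ^ s * x ^ ((3:ℝ)/4) := by rw [hsplit]; ring
    -- apply box_step
    obtain ⟨S, T, hScard, hTcard, hST⟩ := box_step (t := t) hs M'
      (by rw [hcast]
          have hp := Real.rpow_pos_of_pos hx0 ((0:ℝ) + 2 - ε)
          set Y : ℝ := x ^ ((0:ℝ) + 2 - ε) with hY
          set Z : ℝ := x ^ ((0:ℝ) + 1) with hZ
          linarith [hsm, he, hp])
      (by rw [hcast, show ((0:ℝ) + 1) = (1:ℝ) by norm_num, Real.rpow_one]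
          linarith)
      (by rw [hcast]
          exact h2_reduce hx1 hs hε0 he hsm ht)
    -- build the box
    refine ⟨Fin.cons S (fun _ => T.image (fun g => g 0)), ?_, ?_, ?_⟩
    · intro f hf
      have h0 : f 0 ∈ S := by have := hf 0; rwa [Fin.cons_zero] at this
      have h1 : f 1 ∈ T.image (fun g => g 0) := by
        have := hf 1
        rwa [show (1 : Fin 2) = Fin.succ 0 from rfl, Fin.cons_succ] at this
      obtain ⟨g, hgT, hg0⟩ := Finset.mem_image.mp h1
      have hfM : Fin.cons (f 0) g ∈ M := (hmem _ _).mp (hST (f 0) h0 g hgT)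
      have hfg : Fin.cons (f 0) g = f := by
        funext i
        refine Fin.cases ?_ ?_ i
        · rw [Fin.cons_zero]
        · intro j
          rw [Fin.cons_succ]
          have hj : j = 0 := Subsingleton.elim j 0
          subst hj
          exact hg0
      rwa [hfg] at hfM
    · intro i hi
      have hival : (i : ℕ) = 0 := by omega
      have : i = 0 := Fin.ext (by simpa using hival)
      subst this
      rw [Fin.cons_zero]
      exact hScard
    · rw [show Fin.last 1 = Fin.succ 0 from rfl, Fin.cons_succ]
      have hinj : Function.Injective (fun g : Fin 1 → Fin n => g 0) := by
        intro a b hab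
        funext j
        have : j = 0 := Subsingleton.elim j 0
        subst this
        exact hab
      rw [Finset.card_image_of_injective _ hinj]
      exact hTcard
  | succ k ih =>
    intro n hn M hM
    set x : ℝ := (n:ℝ) with hxdef
    have h4s1 : 1 ≤ 4 * s := by omega
    have hnn : (2:ℕ) ^ (4 * s) ≤ n := by
      calc (2:ℕ) ^ (4 * s) = 2 ^ ((4*s)^1) := by norm_num
        _ ≤ 2 ^ ((4*s)^(k+1+1)) := Nat.pow_le_pow_right (by norm_num)
            (Nat.pow_le_pow_right h4s1 (by omega))
        _ ≤ n := hn
    have hn' : 2 ^ ((4 * s) ^ (k + 1)) ≤ n := by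
      calc 2 ^ ((4*s)^(k+1)) ≤ 2 ^ ((4*s)^(k+1+1)) := Nat.pow_le_pow_right (by norm_num)
            (Nat.pow_le_pow_right h4s1 (by omega))
        _ ≤ n := hn
    have hx4 : (2:ℝ) ^ (4 * s) ≤ x := by rw [hxdef]; exact_mod_cast hnn
    have hx1 : (1:ℝ) < x := by
      have h1 : (2:ℝ) = 2 ^ 1 := (pow_one 2).symm
      have h2 : (2:ℝ) ^ 1 ≤ 2 ^ (4 * s) := pow_le_pow_right₀ (by norm_num) (by omega)
      linarith
    have hx0 : (0:ℝ) < x := lt_trans one_pos hx1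
    set c : ℝ := ((4 * s : ℕ) : ℝ) with hcdef
    set ε : ℝ := (c ^ (k + 2))⁻¹ with hεdef
    set δ : ℝ := (c ^ (k + 1))⁻¹ with hδdef
    have hc1 : (1:ℝ) ≤ c := by rw [hcdef]; exact_mod_cast h4s1
    have hε0 : 0 ≤ ε := by rw [hεdef]; positivity
    have hε4 : ε ≤ 1/4 := by
      rw [hεdef, show (1:ℝ)/4 = ((4:ℝ))⁻¹ by norm_num]
      apply inv_anti₀ (by norm_num)
      calc (4:ℝ) ≤ c := by rw [hcdef]; exact_mod_cast (by omega : 4 ≤ 4 * s)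
        _ = c ^ 1 := (pow_one c).symm
        _ ≤ c ^ (k+2) := pow_le_pow_right₀ hc1 (by omega)
    have hδ1 : δ ≤ 1 := by
      rw [hδdef]
      apply inv_le_one_of_one_le₀
      calc (1:ℝ) = 1 ^ (k+1) := (one_pow _).symm
        _ ≤ c ^ (k+1) := pow_le_pow_left₀ (by norm_num) hc1 _
    have hδε : δ = c * ε := by
      rw [hδdef, hεdef, pow_succ, mul_inv]
      have hck : c ^ (k+1) ≠ 0 := by positivity
      have hcne : c ≠ 0 := by positivity
      field_simp
      ring
    -- transfer to the product
    set E : (Fin (k + 1 + 2) → Fin n) ≃ Fin n × (Fin (k + 2) → Fin n) :=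
      (Fin.consEquiv (fun _ : Fin (k + 1 + 2) => Fin n)).symm with hEdef
    set M' : Finset (Fin n × (Fin (k + 2) → Fin n)) := M.map E.toEmbedding with hM'def
    have hmem : ∀ (a : Fin n) (g : Fin (k + 2) → Fin n),
        (a, g) ∈ M' ↔ Fin.cons a g ∈ M := by
      intro a g
      rw [hM'def, Finset.mem_map_equiv, hEdef, Equiv.symm_symm]
      exact Iff.rfl
    have hcardM' : (M'.card : ℝ) = (M.card : ℝ) := by rw [hM'def, Finset.card_map]
    have hcast : ((Fintype.card (Fin (k + 2) → Fin n)) : ℝ) = x ^ (((k:ℝ) + 1) + 1) := by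
      have h1 : Fintype.card (Fin (k + 2) → Fin n) = n ^ (k + 2) := by simp
      rw [h1, show (((k:ℝ) + 1) + 1) = (((k + 2 : ℕ)):ℝ) by push_cast; ring,
        Real.rpow_natCast]
      push_cast
      ring
    have hsm : (s:ℝ) * x ^ (((k:ℝ) + 1) + 1) ≤ (1/4) * x ^ (((k:ℝ) + 1) + 2 - ε) :=
      hsm_of (k := (k:ℝ) + 1) hs hx1 hx4 hε4
    have he : x ^ (((k:ℝ) + 1) + 2 - ε) ≤ (M'.card : ℝ) := by
      rw [hcardM']
      have : ((k + 1 : ℕ) : ℝ) + 2 - (((4 * s : ℕ) : ℝ) ^ (k + 1 + 1))⁻¹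
          = ((k:ℝ) + 1) + 2 - ε := by
        rw [hεdef, hcdef]
        push_cast
        ring_nf
      rw [← this]
      exact hM
    -- the target size
    set t : ℕ := ⌈x ^ ((k:ℝ) + 2 - δ)⌉₊ with htdef
    have h2ε : (2:ℝ) ≤ x ^ ε := by
      have hc' : (0:ℕ) < (4 * s) ^ (k + 2) := Nat.pow_pos (by omega)
      have hxc : (2:ℝ) ^ ((4 * s) ^ (k + 2)) ≤ x := by
        rw [hxdef]; exact_mod_cast hn
      have := two_le_rpow_inv hc' hxc
      have hcasteq : ((((4 * s) ^ (k + 2) : ℕ) : ℝ))⁻¹ = ε := by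
        rw [hεdef, hcdef]; push_cast; ring
      rwa [hcasteq] at this
    have ht : (t:ℝ) < (3/4) ^ s * x ^ (((k:ℝ) + 1) + 1 - (s:ℝ) * ε) := by
      have h8s : (8:ℝ) ^ s ≤ x ^ ((3 * (s:ℝ)) * ε) := by
        have := pow_two_le_rpow hx0 h2ε (3 * s)
        have hpoweq : ((2:ℝ)) ^ (3 * s) = 8 ^ s := by
          rw [pow_mul]; norm_num
        rw [hpoweq] at this
        convert this using 2
        push_cast
        ring
      have hone : (1:ℝ) ≤ x ^ ((k:ℝ) + 2 - δ) :=
        Real.one_le_rpow hx1.le (by linarith)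
      have hceil : (t:ℝ) < x ^ ((k:ℝ) + 2 - δ) + 1 :=
        Nat.ceil_lt_add_one (Real.rpow_nonneg hx0.le _)
      have hsplit : x ^ (((k:ℝ) + 1) + 1 - (s:ℝ) * ε)
          = x ^ ((3 * (s:ℝ)) * ε) * x ^ ((k:ℝ) + 2 - δ) := by
        rw [← Real.rpow_add hx0]
        congr 1
        rw [hδε, hcdef]
        push_cast
        ring
      have h6 : (6:ℝ) ≤ (3/4) ^ s * x ^ ((3 * (s:ℝ)) * ε) := by
        have h68 : ((3:ℝ)/4) ^ s * 8 ^ s = 6 ^ s := by rw [← mul_pow]; norm_num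
        have h61 : (6:ℝ) ≤ 6 ^ s := by
          calc (6:ℝ) = 6 ^ 1 := (pow_one _).symm
            _ ≤ 6 ^ s := pow_le_pow_right₀ (by norm_num) hs
        have h34 : (0:ℝ) ≤ ((3:ℝ)/4) ^ s := by positivity
        calc (6:ℝ) ≤ 6 ^ s := h61
          _ = (3/4) ^ s * 8 ^ s := h68.symm
          _ ≤ (3/4) ^ s * x ^ ((3 * (s:ℝ)) * ε) := mul_le_mul_of_nonneg_left h8s h34
      calc (t:ℝ) < x ^ ((k:ℝ) + 2 - δ) + 1 := hceil
        _ ≤ 2 * x ^ ((k:ℝ) + 2 - δ) := by linarith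
        _ ≤ ((3/4) ^ s * x ^ ((3 * (s:ℝ)) * ε)) * x ^ ((k:ℝ) + 2 - δ) := by
            apply mul_le_mul_of_nonneg_right (by linarith)
              (Real.rpow_nonneg hx0.le _)
        _ = (3/4) ^ s * x ^ (((k:ℝ) + 1) + 1 - (s:ℝ) * ε) := by
            rw [hsplit]; ring
    -- apply box_step
    obtain ⟨S, T, hScard, hTcard, hST⟩ := box_step (t := t) hs M'
      (by rw [hcast]
          have hp := Real.rpow_pos_of_pos hx0 (((k:ℝ) + 1) + 2 - ε)
          set Y : ℝ := x ^ (((k:ℝ) + 1) + 2 - ε) with hY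
          set Z : ℝ := x ^ (((k:ℝ) + 1) + 1) with hZ
          linarith [hsm, he, hp])
      (by rw [hcast]
          exact Real.one_le_rpow hx1.le (by positivity))
      (by rw [hcast]
          exact h2_reduce (k := (k:ℝ) + 1) hx1 hs hε0 he hsm ht)
    -- apply the induction hypothesis to T
    have hT' : (n:ℝ) ^ ((k:ℝ) + 2 - (((4 * s : ℕ) : ℝ) ^ (k + 1))⁻¹) ≤ (T.card : ℝ) := by
      rw [hTcard]
      exact Nat.le_ceil _
    obtain ⟨A', hbox', hAs', hAlast'⟩ := ih n hn' T hT'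
    refine ⟨Fin.cons S A', ?_, ?_, ?_⟩
    · intro f hf
      have h0 : f 0 ∈ S := by have := hf 0; rwa [Fin.cons_zero] at this
      have htail : ∀ i, Fin.tail f i ∈ A' i := by
        intro i
        have := hf i.succ
        rwa [Fin.cons_succ] at this
      have hTf : Fin.tail f ∈ T := hbox' _ htail
      have := (hmem (f 0) (Fin.tail f)).mp (hST (f 0) h0 (Fin.tail f) hTf)
      rwa [Fin.cons_self_tail] at this
    · intro i hi
      refine Fin.cases ?_ ?_ i hi
      · intro _
        rw [Fin.cons_zero]
        exact hScard
      · intro j hj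
        rw [Fin.cons_succ]
        exact hAs' j (by simpa using hj)
    · rw [show Fin.last (k + 1 + 1) = Fin.succ (Fin.last (k + 1)) from (Fin.succ_last _).symm,
        Fin.cons_succ]
      exact hAlast'

/-- An `r`-partite Kővári–Sós–Turán-type lemma: if `r ≥ 2`, `n ≥ 2^((4s)^(r-1))`
and `M ⊆ V₁ × ⋯ × V_r` (each `Vᵢ` of size `n`) has at least
`n^(r - 1/(4s)^(r-1))` elements, then `M` contains a combinatorial box
`A₁ × ⋯ × A_r` with `|Aᵢ| = s` for `i < r` and `|A_r| = ⌈√n⌉`. -/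
theorem stmt_14 (n r s : ℕ) (hr : 2 ≤ r) (hs : 1 ≤ s)
    (hn : 2 ^ ((4 * s) ^ (r - 1)) ≤ n)
    (M : Finset (Fin r → Fin n))
    (hM : (n : ℝ) ^ ((r : ℝ) - 1 / ((4 * s : ℝ)) ^ (r - 1)) ≤ (M.card : ℝ)) :
    ∃ A : Fin r → Finset (Fin n),
      (∀ f : Fin r → Fin n, (∀ i, f i ∈ A i) → f ∈ M) ∧
      (∀ i : Fin r, (i : ℕ) < r - 1 → (A i).card = s) ∧
      (A ⟨r - 1, by omega⟩).card = ⌈Real.sqrt n⌉₊ := by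
  obtain ⟨ℓ, rfl⟩ : ∃ ℓ, r = ℓ + 2 := ⟨r - 2, by omega⟩
  have hidx0 : ℓ + 2 - 1 = ℓ + 1 := by omega
  have hn' : 2 ^ ((4 * s) ^ (ℓ + 1)) ≤ n := by rwa [hidx0] at hn
  have hM' : (n:ℝ) ^ ((ℓ:ℝ) + 2 - (((4 * s : ℕ) : ℝ) ^ (ℓ + 1))⁻¹) ≤ (M.card : ℝ) := by
    rw [hidx0] at hM
    convert hM using 2
    push_cast
    ring
  obtain ⟨A, hbox, hcards, hlast⟩ := aux s hs ℓ n hn' M hM'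
  refine ⟨A, hbox, ?_, ?_⟩
  · intro i hi
    exact hcards i (by omega)
  · have hidx : (⟨ℓ + 2 - 1, by omega⟩ : Fin (ℓ + 2)) = Fin.last (ℓ + 1) := by
      apply Fin.ext
      simp [Fin.last]
    rw [hidx]
    exact hlast
end

section
/- For $1 \le e \le cn^2$ with $c > 0$ a sufficiently small constant and $n$ large, every $(n,e)$-unavoidable $4$-uniform hypergraph consists of exactly one edge. In particular $\mathrm{un}_4(n,e) = 1$ in this range. -/
section Aux

variable {n m : ℕ} [NeZero m]

/-- The vertex of the linear host graph indexed by `(z, j)`. -/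
def vtx (hm : 4 * m ≤ n) (z : ZMod m) (j : Fin 4) : Fin n :=
  ⟨z.val + j.val * m, by
    have h1 := ZMod.val_lt z
    have h2 : j.val ≤ 3 := by omega
    have h3 : j.val * m ≤ 3 * m := Nat.mul_le_mul_right m h2
    omega⟩

lemma vtx_inj (hm : 4 * m ≤ n) {z z' : ZMod m} {j j' : Fin 4}
    (h : vtx hm z j = vtx hm z' j') : z = z' ∧ j = j' := by
  have h1 := ZMod.val_lt z
  have h2 := ZMod.val_lt z'
  have hv : z.val + j.val * m = z'.val + j'.val * m := congrArg Fin.val h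
  have hj : j = j' := by
    fin_cases j <;> fin_cases j' <;> simp_all <;> omega
  subst hj
  exact ⟨ZMod.val_injective m (by omega), rfl⟩

/-- Coordinates of the edge of the linear host indexed by a pair `p`. -/
def coordFn (m : ℕ) (p : ZMod m × ZMod m) : Fin 4 → ZMod m :=
  fun j => match j with
  | 0 => p.1
  | 1 => p.2
  | 2 => p.1 + p.2
  | 3 => p.1 + 2 * p.2

omit [NeZero m] in
lemma coord_det (hodd : Odd m) {p q : ZMod m × ZMod m} {j k : Fin 4} (hjk : j ≠ k)
    (h1 : coordFn m p j = coordFn m q j) (h2 : coordFn m p k = coordFn m q k) :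
    p = q := by
  have hu : IsUnit (2 : ZMod m) := by
    have := (ZMod.isUnit_iff_coprime 2 m).mpr (Nat.coprime_two_left.mpr hodd)
    simpa using this
  obtain ⟨x, y⟩ := p
  obtain ⟨x', y'⟩ := q
  fin_cases j <;> fin_cases k <;>
    simp only [coordFn, Prod.mk.injEq] at h1 h2 hjk ⊢ <;>
    first
    | exact absurd rfl hjk
    | (refine ⟨?_, ?_⟩ <;>
        first
        | linear_combination h1
        | linear_combination h2
        | linear_combination h2 - h1
        | linear_combination h1 - h2
        | linear_combination 2*h1 - h2
        | linear_combination 2*h2 - h1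
        | linear_combination h1 - 2*h2
        | linear_combination h2 - 2*h1
        | exact hu.mul_left_cancel (by linear_combination h2 - h1)
        | exact hu.mul_left_cancel (by linear_combination h1 - h2))

/-- An edge of the linear host graph. -/
def edgeOf (hm : 4 * m ≤ n) (p : ZMod m × ZMod m) : Finset (Fin n) :=
  (Finset.univ : Finset (Fin 4)).image (fun j => vtx hm (coordFn m p j) j)

lemma card_edgeOf (hm : 4 * m ≤ n) (p : ZMod m × ZMod m) : (edgeOf hm p).card = 4 := by
  rw [edgeOf, Finset.card_image_of_injective _ (fun j j' h => (vtx_inj hm h).2)]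
  simp

lemma mem_edgeOf (hm : 4 * m ≤ n) {p : ZMod m × ZMod m} {u : Fin n} :
    u ∈ edgeOf hm p ↔ ∃ j, vtx hm (coordFn m p j) j = u := by
  simp [edgeOf]

lemma edge_linear (hodd : Odd m) (hm : 4 * m ≤ n) {p q : ZMod m × ZMod m} {u w : Fin n}
    (huw : u ≠ w) (hu1 : u ∈ edgeOf hm p) (hu2 : u ∈ edgeOf hm q)
    (hw1 : w ∈ edgeOf hm p) (hw2 : w ∈ edgeOf hm q) : p = q := by
  obtain ⟨j1, hj1⟩ := (mem_edgeOf hm).1 hu1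
  obtain ⟨j2, hj2⟩ := (mem_edgeOf hm).1 hu2
  obtain ⟨k1, hk1⟩ := (mem_edgeOf hm).1 hw1
  obtain ⟨k2, hk2⟩ := (mem_edgeOf hm).1 hw2
  have hju := vtx_inj hm (hj1.trans hj2.symm)
  have hkw := vtx_inj hm (hk1.trans hk2.symm)
  have hjk : j1 ≠ k1 := by
    rintro rfl
    exact huw (hj1.symm.trans hk1)
  obtain ⟨hje, rfl⟩ := hju
  obtain ⟨hke, rfl⟩ := hkw
  exact coord_det hodd hjk hje hke

/-- The linear host graph: quadratically many edges, any two sharing at most one vertex. -/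
def linHost (hm : 4 * m ≤ n) : Finset (Finset (Fin n)) :=
  Finset.univ.image (edgeOf hm)

lemma edgeOf_injective (hodd : Odd m) (hm : 4 * m ≤ n) :
    Function.Injective (edgeOf (n := n) (m := m) hm) := by
  intro p q h
  have hu1 : vtx hm (coordFn m p 0) 0 ∈ edgeOf hm p := (mem_edgeOf hm).2 ⟨0, rfl⟩
  have hw1 : vtx hm (coordFn m p 1) 1 ∈ edgeOf hm p := (mem_edgeOf hm).2 ⟨1, rfl⟩
  have hne : vtx hm (coordFn m p 0) 0 ≠ vtx hm (coordFn m p 1) 1 := by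
    intro hc
    have := (vtx_inj hm hc).2
    simp at this
  exact edge_linear hodd hm hne hu1 (h ▸ hu1) hw1 (h ▸ hw1)

lemma card_linHost (hodd : Odd m) (hm : 4 * m ≤ n) : (linHost hm).card = m * m := by
  rw [linHost, Finset.card_image_of_injective _ (edgeOf_injective hodd hm),
    Finset.card_univ, Fintype.card_prod, ZMod.card]

end Aux

/-- For `1 ≤ e ≤ c*n^2` with `c > 0` sufficiently small and `n` large, every
nonempty `(n,e)`-unavoidable 4-uniform hypergraph consists of exactly one edge. -/
theorem stmt_15 : ∃ c : ℝ, 0 < c ∧ ∃ N : ℕ, ∀ n ≥ N, ∀ e : ℕ,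
    1 ≤ e → (e : ℝ) ≤ c * (n : ℝ) ^ 2 →
    ∀ (p : ℕ) (H : Finset (Finset (Fin p))),
      (∀ s ∈ H, s.card = 4) → H.Nonempty →
      (∀ G : Finset (Finset (Fin n)), (∀ g ∈ G, g.card = 4) → e ≤ G.card →
        ∃ f : Fin p ↪ Fin n, ∀ s ∈ H, s.map f ∈ G) →
      H.card = 1 := by
  refine ⟨1/100, by norm_num, 1000, ?_⟩
  intro n hn e he hce p H hH4 hHne avoid
  by_contra hcard
  have hnR : (1000 : ℝ) ≤ (n : ℝ) := by exact_mod_cast hn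
  have hceR : (e : ℝ) ≤ (n : ℝ) ^ 2 / 100 := by linarith
  -- H has at least two edges
  have h2 : 1 < H.card := by
    have := Finset.card_pos.mpr hHne
    omega
  obtain ⟨s, hs, t, ht, hst⟩ := Finset.one_lt_card.mp h2
  -- distinguished vertices of Fin n
  have hn2 : 2 ≤ n := by omega
  set z0 : Fin n := ⟨0, by omega⟩ with hz0
  set z1 : Fin n := ⟨1, by omega⟩ with hz1
  have hz01 : z0 ≠ z1 := by simp [hz0, hz1, Fin.ext_iff]
  -- First host graph: all 4-sets containing z0 and z1
  set B : Finset (Fin n) := ((Finset.univ : Finset (Fin n)).erase z0).erase z1 with hB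
  have hdisj : ∀ u ∈ B.powersetCard 2, Disjoint u ({z0, z1} : Finset (Fin n)) := by
    intro u hu
    obtain ⟨hsub, _⟩ := Finset.mem_powersetCard.1 hu
    rw [Finset.disjoint_right]
    intro a ha hauniv
    rcases Finset.mem_insert.1 ha with rfl | ha'
    · have := hsub hauniv
      simp [hB] at this
    · rw [Finset.mem_singleton] at ha'
      subst ha'
      have := hsub hauniv
      simp [hB] at this
  set G1 : Finset (Finset (Fin n)) :=
    (B.powersetCard 2).image (fun u => u ∪ {z0, z1}) with hG1
  have hG1card4 : ∀ g ∈ G1, g.card = 4 := by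
    intro g hg
    obtain ⟨u, hu, rfl⟩ := Finset.mem_image.1 hg
    rw [Finset.card_union_of_disjoint (hdisj u hu), (Finset.mem_powersetCard.1 hu).2,
      Finset.card_insert_of_notMem (by simpa using hz01), Finset.card_singleton]
  have hG1card : e ≤ G1.card := by
    have hinj : Set.InjOn (fun u => u ∪ ({z0, z1} : Finset (Fin n))) (B.powersetCard 2) := by
      intro u1 h1 u2 h2 h
      have e1 : (u1 ∪ {z0, z1}) \ {z0, z1} = u1 :=
        Finset.union_sdiff_cancel_right (hdisj u1 h1)
      have e2 : (u2 ∪ {z0, z1}) \ {z0, z1} = u2 :=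
        Finset.union_sdiff_cancel_right (hdisj u2 h2)
      rw [← e1, ← e2]
      simp only at h
      rw [h]
    rw [hG1, Finset.card_image_of_injOn hinj, Finset.card_powersetCard]
    have hBcard : B.card = n - 2 := by
      rw [hB, Finset.card_erase_of_mem (Finset.mem_erase.2 ⟨hz01.symm, Finset.mem_univ _⟩),
        Finset.card_erase_of_mem (Finset.mem_univ _), Finset.card_univ, Fintype.card_fin]
      omega
    rw [hBcard]
    have hcc : (((n - 2).choose 2 : ℕ) : ℝ) = ((n : ℝ) - 2) * (((n : ℝ) - 2) - 1) / 2 := by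
      rw [Nat.cast_choose_two, Nat.cast_sub hn2]
      norm_num
    have : (e : ℝ) ≤ (((n - 2).choose 2 : ℕ) : ℝ) := by
      rw [hcc]
      nlinarith
    exact_mod_cast this
  obtain ⟨f, hf⟩ := avoid G1 hG1card4 hG1card
  -- extract the two common vertices a b of all edges of H
  have hmemf : ∀ x ∈ H, z0 ∈ x.map f ∧ z1 ∈ x.map f := by
    intro x hx
    obtain ⟨u, _, hux⟩ := Finset.mem_image.1 (hf x hx)
    constructor <;> rw [← hux] <;>
      exact Finset.mem_union_right _ (by simp)
  obtain ⟨as, has, hfas⟩ := Finset.mem_map.1 (hmemf s hs).1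
  obtain ⟨bs, hbs, hfbs⟩ := Finset.mem_map.1 (hmemf s hs).2
  obtain ⟨at', hat, hfat⟩ := Finset.mem_map.1 (hmemf t ht).1
  obtain ⟨bt, hbt, hfbt⟩ := Finset.mem_map.1 (hmemf t ht).2
  have hasat : at' = as := f.injective (hfat.trans hfas.symm)
  have hbsbt : bt = bs := f.injective (hfbt.trans hfbs.symm)
  have hab : as ≠ bs := by
    intro hc
    exact hz01 (hfas.symm.trans (hc ▸ hfbs))
  -- Second host graph: the linear 4-graph
  obtain ⟨q8, r8, hqr, hr8⟩ : ∃ q r, 8 * q + r = n - 4 ∧ r < 8 :=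
    ⟨(n - 4) / 8, (n - 4) % 8, by rw [Nat.div_add_mod], Nat.mod_lt _ (by norm_num)⟩
  set m : ℕ := 2 * q8 + 1 with hm
  have hmodd : Odd m := ⟨q8, by omega⟩
  haveI : NeZero m := ⟨by omega⟩
  have hm4 : 4 * m ≤ n := by omega
  have hme : e ≤ m * m := by
    have hmlb : (n : ℝ) - 7 ≤ 4 * (m : ℝ) := by
      have : n ≤ 4 * m + 7 := by omega
      have h2 := (Nat.cast_le (α := ℝ)).2 this
      have hmc : ((4 * m + 7 : ℕ) : ℝ) = 4 * (m : ℝ) + 7 := by push_cast; ring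
      rw [hmc] at h2
      linarith
    have : (e : ℝ) ≤ (m : ℝ) * (m : ℝ) := by nlinarith
    exact_mod_cast this
  obtain ⟨g, hg⟩ := avoid (linHost hm4)
    (by
      intro x hx
      obtain ⟨pq, _, rfl⟩ := Finset.mem_image.1 hx
      exact card_edgeOf hm4 pq)
    (by rw [card_linHost hmodd hm4]; exact hme)
  obtain ⟨P, _, hP⟩ := Finset.mem_image.1 (hg s hs)
  obtain ⟨Q, _, hQ⟩ := Finset.mem_image.1 (hg t ht)
  have hPQ : P ≠ Q := by
    intro hc
    apply hst
    have : s.map g = t.map g := by rw [← hP, ← hQ, hc]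
    exact Finset.map_injective g this
  have hgab : g as ≠ g bs := fun hc => hab (g.injective hc)
  apply hPQ
  refine edge_linear hmodd hm4 hgab ?_ ?_ ?_ ?_
  · rw [hP]; exact Finset.mem_map_of_mem g has
  · rw [hQ]; exact Finset.mem_map_of_mem g (hasat ▸ hat)
  · rw [hP]; exact Finset.mem_map_of_mem g hbs
  · rw [hQ]; exact Finset.mem_map_of_mem g (hbsbt ▸ hbt)
end

section
/- Let $k \ge 2$ and let $G$ be an $n$-vertex $3$-uniform hypergraph with $e \ge C\max\{k^2n, k^{9/2}\}$ edges, for a sufficiently large absolute constant $C$, in which every pair of vertices has codegree at most $3k^{3/2}$. Then $G$ contains $\lceil\sqrt{k}\rceil$ pairwise vertex-disjoint copies of the sunflower $\mathit{Sf}_3(1,k)$. -/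
open Finset
set_option linter.unusedSectionVars false
set_option maxHeartbeats 2000000

section SunflowerHelpers
variable {V : Type} [Fintype V] [DecidableEq V]

/-- codegree-style count: number of edges of `H` containing the set `p`. -/
def cod2 (H : Finset (Finset V)) (p : Finset V) : ℕ := (H.filter (fun e => p ⊆ e)).card

lemma cod2_mono {H H' : Finset (Finset V)} (h : H' ⊆ H) (p : Finset V) :
    cod2 H' p ≤ cod2 H p :=
  card_le_card (filter_subset_filter _ h)

/-- generic covering bound -/
lemma card_le_sum_cover {α β : Type*} (S : Finset α) (U : Finset β)
    (R : β → α → Prop) [DecidableEq α] [∀ b, DecidablePred (R b)]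
    (h : ∀ s ∈ S, ∃ u ∈ U, R u s) :
    S.card ≤ ∑ u ∈ U, (S.filter (R u)).card := by
  calc S.card ≤ (U.biUnion (fun u => S.filter (R u))).card := by
        apply card_le_card; intro s hs
        obtain ⟨u, hu, hR⟩ := h s hs
        exact mem_biUnion.mpr ⟨u, hu, mem_filter.mpr ⟨hs, hR⟩⟩
    _ ≤ ∑ u ∈ U, (S.filter (R u)).card := card_biUnion_le

lemma handshake (S : Finset (Finset V)) (h3 : ∀ e ∈ S, e.card = 3) :
    ∑ v : V, (S.filter (fun e => v ∈ e)).card = 3 * S.card := by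
  have h1 : ∀ v : V, (S.filter (fun e => v ∈ e)).card = ∑ e ∈ S, if v ∈ e then 1 else 0 := by
    intro v; rw [card_filter]
  simp_rw [h1]
  rw [Finset.sum_comm]
  have h2 : ∀ e ∈ S, (∑ v : V, if v ∈ e then 1 else 0) = 3 := by
    intro e he
    rw [← card_filter]
    rw [Finset.filter_univ_mem]
    exact h3 e he
  rw [Finset.sum_congr rfl h2]
  simp [mul_comm]

lemma exists_maximal_disjoint (S : Finset (Finset V)) :
    ∃ T ⊆ S, (∀ t₁ ∈ T, ∀ t₂ ∈ T, t₁ ≠ t₂ → Disjoint t₁ t₂) ∧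
      ∀ s ∈ S, s.Nonempty → ∃ t ∈ T, ¬ Disjoint s t := by
  classical
  set 𝒯 := S.powerset.filter (fun T => ∀ t₁ ∈ T, ∀ t₂ ∈ T, t₁ ≠ t₂ → Disjoint t₁ t₂) with h𝒯
  have hne : 𝒯.Nonempty := ⟨∅, by simp [h𝒯]⟩
  obtain ⟨T, hT, hmax⟩ := Finset.exists_max_image 𝒯 card hne
  have hTsub : T ⊆ S := mem_powerset.mp (mem_filter.mp hT).1
  have hTdisj := (mem_filter.mp hT).2
  refine ⟨T, hTsub, hTdisj, ?_⟩
  intro s hs hsne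
  by_contra h
  push_neg at h
  have hsT : s ∉ T := by
    intro hmem
    exact absurd (disjoint_self.mp (h s hmem)) hsne.ne_empty
  have hins : insert s T ∈ 𝒯 := by
    rw [h𝒯, mem_filter, mem_powerset]
    refine ⟨insert_subset hs hTsub, ?_⟩
    intro t₁ h₁ t₂ h₂ hne'
    rcases mem_insert.mp h₁ with e₁ | h₁'
    · rcases mem_insert.mp h₂ with e₂ | h₂'
      · exact absurd (e₁.trans e₂.symm) hne'
      · rw [e₁]; exact h _ h₂'
    · rcases mem_insert.mp h₂ with e₂ | h₂'
      · rw [e₂]; exact (h _ h₁').symm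
      · exact hTdisj _ h₁' _ h₂' hne'
  have := hmax _ hins
  rw [card_insert_of_notMem hsT] at this
  omega

lemma greedy_disjoint : ∀ (c : ℕ) (S : Finset (Finset V)) (d : ℕ),
    (∀ s ∈ S, s.card = 2) → (∀ a : V, (S.filter (fun s => a ∈ s)).card ≤ d) →
    (2*d+1) * c ≤ S.card →
    ∃ T ⊆ S, T.card = c ∧ ∀ t₁ ∈ T, ∀ t₂ ∈ T, t₁ ≠ t₂ → Disjoint t₁ t₂ := by
  intro c
  induction c with
  | zero => intro S d _ _ _; exact ⟨∅, empty_subset _, card_empty, by simp⟩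
  | succ c ih =>
    intro S d h2 hdeg hcard
    have hSne : S.Nonempty := by
      rw [← card_pos]; have : 0 < (2*d+1) * (c+1) := by positivity
      omega
    obtain ⟨s₀, hs₀⟩ := hSne
    set S' := S.filter (fun s => Disjoint s s₀) with hS'
    have hsub : S' ⊆ S := filter_subset _ _
    have hcount : (S.filter (fun s => ¬ Disjoint s s₀)).card ≤ 2 * d := by
      have hcov : ∀ s ∈ S.filter (fun s => ¬ Disjoint s s₀), ∃ a ∈ s₀, a ∈ s := by
        intro s hs
        obtain ⟨a, ha1, ha2⟩ := Finset.not_disjoint_iff.mp (mem_filter.mp hs).2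
        exact ⟨a, ha2, ha1⟩
      calc (S.filter (fun s => ¬ Disjoint s s₀)).card
          ≤ ∑ a ∈ s₀, ((S.filter (fun s => ¬ Disjoint s s₀)).filter (fun s => a ∈ s)).card :=
            card_le_sum_cover _ _ _ hcov
        _ ≤ ∑ a ∈ s₀, d := by
            apply Finset.sum_le_sum; intro a _
            exact le_trans (card_le_card (by
              intro s hs
              exact mem_filter.mpr ⟨(filter_subset _ _) (mem_filter.mp hs).1, (mem_filter.mp hs).2⟩))
              (hdeg a)
        _ = 2 * d := by rw [Finset.sum_const, h2 s₀ hs₀]; simp [mul_comm]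
    have hcard' : (2*d+1) * c ≤ S'.card := by
      have := card_filter_add_card_filter_not (s := S) (p := fun s => Disjoint s s₀)
      have hle : (2*d+1)*(c+1) ≤ S.card := hcard
      have hexp : (2*d+1)*(c+1) = (2*d+1)*c + (2*d+1) := by ring
      have hS'c : S'.card = (S.filter (fun s => Disjoint s s₀)).card := rfl
      omega
    obtain ⟨T', hT'sub, hT'card, hT'disj⟩ := ih S' d
      (fun s hs => h2 s (hsub hs))
      (fun a => le_trans (card_le_card (filter_subset_filter _ hsub)) (hdeg a))
      hcard'
    have hs₀notT' : s₀ ∉ T' := by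
      intro hmem
      have : Disjoint s₀ s₀ := (mem_filter.mp (hT'sub hmem)).2
      have h2' := h2 s₀ hs₀
      rw [disjoint_self] at this
      simp [this] at h2'
    refine ⟨insert s₀ T', insert_subset hs₀ (hT'sub.trans hsub), ?_, ?_⟩
    · rw [card_insert_of_notMem hs₀notT', hT'card]
    · intro t₁ h₁ t₂ h₂ hne'
      rcases mem_insert.mp h₁ with e₁ | h₁'
      · rcases mem_insert.mp h₂ with e₂ | h₂'
        · exact absurd (e₁.trans e₂.symm) hne'
        · rw [e₁]; exact ((mem_filter.mp (hT'sub h₂')).2).symm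
      · rcases mem_insert.mp h₂ with e₂ | h₂'
        · rw [e₂]; exact (mem_filter.mp (hT'sub h₁')).2
        · exact hT'disj _ h₁' _ h₂' hne'


/-- sunflower with k petals, kernel a single vertex -/
def HasSf (H : Finset (Finset V)) (k : ℕ) : Prop :=
  ∃ (x : V) (P : Finset (Finset V)), P ⊆ H ∧ P.card = k ∧ (∀ e ∈ P, x ∈ e) ∧
    ∀ e₁ ∈ P, ∀ e₂ ∈ P, e₁ ≠ e₂ → Disjoint (e₁.erase x) (e₂.erase x)

/-- lift a disjoint family of petals into a flower -/
lemma lift_flower (H : Finset (Finset V)) (x : V) (T : Finset (Finset V))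
    (hT : ∀ p ∈ T, x ∉ p ∧ insert x p ∈ H)
    (hdisj : ∀ p₁ ∈ T, ∀ p₂ ∈ T, p₁ ≠ p₂ → Disjoint p₁ p₂) :
    ∃ P : Finset (Finset V), P ⊆ H ∧ P.card = T.card ∧ (∀ e ∈ P, x ∈ e) ∧
      (∀ e₁ ∈ P, ∀ e₂ ∈ P, e₁ ≠ e₂ → Disjoint (e₁.erase x) (e₂.erase x)) ∧
      P.sup (fun e => e.erase x) = T.sup id ∧ (∀ e ∈ P, e.erase x ∈ T) := by
  classical
  refine ⟨T.image (insert x), ?_, ?_, ?_, ?_, ?_, ?_⟩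
  · intro e he
    obtain ⟨p, hp, rfl⟩ := mem_image.mp he
    exact (hT p hp).2
  · apply card_image_of_injOn
    intro p₁ h₁ p₂ h₂ heq
    have e₁ : (insert x p₁).erase x = p₁ := erase_insert (hT p₁ h₁).1
    have e₂ : (insert x p₂).erase x = p₂ := erase_insert (hT p₂ h₂).1
    rw [← e₁, ← e₂, heq]
  · intro e he
    obtain ⟨p, hp, rfl⟩ := mem_image.mp he
    exact mem_insert_self _ _
  · intro e₁ he₁ e₂ he₂ hne
    obtain ⟨p₁, hp₁, rfl⟩ := mem_image.mp he₁
    obtain ⟨p₂, hp₂, rfl⟩ := mem_image.mp he₂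
    rw [erase_insert (hT p₁ hp₁).1, erase_insert (hT p₂ hp₂).1]
    exact hdisj _ hp₁ _ hp₂ (fun hh => hne (by rw [hh]))
  · ext a
    simp only [Finset.mem_sup, mem_image, id]
    constructor
    · rintro ⟨e, ⟨p, hp, rfl⟩, ha⟩
      exact ⟨p, hp, by rwa [erase_insert (hT p hp).1] at ha⟩
    · rintro ⟨p, hp, ha⟩
      exact ⟨insert x p, ⟨p, hp, rfl⟩, by rwa [erase_insert (hT p hp).1]⟩
  · intro e he
    obtain ⟨p, hp, rfl⟩ := mem_image.mp he
    rw [erase_insert (hT p hp).1]; exact hp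

lemma third_elt {f : Finset V} (h3 : f.card = 3) {v z : V} (hv : v ∈ f) (hz : z ∈ f)
    (hvz : v ≠ z) : ∃ w ∈ f, f.erase w = insert v {z} := by
  classical
  set p : Finset V := insert v {z} with hp
  have hpsub : p ⊆ f := by
    intro a ha
    rcases mem_insert.mp ha with rfl | ha
    · exact hv
    · rw [mem_singleton.mp ha]; exact hz
  have hpcard : p.card = 2 := by
    rw [hp, card_insert_of_notMem (by simp [hvz]), card_singleton]
  have hD : (f \ p).card = 1 := by
    rw [card_sdiff_of_subset hpsub, h3, hpcard]
  obtain ⟨w, hw⟩ := card_eq_one.mp hD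
  have hwf : w ∈ f := (mem_sdiff.mp (hw ▸ mem_singleton_self w)).1
  have hwp : w ∉ p := (mem_sdiff.mp (hw ▸ mem_singleton_self w)).2
  refine ⟨w, hwf, ?_⟩
  ext a
  simp only [mem_erase]
  constructor
  · rintro ⟨hane, haf⟩
    by_contra hap
    have : a ∈ f \ p := mem_sdiff.mpr ⟨haf, hap⟩
    rw [hw, mem_singleton] at this
    exact hane this
  · intro hap
    exact ⟨fun h => hwp (h ▸ hap), hpsub hap⟩

/-- greedy construction of petals through heavy pairs at `x` -/
lemma gp (H : Finset (Finset V)) (k : ℕ) (h3 : ∀ e ∈ H, e.card = 3) (x : V) :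
    ∀ (T : Finset V), ∀ (X : Finset V),
    (∀ t ∈ T, t ≠ x ∧ 2*k+1 ≤ cod2 H (insert x {t})) → x ∉ X → Disjoint T X →
    X.card + 2 * T.card ≤ 2*k →
    ∃ P : Finset (Finset V), P ⊆ H ∧ P.card = T.card ∧ (∀ e ∈ P, x ∈ e) ∧
      (∀ e₁ ∈ P, ∀ e₂ ∈ P, e₁ ≠ e₂ → Disjoint (e₁.erase x) (e₂.erase x)) ∧
      Disjoint (P.sup (fun e => e.erase x)) X ∧
      ((P.sup (fun e => e.erase x)) \ T).card ≤ T.card := by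
  classical
  intro T
  induction T using Finset.induction_on with
  | empty =>
    intro X _ _ _ _
    exact ⟨∅, empty_subset _, by simp, by simp, by simp, by simp, by simp⟩
  | @insert t T' htT' ih =>
    intro X hheavy hxX hTX hcards
    have htx : t ≠ x := (hheavy t (mem_insert_self _ _)).1
    have hcardins : (insert t T').card = T'.card + 1 := card_insert_of_notMem htT'
    -- apply IH with X'' = insert t X
    have hIH := ih (insert t X)
      (fun t' ht' => hheavy t' (mem_insert_of_mem ht'))
      (by simp [Ne.symm htx, hxX])
      (by
        rw [disjoint_insert_right]
        exact ⟨htT', (disjoint_insert_left.mp hTX).2⟩)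
      (by
        have h1 : (insert t X).card ≤ X.card + 1 := card_insert_le _ _
        omega)
    obtain ⟨P', hP'H, hP'card, hP'x, hP'disj, hP'X, hP'T⟩ := hIH
    set Y' := P'.sup (fun e => e.erase x) with hY'
    have hY'card : Y'.card ≤ 2 * T'.card := by
      have h1 : Y'.card ≤ (Y' \ T').card + T'.card := by
        have := card_le_card_sdiff_add_card (s := Y') (t := T')
        omega
      omega
    -- the bad set
    set bad := insert x (X ∪ Y') with hbad
    have hbadcard : bad.card ≤ 2*k - 1 := by
      have h1 : bad.card ≤ (X ∪ Y').card + 1 := card_insert_le _ _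
      have h2 : (X ∪ Y').card ≤ X.card + Y'.card := card_union_le _ _
      omega
    -- find an edge through {x,t} avoiding bad
    set Et := H.filter (fun e => insert x {t} ⊆ e) with hEt
    have hEtcard : 2*k+1 ≤ Et.card := (hheavy t (mem_insert_self _ _)).2
    have hxt_notmem : x ∉ ({t} : Finset V) := by simp [Ne.symm htx]
    have hpaircard : (insert x ({t} : Finset V)).card = 2 := by
      rw [card_insert_of_notMem hxt_notmem, card_singleton]
    have hexists : ∃ e ∈ Et, ¬ (e \ insert x {t} ⊆ bad) := by
      by_contra hall
      push_neg at hall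
      have hmap : ∀ e ∈ Et, e \ insert x {t} ∈ bad.powersetCard 1 := by
        intro e he
        rw [mem_powersetCard]
        refine ⟨hall e he, ?_⟩
        have hsub : insert x {t} ⊆ e := (mem_filter.mp he).2
        rw [card_sdiff_of_subset hsub, h3 e (mem_filter.mp he).1, hpaircard]
      have hinj : Set.InjOn (fun e => e \ insert x {t}) (Et : Set (Finset V)) := by
        intro e₁ h₁ e₂ h₂ heq
        have hs₁ : insert x {t} ⊆ e₁ := (mem_filter.mp h₁).2
        have hs₂ : insert x {t} ⊆ e₂ := (mem_filter.mp h₂).2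
        have heq' : e₁ \ insert x {t} = e₂ \ insert x {t} := heq
        calc e₁ = insert x {t} ∪ e₁ \ insert x {t} := (union_sdiff_of_subset hs₁).symm
          _ = insert x {t} ∪ e₂ \ insert x {t} := by rw [heq']
          _ = e₂ := union_sdiff_of_subset hs₂
      have hle := Finset.card_le_card_of_injOn _ hmap hinj
      rw [card_powersetCard, Nat.choose_one_right] at hle
      omega
    obtain ⟨e, heEt, hesc⟩ := hexists
    have heH : e ∈ H := (mem_filter.mp heEt).1
    have hesub : insert x {t} ⊆ e := (mem_filter.mp heEt).2
    have hDcard : (e \ insert x {t}).card = 1 := by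
      rw [card_sdiff_of_subset hesub, h3 e heH, hpaircard]
    obtain ⟨w, hweq⟩ := card_eq_one.mp hDcard
    have hwbad : w ∉ bad := by
      intro hwb
      apply hesc
      rw [hweq]
      exact singleton_subset_iff.mpr hwb
    have hwx : w ≠ x := by
      intro h; apply hwbad; rw [hbad, h]; exact mem_insert_self _ _
    have hwt : w ≠ t := by
      intro h
      have : w ∈ e \ insert x {t} := hweq ▸ mem_singleton_self w
      rw [h] at this
      exact (mem_sdiff.mp this).2 (mem_insert_of_mem (mem_singleton_self t))
    have hwe : w ∈ e := by
      have : w ∈ e \ insert x {t} := hweq ▸ mem_singleton_self w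
      exact (mem_sdiff.mp this).1
    have hee : e = insert x (insert t {w}) := by
      have h1 : e = insert x {t} ∪ (e \ insert x {t}) := (union_sdiff_of_subset hesub).symm
      rw [hweq] at h1
      rw [h1]; ext a
      simp only [mem_union, mem_insert, mem_singleton]
      tauto
    have herase : e.erase x = insert t {w} := by
      rw [hee]
      apply erase_insert
      simp only [mem_insert, mem_singleton]
      push_neg
      exact ⟨Ne.symm htx, Ne.symm hwx⟩
    have htY' : t ∉ Y' := by
      intro h
      exact (disjoint_left.mp hP'X) h (mem_insert_self _ _)
    have hP'X' : Disjoint Y' X := (disjoint_insert_right.mp hP'X).2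
    have hwY' : w ∉ Y' := fun h => hwbad (by rw [hbad]; exact mem_insert_of_mem (mem_union_right _ h))
    have hwX : w ∉ X := fun h => hwbad (by rw [hbad]; exact mem_insert_of_mem (mem_union_left _ h))
    have htX : t ∉ X := (disjoint_insert_left.mp hTX).1
    have heP' : e ∉ P' := by
      intro h
      apply htY'
      rw [hY']
      exact Finset.mem_sup.mpr ⟨e, h, by rw [herase]; exact mem_insert_self _ _⟩
    refine ⟨insert e P', insert_subset heH hP'H, ?_, ?_, ?_, ?_, ?_⟩
    · rw [card_insert_of_notMem heP', hP'card, hcardins]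
    · intro e' he'
      rcases mem_insert.mp he' with rfl | h
      · exact hesub (mem_insert_self _ _)
      · exact hP'x e' h
    · -- pairwise disjoint petals
      have hnew : ∀ e' ∈ P', Disjoint (e.erase x) (e'.erase x) := by
        intro e' he'
        rw [herase, disjoint_left]
        intro a ha
        rcases mem_insert.mp ha with rfl | ha
        · intro haa
          exact htY' (Finset.mem_sup.mpr ⟨e', he', haa⟩)
        · rw [mem_singleton.mp ha]
          intro haa
          exact hwY' (Finset.mem_sup.mpr ⟨e', he', haa⟩)
      intro e₁ h₁ e₂ h₂ hne
      rcases mem_insert.mp h₁ with e₁e | h₁'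
      · rcases mem_insert.mp h₂ with e₂e | h₂'
        · exact absurd (e₁e.trans e₂e.symm) hne
        · rw [e₁e]; exact hnew _ h₂'
      · rcases mem_insert.mp h₂ with e₂e | h₂'
        · rw [e₂e]; exact (hnew _ h₁').symm
        · exact hP'disj _ h₁' _ h₂' hne
    · -- disjointness from X
      rw [Finset.sup_insert, herase, sup_eq_union, disjoint_union_left]
      constructor
      · rw [disjoint_left]
        intro a ha
        rcases mem_insert.mp ha with rfl | ha
        · exact htX
        · rw [mem_singleton.mp ha]; exact hwX
      · exact hP'X'
    · -- card of new petal vertices outside T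
      rw [Finset.sup_insert, herase, sup_eq_union]
      have hsub : ((insert t {w}) ∪ Y') \ (insert t T') ⊆ insert w (Y' \ T') := by
        intro a ha
        rw [mem_sdiff] at ha
        obtain ⟨ha1, ha2⟩ := ha
        rcases mem_union.mp ha1 with h | h
        · rcases mem_insert.mp h with rfl | h
          · exact absurd (mem_insert_self _ _) ha2
          · rw [mem_singleton.mp h]; exact mem_insert_self _ _
        · exact mem_insert_of_mem (mem_sdiff.mpr ⟨h, fun hc => ha2 (mem_insert_of_mem hc)⟩)
      calc ((insert t {w} ∪ Y') \ insert t T').card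
          ≤ (insert w (Y' \ T')).card := card_le_card hsub
        _ ≤ (Y' \ T').card + 1 := card_insert_le _ _
        _ ≤ T'.card + 1 := by omega
        _ = (insert t T').card := hcardins.symm


-- new material
lemma erase_injOn_mem (S : Finset (Finset V)) (v : V) (hv : ∀ f ∈ S, v ∈ f) :
    Set.InjOn (fun f => f.erase v) (S : Set (Finset V)) := by
  intro f₁ h₁ f₂ h₂ heq
  have heq' : f₁.erase v = f₂.erase v := heq
  rw [← insert_erase (hv f₁ (Finset.mem_coe.mp h₁)), heq',
    insert_erase (hv f₂ (Finset.mem_coe.mp h₂))]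

lemma sup_card_le_two (T : Finset (Finset V)) (h2 : ∀ t ∈ T, t.card = 2) :
    (T.sup id).card ≤ 2 * T.card := by
  rw [Finset.sup_eq_biUnion]
  calc (T.biUnion id).card ≤ ∑ t ∈ T, (id t).card := card_biUnion_le
    _ = ∑ t ∈ T, 2 := by apply Finset.sum_congr rfl; intro t ht; exact h2 t ht
    _ = 2 * T.card := by rw [Finset.sum_const, smul_eq_mul, mul_comm]

lemma fact1 (H : Finset (Finset V)) (k : ℕ) (h3 : ∀ e ∈ H, e.card = 3)
    (hsf : ¬ HasSf H k) (x : V) :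
    ((univ : Finset V).filter (fun t => t ≠ x ∧ 2*k+1 ≤ cod2 H (insert x {t}))).card < k := by
  by_contra hge
  push_neg at hge
  obtain ⟨T, hTsub, hTcard⟩ := Finset.exists_subset_card_eq hge
  have hheavy : ∀ t ∈ T, t ≠ x ∧ 2*k+1 ≤ cod2 H (insert x {t}) :=
    fun t ht => (mem_filter.mp (hTsub ht)).2
  obtain ⟨P, hPH, hPcard, hPx, hPdisj, _, _⟩ := gp H k h3 x T ∅ hheavy (notMem_empty x)
    (disjoint_empty_right _) (by simp [hTcard])
  exact hsf ⟨x, P, hPH, by rw [hPcard, hTcard], hPx, hPdisj⟩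

lemma lemmaA (H : Finset (Finset V)) (k : ℕ)
    (h3 : ∀ e ∈ H, e.card = 3) (hsf : ¬ HasSf H k) :
    3 * H.card ≤ 10 * (k*k) * Fintype.card V := by
  classical
  set n := Fintype.card V with hn
  set slim := H.filter (fun f => ∀ w ∈ f, cod2 H (f.erase w) ≤ 2*k) with hslim
  set non := H.filter (fun f => ¬ (∀ w ∈ f, cod2 H (f.erase w) ≤ 2*k)) with hnon
  have hsplit : slim.card + non.card = H.card :=
    card_filter_add_card_filter_not _
  have hslimH : slim ⊆ H := filter_subset _ _
  have hnonH : non ⊆ H := filter_subset _ _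
  -- counting slim edges at a vertex
  have hS1 : ∀ v : V, (slim.filter (fun f => v ∈ f)).card ≤ 4 * (k*k) := by
    intro v
    set Sv := slim.filter (fun f => v ∈ f) with hSv
    have hvSv : ∀ f ∈ Sv, v ∈ f := fun f hf => (mem_filter.mp hf).2
    set ℓ := Sv.image (fun f => f.erase v) with hℓ
    have hcardℓ : ℓ.card = Sv.card := card_image_of_injOn (erase_injOn_mem Sv v hvSv)
    have hℓprop : ∀ p ∈ ℓ, v ∉ p ∧ insert v p ∈ H ∧ p.card = 2 := by
      intro p hp
      obtain ⟨f, hf, rfl⟩ := mem_image.mp hp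
      have hfH : f ∈ H := hslimH (mem_filter.mp hf).1
      have hvf : v ∈ f := (mem_filter.mp hf).2
      refine ⟨notMem_erase _ _, by rwa [insert_erase hvf], ?_⟩
      rw [card_erase_of_mem hvf, h3 f hfH]
    obtain ⟨T, hTsub, hTdisj, hTmax⟩ := exists_maximal_disjoint ℓ
    have hT2 : ∀ t ∈ T, t.card = 2 := fun t ht => (hℓprop t (hTsub ht)).2.2
    have hTk : T.card < k := by
      by_contra hTge
      push_neg at hTge
      obtain ⟨T', hT'sub, hT'card⟩ := Finset.exists_subset_card_eq hTge
      obtain ⟨P, hPH, hPcard, hPx, hPdisj, _, _⟩ := lift_flower H v T'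
        (fun p hp => ⟨(hℓprop p (hTsub (hT'sub hp))).1, (hℓprop p (hTsub (hT'sub hp))).2.1⟩)
        (fun p₁ h₁ p₂ h₂ hne => hTdisj _ (hT'sub h₁) _ (hT'sub h₂) hne)
      exact hsf ⟨v, P, hPH, by rw [hPcard, hT'card], hPx, hPdisj⟩
    have hcov : ℓ.card ≤ ∑ z ∈ T.sup id, (ℓ.filter (fun p => z ∈ p)).card := by
      apply card_le_sum_cover
      intro p hp
      obtain ⟨t, ht, hnd⟩ := hTmax p hp (by
        have := (hℓprop p hp).2.2
        exact card_pos.mp (by omega))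
      obtain ⟨z, hz1, hz2⟩ := Finset.not_disjoint_iff.mp hnd
      exact ⟨z, Finset.mem_sup.mpr ⟨t, ht, hz2⟩, hz1⟩
    have hperz : ∀ z ∈ T.sup id, (ℓ.filter (fun p => z ∈ p)).card ≤ 2*k := by
      intro z hzT
      by_cases hne : (ℓ.filter (fun p => z ∈ p)).Nonempty
      · obtain ⟨p₀, hp₀⟩ := hne
        have hp₀ℓ : p₀ ∈ ℓ := (mem_filter.mp hp₀).1
        have hzp₀ : z ∈ p₀ := (mem_filter.mp hp₀).2
        obtain ⟨f₀, hf₀, hp₀eq⟩ := mem_image.mp hp₀ℓ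
        have hf₀slim : f₀ ∈ slim := (mem_filter.mp hf₀).1
        have hf₀H : f₀ ∈ H := hslimH hf₀slim
        have hvf₀ : v ∈ f₀ := (mem_filter.mp hf₀).2
        have hzf₀ : z ∈ f₀ := by
          have : z ∈ f₀.erase v := hp₀eq ▸ hzp₀
          exact mem_of_mem_erase this
        have hzv : v ≠ z := by
          intro h
          have : z ∈ f₀.erase v := hp₀eq ▸ hzp₀
          rw [← h] at this
          exact notMem_erase _ _ this
        obtain ⟨w, hwf₀, hwer⟩ := third_elt (h3 f₀ hf₀H) hvf₀ hzf₀ hzv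
        have hb1 : cod2 H (insert v {z}) ≤ 2*k := by
          rw [← hwer]
          exact (mem_filter.mp hf₀slim).2 w hwf₀
        have hb2 : (ℓ.filter (fun p => z ∈ p)).card ≤ cod2 H (insert v {z}) := by
          apply Finset.card_le_card_of_injOn (fun p => insert v p)
          · intro p hp
            have hpℓ : p ∈ ℓ := (mem_filter.mp hp).1
            have hzp : z ∈ p := (mem_filter.mp hp).2
            show insert v p ∈ H.filter (fun e => insert v {z} ⊆ e)
            rw [mem_filter]
            refine ⟨(hℓprop p hpℓ).2.1, ?_⟩
            intro a ha
            rcases mem_insert.mp ha with rfl | ha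
            · exact mem_insert_self _ _
            · rw [mem_singleton.mp ha]; exact mem_insert_of_mem hzp
          · intro p₁ h₁ p₂ h₂ heq
            have heq' : insert v p₁ = insert v p₂ := heq
            have hv₁ : v ∉ p₁ := (hℓprop p₁ (mem_filter.mp (Finset.mem_coe.mp h₁)).1).1
            have hv₂ : v ∉ p₂ := (hℓprop p₂ (mem_filter.mp (Finset.mem_coe.mp h₂)).1).1
            rw [← erase_insert hv₁, heq', erase_insert hv₂]
        exact le_trans hb2 hb1
      · rw [not_nonempty_iff_eq_empty.mp hne]; simp
    have hsup2 : (T.sup id).card ≤ 2 * T.card := sup_card_le_two T hT2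
    calc Sv.card = ℓ.card := hcardℓ.symm
      _ ≤ ∑ z ∈ T.sup id, (ℓ.filter (fun p => z ∈ p)).card := hcov
      _ ≤ ∑ _z ∈ T.sup id, 2*k := Finset.sum_le_sum hperz
      _ = (T.sup id).card * (2*k) := by rw [Finset.sum_const, smul_eq_mul]
      _ ≤ (2 * T.card) * (2*k) := Nat.mul_le_mul_right _ hsup2
      _ ≤ 4 * (k*k) := by nlinarith [hTk]
  have hslimcount : 3 * slim.card ≤ 4 * (k*k) * n := by
    rw [← handshake slim (fun e he => h3 e (hslimH he))]
    calc ∑ v : V, (slim.filter (fun e => v ∈ e)).card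
        ≤ ∑ _v : V, 4*(k*k) := Finset.sum_le_sum (fun v _ => hS1 v)
      _ = n * (4*(k*k)) := by rw [Finset.sum_const, smul_eq_mul, Finset.card_univ]
      _ = 4*(k*k)*n := by ring
  -- counting non-slim edges
  have hNW : ∀ w : V,
      (non.filter (fun f => w ∈ f ∧ 2*k+1 ≤ cod2 H (f.erase w))).card ≤ 2*(k*k) := by
    intro w
    set Nw := non.filter (fun f => w ∈ f ∧ 2*k+1 ≤ cod2 H (f.erase w)) with hNw
    set PW := ((H.filter (fun f => w ∈ f)).image (fun f => f.erase w)).filter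
      (fun p => 2*k+1 ≤ cod2 H p) with hPW
    have hstepa : Nw.card ≤ PW.card := by
      apply Finset.card_le_card_of_injOn (fun f => f.erase w)
      · intro f hf
        have hfH : f ∈ H := hnonH (mem_filter.mp hf).1
        have hwf : w ∈ f := (mem_filter.mp hf).2.1
        rw [hPW, Finset.mem_coe, mem_filter]
        exact ⟨mem_image.mpr ⟨f, mem_filter.mpr ⟨hfH, hwf⟩, rfl⟩, (mem_filter.mp hf).2.2⟩
      · exact erase_injOn_mem Nw w (fun f hf => (mem_filter.mp hf).2.1)
    have hPWprop : ∀ p ∈ PW, w ∉ p ∧ insert w p ∈ H ∧ p.card = 2 ∧ 2*k+1 ≤ cod2 H p := by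
      intro p hp
      obtain ⟨hp1, hp2⟩ := mem_filter.mp hp
      obtain ⟨f, hf, rfl⟩ := mem_image.mp hp1
      have hfH : f ∈ H := (mem_filter.mp hf).1
      have hwf : w ∈ f := (mem_filter.mp hf).2
      exact ⟨notMem_erase _ _, by rwa [insert_erase hwf],
        by rw [card_erase_of_mem hwf, h3 f hfH], hp2⟩
    obtain ⟨T, hTsub, hTdisj, hTmax⟩ := exists_maximal_disjoint PW
    have hT2 : ∀ t ∈ T, t.card = 2 := fun t ht => (hPWprop t (hTsub ht)).2.2.1
    have hTk : T.card < k := by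
      by_contra hTge
      push_neg at hTge
      obtain ⟨T', hT'sub, hT'card⟩ := Finset.exists_subset_card_eq hTge
      obtain ⟨P, hPH, hPcard, hPx, hPdisj, _, _⟩ := lift_flower H w T'
        (fun p hp => ⟨(hPWprop p (hTsub (hT'sub hp))).1, (hPWprop p (hTsub (hT'sub hp))).2.1⟩)
        (fun p₁ h₁ p₂ h₂ hne => hTdisj _ (hT'sub h₁) _ (hT'sub h₂) hne)
      exact hsf ⟨w, P, hPH, by rw [hPcard, hT'card], hPx, hPdisj⟩
    have hcov : PW.card ≤ ∑ z ∈ T.sup id, (PW.filter (fun p => z ∈ p)).card := by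
      apply card_le_sum_cover
      intro p hp
      obtain ⟨t, ht, hnd⟩ := hTmax p hp (by
        have := (hPWprop p hp).2.2.1
        exact card_pos.mp (by omega))
      obtain ⟨z, hz1, hz2⟩ := Finset.not_disjoint_iff.mp hnd
      exact ⟨z, Finset.mem_sup.mpr ⟨t, ht, hz2⟩, hz1⟩
    have hperz : ∀ z ∈ T.sup id, (PW.filter (fun p => z ∈ p)).card ≤ k := by
      intro z hzT
      have hsubim : PW.filter (fun p => z ∈ p) ⊆
          ((univ : Finset V).filter (fun u => u ≠ z ∧ 2*k+1 ≤ cod2 H (insert z {u}))).image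
            (fun u => insert z {u}) := by
        intro p hp
        have hpPW : p ∈ PW := (mem_filter.mp hp).1
        have hzp : z ∈ p := (mem_filter.mp hp).2
        have hp2 : p.card = 2 := (hPWprop p hpPW).2.2.1
        have hcard1 : (p.erase z).card = 1 := by rw [card_erase_of_mem hzp, hp2]
        obtain ⟨u, hu⟩ := card_eq_one.mp hcard1
        have hup : u ∈ p.erase z := hu ▸ mem_singleton_self u
        have huz : u ≠ z := ne_of_mem_erase hup
        have hpeq : p = insert z {u} := by
          rw [← hu, insert_erase hzp]
        apply mem_image.mpr
        refine ⟨u, mem_filter.mpr ⟨mem_univ _, huz, ?_⟩, hpeq.symm⟩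
        rw [← hpeq]
        exact (hPWprop p hpPW).2.2.2
      calc (PW.filter (fun p => z ∈ p)).card
          ≤ (((univ : Finset V).filter
              (fun u => u ≠ z ∧ 2*k+1 ≤ cod2 H (insert z {u}))).image
              (fun u => insert z {u})).card := card_le_card hsubim
        _ ≤ ((univ : Finset V).filter
              (fun u => u ≠ z ∧ 2*k+1 ≤ cod2 H (insert z {u}))).card := card_image_le
        _ ≤ k := le_of_lt (fact1 H k h3 hsf z)
    have hsup2 : (T.sup id).card ≤ 2 * T.card := sup_card_le_two T hT2
    calc Nw.card ≤ PW.card := hstepa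
      _ ≤ ∑ z ∈ T.sup id, (PW.filter (fun p => z ∈ p)).card := hcov
      _ ≤ ∑ _z ∈ T.sup id, k := Finset.sum_le_sum hperz
      _ = (T.sup id).card * k := by rw [Finset.sum_const, smul_eq_mul]
      _ ≤ (2 * T.card) * k := Nat.mul_le_mul_right _ hsup2
      _ ≤ 2*(k*k) := by nlinarith [hTk]
  have hnoncount : non.card ≤ 2*(k*k) * n := by
    have hcov : non.card ≤ ∑ w : V,
        (non.filter (fun f => w ∈ f ∧ 2*k+1 ≤ cod2 H (f.erase w))).card := by
      apply card_le_sum_cover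
      intro f hf
      have := (mem_filter.mp hf).2
      push_neg at this
      obtain ⟨w, hwf, hw⟩ := this
      exact ⟨w, mem_univ _, hwf, by omega⟩
    calc non.card ≤ ∑ w : V,
          (non.filter (fun f => w ∈ f ∧ 2*k+1 ≤ cod2 H (f.erase w))).card := hcov
      _ ≤ ∑ _w : V, 2*(k*k) := Finset.sum_le_sum (fun w _ => hNW w)
      _ = n * (2*(k*k)) := by rw [Finset.sum_const, smul_eq_mul, Finset.card_univ]
      _ = 2*(k*k)*n := by ring
  nlinarith [hslimcount, hnoncount, hsplit]


lemma erase_injOn_mem' (S : Finset (Finset V)) (v : V) (hv : ∀ f ∈ S, v ∈ f) :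
    Set.InjOn (fun f => f.erase v) (S : Set (Finset V)) := by
  intro f₁ h₁ f₂ h₂ heq
  have heq' : f₁.erase v = f₂.erase v := heq
  rw [← insert_erase (hv f₁ (Finset.mem_coe.mp h₁)), heq',
    insert_erase (hv f₂ (Finset.mem_coe.mp h₂))]

lemma sup_erase_eq (P : Finset (Finset V)) (c : V) :
    (P.sup id).erase c = P.sup (fun e => e.erase c) := by
  ext a
  simp only [mem_erase, Finset.mem_sup, id]
  tauto

lemma sup_card_le_three (P : Finset (Finset V)) (k : ℕ)
    (h3 : ∀ e ∈ P, e.card = 3) (hc : P.card = k) :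
    (P.sup id).card ≤ 3 * k := by
  rw [Finset.sup_eq_biUnion]
  calc (P.biUnion id).card ≤ ∑ e ∈ P, (id e).card := card_biUnion_le
    _ = ∑ e ∈ P, 3 := Finset.sum_congr rfl h3
    _ = 3 * k := by rw [Finset.sum_const, smul_eq_mul, hc, mul_comm]

/-- extract a flower with k petals avoiding X at a vertex of degree > 40k³ -/
lemma hub_flower (G : Finset (Finset V)) (k dN : ℕ) (h3 : ∀ e ∈ G, e.card = 3)
    (hcodN : ∀ p : Finset V, p.card = 2 → cod2 G p ≤ dN)
    (c : V) (X : Finset V)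
    (hdeg : 40*k^3 < (G.filter (fun e => c ∈ e)).card)
    (hX : X.card * dN + (2*dN+1)*k ≤ 40*k^3) :
    ∃ P : Finset (Finset V), P ⊆ G ∧ P.card = k ∧ (∀ e ∈ P, c ∈ e) ∧
      (∀ e₁ ∈ P, ∀ e₂ ∈ P, e₁ ≠ e₂ → Disjoint (e₁.erase c) (e₂.erase c)) ∧
      Disjoint (P.sup (fun e => e.erase c)) X := by
  classical
  set Gc := G.filter (fun e => c ∈ e) with hGc
  have hGcmem : ∀ f ∈ Gc, c ∈ f := fun f hf => (mem_filter.mp hf).2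
  set link := Gc.image (fun e => e.erase c) with hlink
  have hlinkcard : link.card = Gc.card := card_image_of_injOn (erase_injOn_mem' Gc c hGcmem)
  have hlinkprop : ∀ s ∈ link, c ∉ s ∧ insert c s ∈ G ∧ s.card = 2 := by
    intro s hs
    obtain ⟨f, hf, rfl⟩ := mem_image.mp hs
    have hfG : f ∈ G := (mem_filter.mp hf).1
    have hcf : c ∈ f := (mem_filter.mp hf).2
    exact ⟨notMem_erase _ _, by rwa [insert_erase hcf],
      by rw [card_erase_of_mem hcf, h3 f hfG]⟩
  have hlinkdeg : ∀ a : V, (link.filter (fun s => a ∈ s)).card ≤ dN := by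
    intro a
    by_cases hne : (link.filter (fun s => a ∈ s)).Nonempty
    · obtain ⟨s₀, hs₀⟩ := hne
      have hac : a ≠ c := by
        intro h
        exact (hlinkprop s₀ (mem_filter.mp hs₀).1).1 (h ▸ (mem_filter.mp hs₀).2)
      have hpair : (insert c ({a} : Finset V)).card = 2 := by
        rw [card_insert_of_notMem (by simp [Ne.symm hac]), card_singleton]
      calc (link.filter (fun s => a ∈ s)).card
          ≤ cod2 G (insert c {a}) := by
            apply Finset.card_le_card_of_injOn (fun s => insert c s)
            · intro s hs
              have hsl : s ∈ link := (mem_filter.mp hs).1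
              have has : a ∈ s := (mem_filter.mp hs).2
              show insert c s ∈ G.filter (fun e => insert c {a} ⊆ e)
              rw [mem_filter]
              refine ⟨(hlinkprop s hsl).2.1, ?_⟩
              intro z hz
              rcases mem_insert.mp hz with rfl | hz
              · exact mem_insert_self _ _
              · rw [mem_singleton.mp hz]; exact mem_insert_of_mem has
            · intro s₁ h₁ s₂ h₂ heq
              have heq' : insert c s₁ = insert c s₂ := heq
              have hc₁ : c ∉ s₁ := (hlinkprop s₁ (mem_filter.mp (Finset.mem_coe.mp h₁)).1).1
              have hc₂ : c ∉ s₂ := (hlinkprop s₂ (mem_filter.mp (Finset.mem_coe.mp h₂)).1).1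
              rw [← erase_insert hc₁, heq', erase_insert hc₂]
        _ ≤ dN := hcodN _ hpair
    · rw [not_nonempty_iff_eq_empty.mp hne]; simp
  set S := link.filter (fun s => Disjoint s X) with hS
  have hsplitcount : link.card ≤ S.card + X.card * dN := by
    have hsplit : S.card + (link.filter (fun s => ¬ Disjoint s X)).card = link.card :=
      card_filter_add_card_filter_not _
    have hcov : (link.filter (fun s => ¬ Disjoint s X)).card ≤ X.card * dN := by
      calc (link.filter (fun s => ¬ Disjoint s X)).card
          ≤ ∑ x ∈ X, ((link.filter (fun s => ¬ Disjoint s X)).filter (fun s => x ∈ s)).card := by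
            apply card_le_sum_cover
            intro s hs
            obtain ⟨x, hx1, hx2⟩ := Finset.not_disjoint_iff.mp (mem_filter.mp hs).2
            exact ⟨x, hx2, hx1⟩
        _ ≤ ∑ x ∈ X, dN := by
            apply Finset.sum_le_sum
            intro x _
            exact le_trans (card_le_card (filter_subset_filter _ (filter_subset _ _))) (hlinkdeg x)
        _ = X.card * dN := by rw [Finset.sum_const, smul_eq_mul]
    omega
  have hScard : (2*dN+1)*k ≤ S.card := by
    have h1 : Gc.card = link.card := hlinkcard.symm
    omega
  obtain ⟨T, hTsub, hTcard, hTdisj⟩ := greedy_disjoint k S dN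
    (fun s hs => (hlinkprop s ((filter_subset _ _) hs)).2.2)
    (fun a => le_trans (card_le_card (filter_subset_filter _ (filter_subset _ _))) (hlinkdeg a))
    hScard
  have hTlink : ∀ p ∈ T, p ∈ link := fun p hp => (mem_filter.mp (hTsub hp)).1
  have hTX : ∀ p ∈ T, Disjoint p X := fun p hp => (mem_filter.mp (hTsub hp)).2
  obtain ⟨P, hPG, hPcard, hPc, hPdisj, hPsup, _⟩ := lift_flower G c T
    (fun p hp => ⟨(hlinkprop p (hTlink p hp)).1, (hlinkprop p (hTlink p hp)).2.1⟩)
    hTdisj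
  refine ⟨P, hPG, by rw [hPcard, hTcard], hPc, hPdisj, ?_⟩
  rw [hPsup, disjoint_left]
  intro a ha
  obtain ⟨p, hp, hap⟩ := Finset.mem_sup.mp ha
  exact disjoint_left.mp (hTX p hp) hap


end SunflowerHelpers

/-- There is an absolute constant `C` such that every 3-uniform hypergraph on `n`
vertices with at least `C * max (k^2*n) (k^(9/2))` edges, in which every pair of
vertices has codegree at most `3*k^(3/2)`, contains `⌈√k⌉` pairwise vertex-disjoint
copies of the sunflower `Sf₃(1,k)`. -/
theorem stmt_17 : ∃ C : ℝ, 0 < C ∧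
    ∀ (n k : ℕ), 2 ≤ k →
    ∀ (V : Type) [Fintype V] [DecidableEq V] (G : Finset (Finset V)),
      Fintype.card V = n → (∀ e ∈ G, e.card = 3) →
      (∀ u v : V, u ≠ v →
        ((G.filter fun e => u ∈ e ∧ v ∈ e).card : ℝ) ≤ 3 * (k : ℝ) ^ ((3 : ℝ) / 2)) →
      C * max ((k : ℝ) ^ 2 * n) ((k : ℝ) ^ ((9 : ℝ) / 2)) ≤ (G.card : ℝ) →
      ∃ (v : Fin ⌈Real.sqrt k⌉₊ → V) (P : Fin ⌈Real.sqrt k⌉₊ → Finset (Finset V)),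
        (∀ i, P i ⊆ G ∧ (P i).card = k ∧ (∀ e ∈ P i, v i ∈ e) ∧
          ((P i : Set (Finset V)).Pairwise
            fun e f => Disjoint (e.erase (v i)) (f.erase (v i)))) ∧
        ∀ i j, i ≠ j → Disjoint ((P i).sup id) ((P j).sup id) := by
  classical
  refine ⟨1000000, by norm_num, ?_⟩
  intro n k hk V _ _ G hn h3 hcod hedge
  classical
  set m := ⌈Real.sqrt (k:ℝ)⌉₊ with hmdef
  have hk2 : (2:ℝ) ≤ (k:ℝ) := by exact_mod_cast hk
  have hk0 : (0:ℝ) < (k:ℝ) := by linarith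
  set t := Real.sqrt (k:ℝ) with htdef
  have ht0 : 0 < t := Real.sqrt_pos.mpr hk0
  have ht2 : t^2 = (k:ℝ) := Real.sq_sqrt hk0.le
  have ht1 : 1 ≤ t := by
    rw [htdef]
    rw [show (1:ℝ) = Real.sqrt 1 by simp]
    exact Real.sqrt_le_sqrt (by linarith)
  have hk32 : (k:ℝ) ^ ((3:ℝ)/2) = t^3 := by
    rw [htdef, Real.sqrt_eq_rpow, ← Real.rpow_natCast ((k:ℝ)^((1:ℝ)/2)) 3,
      ← Real.rpow_mul hk0.le]
    norm_num
  have hk92 : (k:ℝ) ^ ((9:ℝ)/2) = t^9 := by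
    rw [htdef, Real.sqrt_eq_rpow, ← Real.rpow_natCast ((k:ℝ)^((1:ℝ)/2)) 9,
      ← Real.rpow_mul hk0.le]
    norm_num
  have hkpow2 : ((k:ℝ))^2 = t^4 := by rw [← ht2]; ring
  have hmt : (m:ℝ) ≤ 2*t := by
    have h1 : ((m:ℕ):ℝ) < t + 1 := Nat.ceil_lt_add_one ht0.le
    linarith
  set dN := ⌊(3:ℝ) * t^3⌋₊ with hdNdef
  have hdNle : ((dN:ℕ):ℝ) ≤ 3*t^3 := Nat.floor_le (by positivity)
  have hcodN : ∀ p : Finset V, p.card = 2 → cod2 G p ≤ dN := by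
    intro p hp
    obtain ⟨u, v, huv, rfl⟩ := card_eq_two.mp hp
    have heq : G.filter (fun e => ({u,v} : Finset V) ⊆ e)
        = G.filter (fun e => u ∈ e ∧ v ∈ e) := by
      apply filter_congr; intro e _
      simp [insert_subset_iff]
    show (G.filter (fun e => ({u,v}:Finset V) ⊆ e)).card ≤ dN
    rw [heq]
    apply Nat.le_floor
    calc ((G.filter (fun e => u ∈ e ∧ v ∈ e)).card : ℝ)
        ≤ 3*(k:ℝ)^((3:ℝ)/2) := hcod u v huv
      _ = 3*t^3 := by rw [hk32]
  have hdeg_bound : ∀ v : V, (G.filter (fun e => v ∈ e)).card ≤ n * dN := by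
    intro v
    calc (G.filter (fun e => v ∈ e)).card
        ≤ ∑ x ∈ univ.erase v, ((G.filter (fun e => v ∈ e)).filter (fun e => x ∈ e)).card := by
          apply card_le_sum_cover
          intro e he
          have hv : v ∈ e := (mem_filter.mp he).2
          have h2 : (e.erase v).Nonempty := by
            rw [← card_pos, card_erase_of_mem hv, h3 e (mem_filter.mp he).1]
            norm_num
          obtain ⟨x, hx⟩ := h2
          exact ⟨x, mem_erase.mpr ⟨ne_of_mem_erase hx, mem_univ _⟩, mem_of_mem_erase hx⟩
      _ ≤ ∑ _x ∈ univ.erase v, dN := by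
          apply Finset.sum_le_sum
          intro x hx
          have hxv : x ≠ v := (mem_erase.mp hx).1
          have hpair : (insert v ({x}:Finset V)).card = 2 := by
            rw [card_insert_of_notMem (by simp [Ne.symm hxv]), card_singleton]
          refine le_trans (card_le_card ?_) (hcodN _ hpair)
          intro e he
          rw [mem_filter] at he
          show e ∈ G.filter (fun e => insert v ({x}:Finset V) ⊆ e)
          rw [mem_filter]
          refine ⟨(mem_filter.mp he.1).1, ?_⟩
          intro z hz
          rcases mem_insert.mp hz with rfl | hz
          · exact (mem_filter.mp he.1).2
          · rw [mem_singleton.mp hz]; exact he.2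
      _ ≤ n * dN := by
          rw [Finset.sum_const, smul_eq_mul]
          apply Nat.mul_le_mul_right
          calc (univ.erase v).card ≤ (univ : Finset V).card := card_le_card (erase_subset _ _)
            _ = n := by rw [card_univ, hn]
  set B := (univ : Finset V).filter (fun v => 40*k^3 < (G.filter (fun e => v ∈ e)).card) with hB
  have hE1 : 1000000 * (t^4 * (n:ℝ)) ≤ (G.card:ℝ) := by
    refine le_trans ?_ hedge
    rw [← hkpow2]
    have := le_max_left ((k:ℝ)^2*(n:ℝ)) ((k:ℝ)^((9:ℝ)/2))
    nlinarith [this]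
  have hE2 : 1000000 * t^9 ≤ (G.card:ℝ) := by
    refine le_trans ?_ hedge
    rw [← hk92]
    have := le_max_right ((k:ℝ)^2*(n:ℝ)) ((k:ℝ)^((9:ℝ)/2))
    nlinarith [this]
  -- key numeric bound for case 1
  have h40 : (m*(3*k+1))*dN + (2*dN+1)*k ≤ 40*k^3 := by
    have hc : (((m*(3*k+1))*dN + (2*dN+1)*k : ℕ) : ℝ) ≤ ((40*k^3 : ℕ) : ℝ) := by
      push_cast
      have hkt : (k:ℝ) = t^2 := ht2.symm
      rw [hkt]
      have hmnn : (0:ℝ) ≤ (m:ℝ) := Nat.cast_nonneg _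
      have hdnn : (0:ℝ) ≤ (dN:ℝ) := Nat.cast_nonneg _
      have h1 : (m:ℝ)*(3*t^2+1) ≤ 2*t*(3*t^2+1) := by nlinarith
      have h2 : (m:ℝ)*(3*t^2+1)*(dN:ℝ) ≤ (2*t*(3*t^2+1))*(3*t^3) := by
        apply mul_le_mul h1 hdNle hdnn
        positivity
      have h3' : (2*(dN:ℝ)+1)*t^2 ≤ (2*(3*t^3)+1)*t^2 := by nlinarith
      have p2 : t^2 ≤ t^6 := pow_le_pow_right₀ ht1 (by norm_num)
      have p4 : t^4 ≤ t^6 := pow_le_pow_right₀ ht1 (by norm_num)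
      have p5 : t^5 ≤ t^6 := pow_le_pow_right₀ ht1 (by norm_num)
      nlinarith [h2, h3']
    exact_mod_cast hc
  by_cases hcase : m ≤ B.card
  · -- CASE 1 : many high-degree vertices
    obtain ⟨B₀, hB₀sub, hB₀card⟩ := Finset.exists_subset_card_eq hcase
    have key : ∀ j : ℕ, j ≤ m → ∃ (v : Fin j → V) (P : Fin j → Finset (Finset V)),
        (∀ i, v i ∈ B₀) ∧ (∀ i i', i ≠ i' → v i ≠ v i') ∧
        (∀ i, P i ⊆ G ∧ (P i).card = k ∧ (∀ e ∈ P i, v i ∈ e) ∧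
          (∀ e₁ ∈ P i, ∀ e₂ ∈ P i, e₁ ≠ e₂ → Disjoint (e₁.erase (v i)) (e₂.erase (v i)))) ∧
        (∀ i, Disjoint (((P i).sup id).erase (v i)) B₀) ∧
        (∀ i i', i ≠ i' →
          Disjoint (((P i).sup id).erase (v i)) (((P i').sup id).erase (v i'))) := by
      intro j
      induction j with
      | zero =>
        intro _
        exact ⟨Fin.elim0, Fin.elim0, fun i => i.elim0, fun i => i.elim0,
          fun i => i.elim0, fun i => i.elim0, fun i => i.elim0⟩
      | succ j ih =>
        intro hj
        obtain ⟨v, P, hvB₀, hvinj, hflower, hPB₀, hPP⟩ := ih (by omega)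
        have hex : (B₀ \ (univ : Finset (Fin j)).image v).Nonempty := by
          rw [← card_pos]
          have h1 : ((univ : Finset (Fin j)).image v).card ≤ j := by
            calc ((univ : Finset (Fin j)).image v).card
                ≤ (univ : Finset (Fin j)).card := card_image_le
              _ = j := by rw [Finset.card_univ, Fintype.card_fin]
          have h2 : j < m := by omega
          have h3' := Finset.le_card_sdiff ((univ : Finset (Fin j)).image v) B₀
          omega
        obtain ⟨c, hc⟩ := hex
        have hcB₀ : c ∈ B₀ := (mem_sdiff.mp hc).1
        have hcv : ∀ i, c ≠ v i := by
          intro i h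
          exact (mem_sdiff.mp hc).2 (mem_image.mpr ⟨i, mem_univ _, h.symm⟩)
        set bigY := (univ : Finset (Fin j)).sup (fun i => ((P i).sup id).erase (v i))
          with hbigY
        have hbigYcard : bigY.card ≤ 3*k*j := by
          rw [hbigY, Finset.sup_eq_biUnion]
          calc ((univ : Finset (Fin j)).biUnion (fun i => ((P i).sup id).erase (v i))).card
              ≤ ∑ i : Fin j, (((P i).sup id).erase (v i)).card := card_biUnion_le
            _ ≤ ∑ _i : Fin j, 3*k := by
                apply Finset.sum_le_sum
                intro i _
                calc (((P i).sup id).erase (v i)).card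
                    ≤ ((P i).sup id).card := card_le_card (erase_subset _ _)
                  _ ≤ 3*k := sup_card_le_three _ k
                      (fun e he => h3 e ((hflower i).1 he)) (hflower i).2.1
            _ = j*(3*k) := by
                rw [Finset.sum_const, smul_eq_mul, Finset.card_univ, Fintype.card_fin]
            _ = 3*k*j := by ring
        set X := (B₀ ∪ bigY).erase c with hX
        have hXcard : X.card ≤ m*(3*k+1) := by
          calc X.card ≤ (B₀ ∪ bigY).card := card_le_card (erase_subset _ _)
            _ ≤ B₀.card + bigY.card := card_union_le _ _
            _ ≤ m + 3*k*m := by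
                have h2 : 3*k*j ≤ 3*k*m := Nat.mul_le_mul_left _ (by omega)
                omega
            _ = m*(3*k+1) := by ring
        have hdegc : 40*k^3 < (G.filter (fun e => c ∈ e)).card :=
          (mem_filter.mp (hB₀sub hcB₀)).2
        have hXbound : X.card * dN + (2*dN+1)*k ≤ 40*k^3 := by
          have h1 : X.card * dN ≤ (m*(3*k+1)) * dN := Nat.mul_le_mul_right _ hXcard
          omega
        obtain ⟨Q, hQG, hQcard, hQc, hQdisj, hQX⟩ :=
          hub_flower G k dN h3 hcodN c X hdegc hXbound
        have hcYn : c ∉ Q.sup (fun e => e.erase c) := by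
          intro h
          obtain ⟨e, he, hce⟩ := Finset.mem_sup.mp h
          exact notMem_erase _ _ hce
        have hQB₀ : Disjoint (Q.sup (fun e => e.erase c)) B₀ := by
          rw [disjoint_left]
          intro a ha haB₀
          have hac : a ≠ c := fun h => hcYn (h ▸ ha)
          have haX : a ∈ X := by
            rw [hX]
            exact mem_erase.mpr ⟨hac, mem_union_left _ haB₀⟩
          exact disjoint_left.mp hQX ha haX
        have hQold : ∀ i0 : Fin j,
            Disjoint (Q.sup (fun e => e.erase c)) (((P i0).sup id).erase (v i0)) := by
          intro i0
          rw [disjoint_left]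
          intro a ha hb
          have hac : a ≠ c := fun h => hcYn (h ▸ ha)
          have habigY : a ∈ bigY := Finset.mem_sup.mpr ⟨i0, mem_univ _, hb⟩
          have haX : a ∈ X := by
            rw [hX]
            exact mem_erase.mpr ⟨hac, mem_union_right _ habigY⟩
          exact disjoint_left.mp hQX ha haX
        refine ⟨Fin.snoc v c, Fin.snoc P Q, ?_, ?_, ?_, ?_, ?_⟩
        · intro i
          rcases Fin.eq_castSucc_or_eq_last i with ⟨i0, rfl⟩ | rfl
          · simp only [Fin.snoc_castSucc]; exact hvB₀ i0
          · simp only [Fin.snoc_last]; exact hcB₀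
        · intro i i' hne
          rcases Fin.eq_castSucc_or_eq_last i with ⟨i0, rfl⟩ | rfl <;>
            rcases Fin.eq_castSucc_or_eq_last i' with ⟨i0', rfl⟩ | rfl
          · simp only [Fin.snoc_castSucc]
            exact hvinj i0 i0' (fun h => hne (by rw [h]))
          · simp only [Fin.snoc_castSucc, Fin.snoc_last]
            exact fun h => hcv i0 h.symm
          · simp only [Fin.snoc_castSucc, Fin.snoc_last]
            exact hcv i0'
          · exact absurd rfl hne
        · intro i
          rcases Fin.eq_castSucc_or_eq_last i with ⟨i0, rfl⟩ | rfl
          · simp only [Fin.snoc_castSucc]; exact hflower i0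
          · simp only [Fin.snoc_last]; exact ⟨hQG, hQcard, hQc, hQdisj⟩
        · intro i
          rcases Fin.eq_castSucc_or_eq_last i with ⟨i0, rfl⟩ | rfl
          · simp only [Fin.snoc_castSucc]; exact hPB₀ i0
          · simp only [Fin.snoc_last]
            rw [sup_erase_eq Q c]
            exact hQB₀
        · intro i i' hne
          rcases Fin.eq_castSucc_or_eq_last i with ⟨i0, rfl⟩ | rfl <;>
            rcases Fin.eq_castSucc_or_eq_last i' with ⟨i0', rfl⟩ | rfl
          · simp only [Fin.snoc_castSucc]
            exact hPP i0 i0' (fun h => hne (by rw [h]))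
          · simp only [Fin.snoc_castSucc, Fin.snoc_last]
            rw [sup_erase_eq Q c]
            exact (hQold i0).symm
          · simp only [Fin.snoc_castSucc, Fin.snoc_last]
            rw [sup_erase_eq Q c]
            exact hQold i0'
          · exact absurd rfl hne
    obtain ⟨v, P, hvB₀, hvinj, hflower, hPB₀, hPP⟩ := key m le_rfl
    refine ⟨v, P, ?_, ?_⟩
    · intro i
      refine ⟨(hflower i).1, (hflower i).2.1, (hflower i).2.2.1, ?_⟩
      intro e he f hf hef
      exact (hflower i).2.2.2 e (Finset.mem_coe.mp he) f (Finset.mem_coe.mp hf) hef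
    · intro i i' hne
      rw [disjoint_left]
      intro a haA haB
      have hA' : a = v i ∨ a ∈ ((P i).sup id).erase (v i) := by
        rcases eq_or_ne a (v i) with h | h
        · exact Or.inl h
        · exact Or.inr (mem_erase.mpr ⟨h, haA⟩)
      have hB' : a = v i' ∨ a ∈ ((P i').sup id).erase (v i') := by
        rcases eq_or_ne a (v i') with h | h
        · exact Or.inl h
        · exact Or.inr (mem_erase.mpr ⟨h, haB⟩)
      rcases hA' with h1 | h1 <;> rcases hB' with h2 | h2
      · exact hvinj i i' hne (h1.symm.trans h2)
      · exact disjoint_left.mp (hPB₀ i') h2 (by rw [h1]; exact hvB₀ i)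
      · exact disjoint_left.mp (hPB₀ i) h1 (by rw [h2]; exact hvB₀ i')
      · exact disjoint_left.mp (hPP i i' hne) h1 h2
  · -- CASE 2 : few high-degree vertices
    have hBm : B.card < m := not_le.mp hcase
    set G₀ := G.filter (fun e => Disjoint e B) with hG₀
    have hG₀G : G₀ ⊆ G := filter_subset _ _
    have hG0count : G.card ≤ G₀.card + B.card * (n * dN) := by
      have hsplit : G₀.card + (G.filter (fun e => ¬ Disjoint e B)).card = G.card :=
        card_filter_add_card_filter_not _
      have hcov : (G.filter (fun e => ¬ Disjoint e B)).card ≤ B.card * (n * dN) := by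
        calc (G.filter (fun e => ¬ Disjoint e B)).card
            ≤ ∑ b ∈ B, ((G.filter (fun e => ¬ Disjoint e B)).filter (fun e => b ∈ e)).card := by
              apply card_le_sum_cover
              intro e he
              obtain ⟨b, hb1, hb2⟩ := Finset.not_disjoint_iff.mp (mem_filter.mp he).2
              exact ⟨b, hb2, hb1⟩
          _ ≤ ∑ _b ∈ B, (n * dN) := by
              apply Finset.sum_le_sum
              intro b _
              refine le_trans (card_le_card ?_) (hdeg_bound b)
              exact filter_subset_filter _ (filter_subset _ _)
          _ = B.card * (n*dN) := by rw [Finset.sum_const, smul_eq_mul]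
      omega
    have hBreal : ((B.card : ℕ):ℝ) ≤ t := by
      have h1 : B.card + 1 ≤ m := hBm
      have h2 : ((B.card:ℕ):ℝ) + 1 ≤ (m:ℝ) := by exact_mod_cast h1
      have h3' : ((m:ℕ):ℝ) < t + 1 := Nat.ceil_lt_add_one ht0.le
      linarith
    have hcast1 : (G.card:ℝ) ≤ (G₀.card:ℝ) + 3*t^4*(n:ℝ) := by
      have hc : ((B.card * (n*dN) : ℕ):ℝ) ≤ 3*t^4*(n:ℝ) := by
        push_cast
        have h1 : (n:ℝ)*(dN:ℝ) ≤ (n:ℝ)*(3*t^3) :=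
          mul_le_mul_of_nonneg_left hdNle (Nat.cast_nonneg _)
        have h2 : ((B.card:ℕ):ℝ) * ((n:ℝ)*(dN:ℝ)) ≤ t * ((n:ℝ)*(3*t^3)) :=
          mul_le_mul hBreal h1 (by positivity) ht0.le
        nlinarith [h2]
      have hcc : (G.card:ℝ) ≤ (G₀.card:ℝ) + ((B.card*(n*dN):ℕ):ℝ) := by
        exact_mod_cast hG0count
      linarith
    have key : ∀ j : ℕ, j ≤ m → ∃ (v : Fin j → V) (P : Fin j → Finset (Finset V)),
        (∀ i, P i ⊆ G₀ ∧ (P i).card = k ∧ (∀ e ∈ P i, v i ∈ e) ∧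
          (∀ e₁ ∈ P i, ∀ e₂ ∈ P i, e₁ ≠ e₂ → Disjoint (e₁.erase (v i)) (e₂.erase (v i)))) ∧
        (∀ i i', i ≠ i' → Disjoint ((P i).sup id) ((P i').sup id)) := by
      intro j
      induction j with
      | zero =>
        intro _
        exact ⟨Fin.elim0, Fin.elim0, fun i => i.elim0, fun i => i.elim0⟩
      | succ j ih =>
        intro hj
        obtain ⟨v, P, hflower, hdisj⟩ := ih (by omega)
        set U := (univ : Finset (Fin j)).sup (fun i => (P i).sup id) with hU
        have hUcard : U.card ≤ 3*k*m := by
          rw [hU, Finset.sup_eq_biUnion]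
          calc ((univ : Finset (Fin j)).biUnion (fun i => (P i).sup id)).card
              ≤ ∑ i : Fin j, ((P i).sup id).card := card_biUnion_le
            _ ≤ ∑ _i : Fin j, 3*k := by
                apply Finset.sum_le_sum
                intro i _
                exact sup_card_le_three _ k
                  (fun e he => h3 e (hG₀G ((hflower i).1 he))) (hflower i).2.1
            _ = j * (3*k) := by
                rw [Finset.sum_const, smul_eq_mul, Finset.card_univ, Fintype.card_fin]
            _ ≤ 3*k*m := by
                have hjm : j ≤ m := by omega
                calc j*(3*k) ≤ m*(3*k) := Nat.mul_le_mul_right _ hjm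
                  _ = 3*k*m := by ring
        set H := G₀.filter (fun e => Disjoint e U) with hH
        have hHG₀ : H ⊆ G₀ := filter_subset _ _
        have hH3 : ∀ e ∈ H, e.card = 3 := fun e he => h3 e (hG₀G (hHG₀ he))
        have hUB : ∀ u ∈ U, u ∉ B := by
          intro u hu
          obtain ⟨i, _, hu2⟩ := Finset.mem_sup.mp hu
          obtain ⟨e, he, hue⟩ := Finset.mem_sup.mp hu2
          have heG₀ : e ∈ G₀ := (hflower i).1 he
          have hd : Disjoint e B := (mem_filter.mp heG₀).2
          exact fun hB' => disjoint_left.mp hd hue hB'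
        have hHcount : G₀.card ≤ H.card + (3*k*m) * (40*k^3) := by
          have hsplit : H.card + (G₀.filter (fun e => ¬ Disjoint e U)).card = G₀.card :=
            card_filter_add_card_filter_not _
          have hcov : (G₀.filter (fun e => ¬ Disjoint e U)).card ≤ U.card * (40*k^3) := by
            calc (G₀.filter (fun e => ¬ Disjoint e U)).card
                ≤ ∑ u ∈ U, ((G₀.filter (fun e => ¬ Disjoint e U)).filter
                    (fun e => u ∈ e)).card := by
                  apply card_le_sum_cover
                  intro e he
                  obtain ⟨u, hu1, hu2⟩ := Finset.not_disjoint_iff.mp (mem_filter.mp he).2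
                  exact ⟨u, hu2, hu1⟩
              _ ≤ ∑ u ∈ U, 40*k^3 := by
                  apply Finset.sum_le_sum
                  intro u hu
                  have hunotB : u ∉ B := hUB u hu
                  have hdegu : (G.filter (fun e => u ∈ e)).card ≤ 40*k^3 := by
                    by_contra hgt
                    exact hunotB (mem_filter.mpr ⟨mem_univ _, by omega⟩)
                  refine le_trans (card_le_card ?_) hdegu
                  intro e he
                  have he1 := (mem_filter.mp he).1
                  have he2 := (mem_filter.mp he).2
                  exact mem_filter.mpr ⟨hG₀G ((filter_subset _ _) he1), he2⟩
              _ = U.card * (40*k^3) := by rw [Finset.sum_const, smul_eq_mul]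
          have hmono : U.card * (40*k^3) ≤ (3*k*m)*(40*k^3) := Nat.mul_le_mul_right _ hUcard
          omega
        have hSf : HasSf H k := by
          by_contra hsf
          have hA := lemmaA H k hH3 hsf
          rw [hn] at hA
          have hHreal : ((H.card:ℕ):ℝ) ≤ 4*t^4*(n:ℝ) := by
            have h1 : ((3*H.card : ℕ):ℝ) ≤ ((10*(k*k)*n : ℕ):ℝ) := by exact_mod_cast hA
            push_cast at h1
            have hkk : (k:ℝ)*(k:ℝ) = t^4 := by rw [← ht2]; ring
            nlinarith [h1, Nat.cast_nonneg (α := ℝ) n]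
          have hstepreal : ((G₀.card:ℕ):ℝ) ≤ ((H.card:ℕ):ℝ) + 240*t^9 := by
            have h1 : ((G₀.card:ℕ):ℝ) ≤ ((H.card:ℕ):ℝ) + (((3*k*m)*(40*k^3):ℕ):ℝ) := by
              exact_mod_cast hHcount
            have h2 : (((3*k*m)*(40*k^3):ℕ):ℝ) ≤ 240*t^9 := by
              push_cast
              have hkt : (k:ℝ) = t^2 := ht2.symm
              rw [hkt]
              have p8 : (0:ℝ) ≤ t^8 := by positivity
              nlinarith [hmt, ht0.le, p8]
            linarith
          have hfinal : (G.card:ℝ) ≤ 7*t^4*(n:ℝ) + 240*t^9 := by linarith [hcast1]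
          have ht9 : (1:ℝ) ≤ t^9 := one_le_pow₀ ht1
          have ht4n : (0:ℝ) ≤ t^4*(n:ℝ) := by positivity
          have hE1' : 1000000 * (t^4 * (n:ℝ)) ≤ 7*t^4*(n:ℝ) + 240*t^9 := by
            linarith [hE1]
          have hE2' : 1000000 * t^9 ≤ 7*t^4*(n:ℝ) + 240*t^9 := by linarith [hE2]
          nlinarith [hE1', hE2', ht9, ht4n]
        obtain ⟨x, Q, hQH, hQcard, hQx, hQdisj⟩ := hSf
        have hQU : ∀ e ∈ Q, Disjoint e U := fun e he => (mem_filter.mp (hQH he)).2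
        have hnewold : ∀ i0 : Fin j, Disjoint (Q.sup id) ((P i0).sup id) := by
          intro i0
          rw [disjoint_left]
          intro a ha hb
          obtain ⟨e, he, hae⟩ := Finset.mem_sup.mp ha
          have haU : a ∈ U := Finset.mem_sup.mpr ⟨i0, mem_univ _, hb⟩
          exact disjoint_left.mp (hQU e he) hae haU
        refine ⟨Fin.snoc v x, Fin.snoc P Q, ?_, ?_⟩
        · intro i
          rcases Fin.eq_castSucc_or_eq_last i with ⟨i0, rfl⟩ | rfl
          · simp only [Fin.snoc_castSucc]
            exact hflower i0
          · simp only [Fin.snoc_last]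
            exact ⟨hQH.trans hHG₀, hQcard, hQx, hQdisj⟩
        · intro i i' hne
          rcases Fin.eq_castSucc_or_eq_last i with ⟨i0, rfl⟩ | rfl <;>
            rcases Fin.eq_castSucc_or_eq_last i' with ⟨i0', rfl⟩ | rfl
          · simp only [Fin.snoc_castSucc]
            exact hdisj i0 i0' (fun h => hne (by rw [h]))
          · simp only [Fin.snoc_castSucc, Fin.snoc_last]
            exact (hnewold i0).symm
          · simp only [Fin.snoc_castSucc, Fin.snoc_last]
            exact hnewold i0'
          · exact absurd rfl hne
    obtain ⟨v, P, hflower, hdisj⟩ := key m le_rfl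
    refine ⟨v, P, ?_, hdisj⟩
    intro i
    refine ⟨((hflower i).1).trans hG₀G, (hflower i).2.1, (hflower i).2.2.1, ?_⟩
    intro e he f hf hef
    exact (hflower i).2.2.2 e (Finset.mem_coe.mp he) f (Finset.mem_coe.mp hf) hef
end

section
/- For any $r \ge 2$, $k \ge 1$, and $t \ge 0$ with $t + 1 \le r$, any family of more than $(k-1)^r \cdot r!$ sets each of size $r$ contains a sunflower with $k$ petals: $k$ distinct sets $A_1, \ldots, A_k$ and a set $C$ with $C \subseteq A_i$ for all $i$ such that the sets $A_i \setminus C$ are pairwise disjoint. -/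
open Finset

private lemma sunflower_aux {α : Type*} [DecidableEq α] :
    ∀ (r k : ℕ), 1 ≤ k → ∀ (F : Finset (Finset α)), (∀ A ∈ F, A.card = r) →
    (k - 1) ^ r * r.factorial < F.card →
    ∃ (P : Finset (Finset α)) (C : Finset α), P ⊆ F ∧ P.card = k ∧
      (∀ A ∈ P, C ⊆ A) ∧
      (P : Set (Finset α)).Pairwise fun A B => Disjoint (A \ C) (B \ C) := by
  intro r
  induction r with
  | zero =>
    intro k hk F hunif hcard
    have hFpos : 0 < F.card := lt_of_le_of_lt (Nat.zero_le _) hcard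
    rcases eq_or_lt_of_le hk with hk1 | hk2
    · obtain ⟨A, hA⟩ := card_pos.mp hFpos
      exact ⟨{A}, A, by simpa using hA, by simp [← hk1], by simp, by simp⟩
    · exfalso
      have hsub : F ⊆ {∅} := fun A hA => by simp [card_eq_zero.mp (hunif A hA)]
      have := card_le_card hsub
      simp at hcard this
      omega
  | succ r ih =>
    intro k hk F hunif hcard
    classical
    rcases eq_or_lt_of_le hk with hk1 | hk2
    · obtain ⟨A, hA⟩ := card_pos.mp (lt_of_le_of_lt (Nat.zero_le _) hcard)
      
      exact ⟨{A}, A, by simpa using hA, by simp [← hk1], by simp, by simp⟩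
    -- k ≥ 2. Take a maximal pairwise-disjoint subfamily S of F.
    obtain ⟨S, hSmem, hSmax⟩ :=
      (F.powerset.filter fun S : Finset (Finset α) => (S : Set (Finset α)).Pairwise Disjoint).exists_max_image
        card ⟨∅, by simp⟩
    rw [mem_filter, mem_powerset] at hSmem
    obtain ⟨hSF, hSpair⟩ := hSmem
    by_cases hSk : k ≤ S.card
    · -- S itself contains k pairwise disjoint sets: sunflower with empty kernel
      obtain ⟨P, hPS, hPcard⟩ := Finset.exists_subset_card_eq hSk
      refine ⟨P, ∅, hPS.trans hSF, hPcard, fun A _ => empty_subset A, ?_⟩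
      intro A hA B hB hne
      simpa using hSpair (hPS (mem_coe.mp hA)) (hPS (mem_coe.mp hB)) hne
    · push_neg at hSk
      have hSk' : S.card ≤ k - 1 := by omega
      set X := S.biUnion id with hXdef
      have hXcard : X.card ≤ (k - 1) * (r + 1) := by
        calc X.card ≤ ∑ A ∈ S, A.card := by
              simpa using card_biUnion_le (s := S) (t := id)
          _ = ∑ A ∈ S, (r + 1) := by
              exact Finset.sum_congr rfl fun A hA => hunif A (hSF hA)
          _ = S.card * (r + 1) := by rw [sum_const, smul_eq_mul]
          _ ≤ (k - 1) * (r + 1) := Nat.mul_le_mul_right _ hSk'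
      -- every member of F meets X
      have hmeet : ∀ A ∈ F, (A ∩ X).Nonempty := by
        intro A hA
        by_cases hAS : A ∈ S
        · have hAX : A ⊆ X := fun y hy => mem_biUnion.mpr ⟨A, hAS, hy⟩
          have : A.Nonempty := card_pos.mp (by rw [hunif A hA]; omega)
          obtain ⟨y, hy⟩ := this
          exact ⟨y, mem_inter.mpr ⟨hy, hAX hy⟩⟩
        · by_contra hempty
          rw [not_nonempty_iff_eq_empty] at hempty
          have hdisj : ∀ B ∈ S, Disjoint A B := by
            intro B hB
            rw [disjoint_left]
            intro y hyA hyB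
            have : y ∈ A ∩ X := mem_inter.mpr ⟨hyA, mem_biUnion.mpr ⟨B, hB, hyB⟩⟩
            simp [hempty] at this
          have hins : insert A S ∈ F.powerset.filter
              fun S : Finset (Finset α) => (S : Set (Finset α)).Pairwise Disjoint := by
            rw [mem_filter, mem_powerset]
            refine ⟨insert_subset hA hSF, ?_⟩
            rw [coe_insert]
            exact hSpair.insert fun B hB _ =>
              ⟨hdisj B (mem_coe.mp hB), (hdisj B (mem_coe.mp hB)).symm⟩
          have := hSmax _ hins
          rw [card_insert_of_notMem hAS] at this
          omega
      -- pigeonhole: some x lies in many members of F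
      have hcover : F ⊆ X.biUnion fun x => F.filter fun A => x ∈ A := by
        intro A hA
        obtain ⟨y, hy⟩ := hmeet A hA
        rw [mem_inter] at hy
        exact mem_biUnion.mpr ⟨y, hy.2, mem_filter.mpr ⟨hA, hy.1⟩⟩
      have hsum : F.card ≤ ∑ x ∈ X, (F.filter fun A => x ∈ A).card :=
        (card_le_card hcover).trans (card_biUnion_le)
      have hex : ∃ x ∈ X, (k - 1) ^ r * r.factorial < (F.filter fun A => x ∈ A).card := by
        by_contra h
        push_neg at h
        have hs : ∑ x ∈ X, (F.filter fun A => x ∈ A).card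
            ≤ X.card * ((k - 1) ^ r * r.factorial) := by
          calc ∑ x ∈ X, (F.filter fun A => x ∈ A).card
              ≤ ∑ _x ∈ X, (k - 1) ^ r * r.factorial := Finset.sum_le_sum fun x hx => h x hx
            _ = X.card * ((k - 1) ^ r * r.factorial) := by rw [sum_const, smul_eq_mul]
        have hchain : F.card ≤ (k - 1) * (r + 1) * ((k - 1) ^ r * r.factorial) :=
          hsum.trans (hs.trans (Nat.mul_le_mul_right _ hXcard))
        have heq : (k - 1) ^ (r + 1) * (r + 1).factorial
            = (k - 1) * (r + 1) * ((k - 1) ^ r * r.factorial) := by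
          rw [pow_succ, Nat.factorial_succ]; ring
        omega
      obtain ⟨x, hxX, hxbig⟩ := hex
      set Fx := F.filter fun A => x ∈ A with hFxdef
      have hxFx : ∀ A ∈ Fx, x ∈ A := fun A hA => (mem_filter.mp hA).2
      set F' := Fx.image fun A => A.erase x with hF'def
      have hF'card : F'.card = Fx.card := by
        apply card_image_of_injOn
        intro A hA B hB hAB
        simp only at hAB
        have h2 : insert x (A.erase x) = insert x (B.erase x) := by rw [hAB]
        rwa [Finset.insert_erase (hxFx A (mem_coe.mp hA)),
          Finset.insert_erase (hxFx B (mem_coe.mp hB))] at h2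
      have hF'unif : ∀ B ∈ F', B.card = r := by
        intro B hB
        obtain ⟨A, hA, rfl⟩ := mem_image.mp hB
        rw [card_erase_of_mem (hxFx A hA), hunif A (mem_filter.mp hA).1]
        omega
      have hF'big : (k - 1) ^ r * r.factorial < F'.card := by rw [hF'card]; exact hxbig
      obtain ⟨P', C', hP'F', hP'card, hC'sub, hP'pair⟩ := ih k hk F' hF'unif hF'big
      have hxnot : ∀ B ∈ P', x ∉ B := by
        intro B hB
        obtain ⟨A, _, rfl⟩ := mem_image.mp (hP'F' hB)
        exact notMem_erase x A
      refine ⟨P'.image (insert x), insert x C', ?_, ?_, ?_, ?_⟩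
      · intro A hA
        obtain ⟨B, hB, rfl⟩ := mem_image.mp hA
        obtain ⟨A', hA', rfl⟩ := mem_image.mp (hP'F' hB)
        rw [Finset.insert_erase (hxFx A' hA')]
        exact (mem_filter.mp hA').1
      · rw [← hP'card]
        apply card_image_of_injOn
        intro B1 h1 B2 h2 hins
        have := congrArg (fun s => Finset.erase s x) hins
        simpa [Finset.erase_insert (hxnot B1 h1), Finset.erase_insert (hxnot B2 h2)] using this
      · intro A hA
        obtain ⟨B, hB, rfl⟩ := mem_image.mp hA
        exact insert_subset_insert x (hC'sub B hB)
      · have hsub : ∀ B : Finset α, (insert x B) \ insert x C' ⊆ B \ C' := by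
          intro B y hy
          rw [mem_sdiff, mem_insert] at hy
          rw [mem_sdiff]
          rcases hy.1 with rfl | hyB
          · exact absurd (mem_insert_self y C') hy.2
          · exact ⟨hyB, fun hyC => hy.2 (mem_insert_of_mem hyC)⟩
        intro A1 h1 A2 h2 hne
        obtain ⟨B1, hB1, rfl⟩ := mem_image.mp (mem_coe.mp h1)
        obtain ⟨B2, hB2, rfl⟩ := mem_image.mp (mem_coe.mp h2)
        have hBne : B1 ≠ B2 := fun h => hne (by rw [h])
        exact (hP'pair (mem_coe.mpr hB1) (mem_coe.mpr hB2) hBne).mono (hsub B1) (hsub B2)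

/-- Erdős–Rado sunflower lemma: any family of more than `(k-1)^r * r!` distinct
`r`-element sets contains a sunflower with `k` petals: `k` sets containing a common
kernel `C` whose parts outside `C` are pairwise disjoint. -/
theorem stmt_19 {α : Type*} [DecidableEq α] (r k : ℕ) (hr : 2 ≤ r) (hk : 1 ≤ k)
    (F : Finset (Finset α)) (hunif : ∀ A ∈ F, A.card = r)
    (hcard : (k - 1) ^ r * r.factorial < F.card) :
    ∃ (P : Finset (Finset α)) (C : Finset α), P ⊆ F ∧ P.card = k ∧
      (∀ A ∈ P, C ⊆ A) ∧
      (P : Set (Finset α)).Pairwise fun A B => Disjoint (A \ C) (B \ C) := by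
  exact sunflower_aux r k hk F hunif hcard
end
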